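/- arXiv:cs/9809037 — 9 statements merged into one kernel-verified Lean document; each statement's English description precedes it below -/
import Mathlib

section
/- For every finite Borel measure m on R^d (d ≥ 1), there exists a point x ∈ R^d whose location depth with respect to m is at least m(R^d)/(d+1); that is, for every nonzero u ∈ R^d, m({y : ⟨u, y − x⟩ ≥ 0}) ≥ m(R^d)/(d+1). -/
open scoped RealInnerProductSpace
open MeasureTheory
open scoped ENNReal

section Aux

variable {d : ℕ} (m : Measure (EuclideanSpace ℝ (Fin d))) [IsFiniteMeasure m]

lemma halfspace_isClosed (u : EuclideanSpace ℝ (Fin d)) (c : ℝ) :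
    IsClosed {y : EuclideanSpace ℝ (Fin d) | ⟪u, y⟫ ≤ c} :=
  isClosed_le (Continuous.inner continuous_const continuous_id) continuous_const

lemma halfspace_convex (u : EuclideanSpace ℝ (Fin d)) (c : ℝ) :
    Convex ℝ {y : EuclideanSpace ℝ (Fin d) | ⟪u, y⟫ ≤ c} := by
  have : IsLinearMap ℝ (fun y : EuclideanSpace ℝ (Fin d) => ⟪u, y⟫) := by
    constructor <;> intros <;> simp [inner_add_right, real_inner_smul_right, smul_eq_mul, Finset.mul_sum, mul_left_comm]
  exact convex_halfSpace_le this c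

lemma exists_shift (u : EuclideanSpace ℝ (Fin d)) (c : ℝ) {t : ℝ≥0∞}
    (h : m {y | c ≤ ⟪u, y⟫} < t) :
    ∃ ε : ℝ, 0 < ε ∧ m {y | c - ε < ⟪u, y⟫} < t := by
  set A : ℕ → Set (EuclideanSpace ℝ (Fin d)) := fun n => {y | c - 1/(n+1) < ⟪u, y⟫} with hA
  have hmeas : ∀ n, NullMeasurableSet (A n) m := by
    intro n
    refine MeasurableSet.nullMeasurableSet ?_
    have : IsOpen (A n) :=
      isOpen_lt continuous_const (Continuous.inner continuous_const continuous_id)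
    exact this.measurableSet
  have hanti : Antitone A := by
    intro i j hij y hy
    simp only [A, Set.mem_setOf_eq] at *
    have h1 : (1:ℝ)/(j+1) ≤ 1/(i+1) := by
      apply one_div_le_one_div_of_le
      · positivity
      · have : (i:ℝ) ≤ j := by exact_mod_cast hij
        linarith
    linarith
  have hiInter : ⋂ n, A n = {y | c ≤ ⟪u, y⟫} := by
    ext y
    simp only [Set.mem_iInter, A, Set.mem_setOf_eq]
    constructor
    · intro h
      by_contra hc
      push_neg at hc
      obtain ⟨n, hn⟩ := exists_nat_gt (1/(c - ⟪u, y⟫))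
      have hpos : (0:ℝ) < c - ⟪u, y⟫ := by linarith
      have h2 : 1/(c - ⟪u, y⟫) < n + 1 := by linarith
      have h3 : (1:ℝ)/(n+1) < c - ⟪u, y⟫ := by
        rw [div_lt_iff₀ (by positivity)] at h2 ⊢
        nlinarith
      have := h n
      linarith
    · intro h n
      have : (0:ℝ) < 1/(n+1) := by positivity
      linarith
  have htend : Filter.Tendsto (fun n => m (A n)) Filter.atTop (nhds (m {y | c ≤ ⟪u, y⟫})) := by
    rw [← hiInter]
    exact tendsto_measure_iInter_atTop hmeas hanti ⟨0, measure_ne_top m _⟩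
  obtain ⟨n, hn⟩ := (htend.eventually_lt_const h).exists
  exact ⟨1/(n+1), by positivity, hn⟩

/-- Outside of large balls, the measure is small. -/
lemma exists_ball (t : ℝ≥0∞) (ht : 0 < t) :
    ∃ R : ℝ, m (Metric.closedBall (0 : EuclideanSpace ℝ (Fin d)) R)ᶜ < t := by
  set A : ℕ → Set (EuclideanSpace ℝ (Fin d)) := fun n => (Metric.closedBall 0 (n:ℝ))ᶜ with hA
  have hmeas : ∀ n, NullMeasurableSet (A n) m := fun n =>
    (Metric.isClosed_closedBall.measurableSet.compl).nullMeasurableSet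
  have hanti : Antitone A := by
    intro i j hij
    apply Set.compl_subset_compl.2
    apply Metric.closedBall_subset_closedBall
    exact_mod_cast hij
  have hiInter : ⋂ n, A n = ∅ := by
    ext y
    simp only [Set.mem_iInter, A, Set.mem_compl_iff, Metric.mem_closedBall, Set.mem_empty_iff_false,
      iff_false, not_forall, not_not]
    obtain ⟨n, hn⟩ := exists_nat_ge (dist y (0 : EuclideanSpace ℝ (Fin d)))
    exact ⟨n, hn⟩
  have htend : Filter.Tendsto (fun n => m (A n)) Filter.atTop (nhds 0) := by
    have := tendsto_measure_iInter_atTop hmeas hanti ⟨0, measure_ne_top m _⟩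
    rwa [hiInter, measure_empty] at this
  obtain ⟨n, hn⟩ := (htend.eventually_lt_const ht).exists
  exact ⟨(n:ℝ), hn⟩

end Aux

/-- For every finite Borel measure on `ℝ^d`, there exists a center point:
a point such that every closed halfspace containing it has measure at least
`m(ℝ^d)/(d+1)`. -/
theorem center_point_exists_for_measures
    (d : ℕ) (hd : 1 ≤ d)
    (m : Measure (EuclideanSpace ℝ (Fin d))) [IsFiniteMeasure m] :
    ∃ x : EuclideanSpace ℝ (Fin d),
      ∀ (u : EuclideanSpace ℝ (Fin d)), u ≠ 0 →
        m Set.univ / (d + 1) ≤ m {y | 0 ≤ ⟪u, y - x⟫} := by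
  classical
  set E := EuclideanSpace ℝ (Fin d)
  set B : ℝ≥0∞ := m Set.univ / (d + 1) with hB
  have hBtop : B ≠ ⊤ :=
    (ENNReal.div_lt_top (measure_ne_top m Set.univ) (by simp)).ne
  -- the family of "heavy" compact convex sets
  set S : E × ℝ × ℝ → Set E :=
    fun p => {y | ⟪p.1, y⟫ ≤ p.2.1} ∩ Metric.closedBall 0 p.2.2 with hS
  set ι := {p : E × ℝ × ℝ // m (S p)ᶜ < B} with hι
  have hconv : ∀ i : ι, Convex ℝ (S i.1) := fun i =>
    (halfspace_convex _ _).inter (convex_closedBall _ _)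
  have hcomp : ∀ i : ι, IsCompact (S i.1) := fun i =>
    (isCompact_closedBall _ _).inter_left (halfspace_isClosed _ _)
  have hSmeas : ∀ p, MeasurableSet (S p) := fun p =>
    ((halfspace_isClosed _ _).measurableSet).inter
      Metric.isClosed_closedBall.measurableSet
  -- finite intersections are nonempty
  have hhelly : (⋂ i : ι, S i.1).Nonempty := by
    apply Convex.helly_theorem_compact' (𝕜 := ℝ) hconv hcomp
    intro I hI
    rcases I.eq_empty_or_nonempty with rfl | hne
    · simp
    by_contra hempty
    rw [Set.not_nonempty_iff_eq_empty] at hempty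
    have hcover : (Set.univ : Set E) ⊆ ⋃ i ∈ I, (S i.1)ᶜ := by
      intro y _
      by_contra hy
      simp only [Set.mem_iUnion, Set.mem_compl_iff, not_exists, not_not] at hy
      have : y ∈ ⋂ i ∈ I, S i.1 := Set.mem_biInter (fun i hi => hy i hi)
      rw [hempty] at this
      exact this
    have h1 : m Set.univ ≤ ∑ i ∈ I, m (S i.1)ᶜ :=
      le_trans (measure_mono hcover) (measure_biUnion_finset_le I _)
    -- pass to real numbers
    have hfin : ∀ i ∈ I, m (S i.1)ᶜ ≠ ⊤ := fun i _ => measure_ne_top m _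
    have h2 : (m Set.univ).toReal ≤ ∑ i ∈ I, (m (S i.1)ᶜ).toReal := by
      rw [← ENNReal.toReal_sum hfin]
      exact ENNReal.toReal_mono (by simp [ENNReal.sum_eq_top, hfin]) h1
    have h3 : ∀ i ∈ I, (m (S i.1)ᶜ).toReal < B.toReal := fun i _ =>
      ENNReal.toReal_lt_toReal (measure_ne_top m _) hBtop |>.2 i.2
    have h4 : ∑ i ∈ I, (m (S i.1)ᶜ).toReal < I.card * B.toReal := by
      calc ∑ i ∈ I, (m (S i.1)ᶜ).toReal < ∑ _i ∈ I, B.toReal :=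
            Finset.sum_lt_sum_of_nonempty hne h3
        _ = I.card * B.toReal := by rw [Finset.sum_const, nsmul_eq_mul]
    have hBpos : 0 ≤ B.toReal := ENNReal.toReal_nonneg
    have hcard : (I.card : ℝ) ≤ d + 1 := by
      have := hI
      rw [finrank_euclideanSpace_fin] at this
      exact_mod_cast this
    have h5 : (I.card : ℝ) * B.toReal ≤ (d + 1) * B.toReal :=
      mul_le_mul_of_nonneg_right hcard hBpos
    have h6 : ((d:ℝ) + 1) * B.toReal ≤ (m Set.univ).toReal := by
      rw [hB, ENNReal.toReal_div]
      have h7 : (((d:ℝ≥0∞)) + 1).toReal = (d:ℝ) + 1 := by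
        rw [ENNReal.toReal_add (by simp) (by simp)]; simp
      rw [h7, mul_div_cancel₀]
      positivity
    linarith
  obtain ⟨x, hx⟩ := hhelly
  refine ⟨x, fun u hu => ?_⟩
  by_contra hcon
  push_neg at hcon
  have hset : {y : E | 0 ≤ ⟪u, y - x⟫} = {y | ⟪u, x⟫ ≤ ⟪u, y⟫} := by
    ext y
    simp only [Set.mem_setOf_eq, inner_sub_right, sub_nonneg]
    exact Iff.rfl
  rw [hset] at hcon
  obtain ⟨ε, hε, hε2⟩ := exists_shift m u ⟪u, x⟫ hcon
  -- the open halfspace has measure < B; choose a ball capturing the rest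
  have hδpos : 0 < B - m {y | ⟪u, x⟫ - ε < ⟪u, y⟫} := tsub_pos_of_lt hε2
  obtain ⟨R, hR⟩ := exists_ball m _ hδpos
  set p : E × ℝ × ℝ := (u, ⟪u, x⟫ - ε, R) with hp
  have hmem : m (S p)ᶜ < B := by
    have hcompl : (S p)ᶜ = {y : E | ⟪u, x⟫ - ε < ⟪u, y⟫} ∪ (Metric.closedBall 0 R)ᶜ := by
      rw [hS, Set.compl_inter]
      congr 1
      ext y
      simp only [Set.mem_compl_iff, Set.mem_setOf_eq, not_le, hp]
    rw [hcompl]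
    calc m ({y : E | ⟪u, x⟫ - ε < ⟪u, y⟫} ∪ (Metric.closedBall 0 R)ᶜ)
        ≤ m {y : E | ⟪u, x⟫ - ε < ⟪u, y⟫} + m (Metric.closedBall 0 R)ᶜ := measure_union_le _ _
      _ < m {y : E | ⟪u, x⟫ - ε < ⟪u, y⟫} + (B - m {y | ⟪u, x⟫ - ε < ⟪u, y⟫}) := by
          exact ENNReal.add_lt_add_left (measure_ne_top m _) hR
      _ = B := add_tsub_cancel_of_le hε2.le
  have hxp : x ∈ S p := Set.mem_iInter.1 hx ⟨p, hmem⟩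
  have : ⟪u, x⟫ ≤ ⟪u, x⟫ - ε := hxp.1
  linarith
end

section
/- Let m be a finite Borel measure on R^d (d ≥ 1) that is absolutely continuous with respect to Lebesgue measure and satisfies m(R^d) > 0, and let ε satisfy 0 < ε < m(R^d)/(d+1). Then the set of ε-center points of m, namely K = {x ∈ R^d : for every nonzero u ∈ R^d, m({y : ⟨u, y − x⟩ ≥ 0}) ≥ m(R^d)/(d+1) − ε}, is compact, convex, and has nonempty interior. -/
open scoped RealInnerProductSpace
open MeasureTheory Metric Filter Set Topology

namespace EpsCenterAux

variable {d : ℕ}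

lemma hs_closed (u : EuclideanSpace ℝ (Fin d)) (t : ℝ) :
    IsClosed {y : EuclideanSpace ℝ (Fin d) | t ≤ ⟪u, y⟫} :=
  isClosed_le continuous_const (continuous_const.inner continuous_id)

lemma hs_convex (u : EuclideanSpace ℝ (Fin d)) (t : ℝ) :
    Convex ℝ {y : EuclideanSpace ℝ (Fin d) | t ≤ ⟪u, y⟫} := by
  intro x hx z hz a b ha hb hab
  simp only [Set.mem_setOf_eq, inner_add_right, real_inner_smul_right] at *
  have h1 := mul_le_mul_of_nonneg_left hx ha
  have h2 := mul_le_mul_of_nonneg_left hz hb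
  have h3 : a*t + b*t = t := by rw [← add_mul, hab, one_mul]
  linarith

lemma tail_small (m : Measure (EuclideanSpace ℝ (Fin d))) [IsFiniteMeasure m] {η : ℝ}
    (hη : 0 < η) :
    ∃ R : ℝ, 0 < R ∧ (m (Metric.closedBall (0 : EuclideanSpace ℝ (Fin d)) R)ᶜ).toReal < η := by
  have hmeas : ∀ n : ℕ, NullMeasurableSet
      ((Metric.closedBall (0 : EuclideanSpace ℝ (Fin d)) (n : ℝ))ᶜ) m :=
    fun n => (measurableSet_closedBall.compl).nullMeasurableSet
  have hmono : Antitone (fun n : ℕ => (Metric.closedBall (0 : EuclideanSpace ℝ (Fin d)) (n : ℝ))ᶜ) := by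
    intro i j hij
    exact Set.compl_subset_compl.mpr (Metric.closedBall_subset_closedBall (by exact_mod_cast hij))
  have hint : ⋂ n : ℕ, (Metric.closedBall (0 : EuclideanSpace ℝ (Fin d)) (n : ℝ))ᶜ = ∅ := by
    ext y
    simp only [Set.mem_iInter, Set.mem_compl_iff, Metric.mem_closedBall, dist_zero_right,
      Set.mem_empty_iff_false, iff_false, not_forall, not_not]
    obtain ⟨n, hn⟩ := exists_nat_gt ‖y‖
    exact ⟨n, hn.le⟩
  have ht := tendsto_measure_iInter_atTop hmeas hmono ⟨0, measure_ne_top m _⟩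
  rw [hint] at ht
  simp only [measure_empty] at ht
  have ht' : Tendsto (fun n : ℕ =>
      (m ((Metric.closedBall (0 : EuclideanSpace ℝ (Fin d)) (n : ℝ))ᶜ)).toReal) atTop (𝓝 0) := by
    have := (ENNReal.tendsto_toReal (a := 0) (by simp)).comp ht
    exact this
  obtain ⟨n, hn⟩ := (ht'.eventually (gt_mem_nhds hη)).exists
  refine ⟨(n : ℝ) + 1, by positivity, ?_⟩
  have hsub : (Metric.closedBall (0 : EuclideanSpace ℝ (Fin d)) ((n : ℝ) + 1))ᶜ ⊆
      (Metric.closedBall (0 : EuclideanSpace ℝ (Fin d)) (n : ℝ))ᶜ :=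
    Set.compl_subset_compl.mpr (Metric.closedBall_subset_closedBall (by linarith))
  exact lt_of_le_of_lt (ENNReal.toReal_mono (measure_ne_top m _) (measure_mono hsub)) hn

lemma tendsto_measure_halfspace (m : Measure (EuclideanSpace ℝ (Fin d))) [IsFiniteMeasure m]
    (u : EuclideanSpace ℝ (Fin d)) (s : ℝ) :
    Tendsto (fun n : ℕ => (m {y : EuclideanSpace ℝ (Fin d) | s - 1/((n:ℝ)+1) < ⟪u, y⟫}).toReal)
      atTop (𝓝 ((m {y : EuclideanSpace ℝ (Fin d) | s ≤ ⟪u, y⟫}).toReal)) := by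
  have hmeas : ∀ n : ℕ, NullMeasurableSet
      {y : EuclideanSpace ℝ (Fin d) | s - 1/((n:ℝ)+1) < ⟪u, y⟫} m :=
    fun n => ((isOpen_lt continuous_const (continuous_const.inner continuous_id)).measurableSet).nullMeasurableSet
  have hmono : Antitone (fun n : ℕ => {y : EuclideanSpace ℝ (Fin d) | s - 1/((n:ℝ)+1) < ⟪u, y⟫}) := by
    intro i j hij y hy
    simp only [Set.mem_setOf_eq] at *
    have h1 : 1/((j:ℝ)+1) ≤ 1/((i:ℝ)+1) := by
      apply one_div_le_one_div_of_le (by positivity)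
      have : (i:ℝ) ≤ (j:ℝ) := by exact_mod_cast hij
      linarith
    linarith
  have hint : (⋂ n : ℕ, {y : EuclideanSpace ℝ (Fin d) | s - 1/((n:ℝ)+1) < ⟪u, y⟫}) =
      {y : EuclideanSpace ℝ (Fin d) | s ≤ ⟪u, y⟫} := by
    ext y
    simp only [Set.mem_iInter, Set.mem_setOf_eq]
    constructor
    · intro h
      by_contra hc
      push_neg at hc
      obtain ⟨n, hn⟩ := exists_nat_one_div_lt (sub_pos.mpr hc)
      have := h n
      linarith
    · intro h n
      have : (0:ℝ) < 1/((n:ℝ)+1) := by positivity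
      linarith
  have ht := tendsto_measure_iInter_atTop hmeas hmono ⟨0, measure_ne_top m _⟩
  rw [hint] at ht
  have := (ENNReal.tendsto_toReal (measure_ne_top m _)).comp ht
  exact this

lemma tendsto_measure_slab (m : Measure (EuclideanSpace ℝ (Fin d))) [IsFiniteMeasure m]
    (u xs : EuclideanSpace ℝ (Fin d)) (B : Set (EuclideanSpace ℝ (Fin d))) :
    Tendsto (fun n : ℕ =>
        (m ({y : EuclideanSpace ℝ (Fin d) | 2/((n:ℝ)+1) < ⟪u, y - xs⟫} ∩ B)).toReal) atTop
      (𝓝 ((m ({y : EuclideanSpace ℝ (Fin d) | 0 < ⟪u, y - xs⟫} ∩ B)).toReal)) := by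
  have hmono : Monotone (fun n : ℕ =>
      {y : EuclideanSpace ℝ (Fin d) | 2/((n:ℝ)+1) < ⟪u, y - xs⟫} ∩ B) := by
    intro i j hij y hy
    obtain ⟨hy1, hy2⟩ := hy
    simp only [Set.mem_setOf_eq] at hy1
    refine ⟨?_, hy2⟩
    simp only [Set.mem_setOf_eq]
    have h1 : 2/((j:ℝ)+1) ≤ 2/((i:ℝ)+1) := by
      apply div_le_div_of_nonneg_left (by norm_num) (by positivity)
      have : (i:ℝ) ≤ (j:ℝ) := by exact_mod_cast hij
      linarith
    linarith
  have hUnion : (⋃ n : ℕ, {y : EuclideanSpace ℝ (Fin d) | 2/((n:ℝ)+1) < ⟪u, y - xs⟫} ∩ B) =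
      {y : EuclideanSpace ℝ (Fin d) | 0 < ⟪u, y - xs⟫} ∩ B := by
    ext y
    simp only [Set.mem_iUnion, Set.mem_inter_iff, Set.mem_setOf_eq]
    constructor
    · rintro ⟨n, hn, hB⟩
      refine ⟨?_, hB⟩
      have : (0:ℝ) < 2/((n:ℝ)+1) := by positivity
      linarith
    · rintro ⟨h0, hB⟩
      obtain ⟨n, hn⟩ := exists_nat_one_div_lt (half_pos h0)
      refine ⟨n, ?_, hB⟩
      rw [div_lt_iff₀ (by positivity : (0:ℝ) < (n:ℝ)+1)] at hn ⊢
      linarith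
  have ht := tendsto_measure_iUnion_atTop (μ := m) hmono
  rw [hUnion] at ht
  have := (ENNReal.tendsto_toReal (measure_ne_top m _)).comp ht
  exact this


lemma hyperplane_null (m : Measure (EuclideanSpace ℝ (Fin d))) (hac : m ≪ volume)
    (u : EuclideanSpace ℝ (Fin d)) (hu : u ≠ 0) (s : ℝ) :
    m {y : EuclideanSpace ℝ (Fin d) | ⟪u, y⟫ = s} = 0 := by
  apply hac
  have hker : LinearMap.ker (innerSL ℝ u : EuclideanSpace ℝ (Fin d) →ₗ[ℝ] ℝ) ≠ ⊤ := by
    intro h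
    have hm : u ∈ LinearMap.ker (innerSL ℝ u : EuclideanSpace ℝ (Fin d) →ₗ[ℝ] ℝ) := by rw [h]; trivial
    rw [LinearMap.mem_ker] at hm
    have h2 : ⟪u, u⟫ = 0 := hm
    exact hu (inner_self_eq_zero.mp h2)
  have h0 : volume ((LinearMap.ker (innerSL ℝ u : EuclideanSpace ℝ (Fin d) →ₗ[ℝ] ℝ) : Submodule ℝ (EuclideanSpace ℝ (Fin d))) :
      Set (EuclideanSpace ℝ (Fin d))) = 0 := Measure.addHaar_submodule volume _ hker
  set y₀ : EuclideanSpace ℝ (Fin d) := (s / (‖u‖^2)) • u with hy₀def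
  have hu' : ‖u‖ ≠ 0 := norm_ne_zero_iff.mpr hu
  have hy₀ : ⟪u, y₀⟫ = s := by
    rw [hy₀def, real_inner_smul_right, real_inner_self_eq_norm_sq]
    field_simp
  have hker0 : {y : EuclideanSpace ℝ (Fin d) | ⟪u, y⟫ = 0} =
      ((LinearMap.ker (innerSL ℝ u : EuclideanSpace ℝ (Fin d) →ₗ[ℝ] ℝ) : Submodule ℝ (EuclideanSpace ℝ (Fin d))) :
        Set (EuclideanSpace ℝ (Fin d))) := by
    ext y
    simp only [Set.mem_setOf_eq, SetLike.mem_coe, LinearMap.mem_ker]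
    exact Iff.rfl
  have hpre : {y : EuclideanSpace ℝ (Fin d) | ⟪u, y⟫ = s} =
      (fun y => y + -y₀) ⁻¹' {y : EuclideanSpace ℝ (Fin d) | ⟪u, y⟫ = 0} := by
    ext y
    simp only [Set.mem_preimage, Set.mem_setOf_eq, ← sub_eq_add_neg, inner_sub_right, hy₀,
      sub_eq_zero]
  rw [hpre, measure_preimage_add_right, hker0, h0]

end EpsCenterAux

open EpsCenterAux Topology Filter MeasureTheory



/-- For a finite, absolutely continuous, nonzero Borel measure `m` on `ℝ^d`
and `0 < ε < m(ℝ^d)/(d+1)`, the set of `ε`-center points of `m` is compact,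
convex, and has nonempty interior. -/
theorem epsilon_center_points_compact_convex_nonempty_interior
    (d : ℕ) (hd : 1 ≤ d)
    (m : Measure (EuclideanSpace ℝ (Fin d))) [IsFiniteMeasure m]
    (hac : m ≪ volume) (hpos : 0 < m Set.univ)
    (ε : ℝ) (hε : 0 < ε) (hε' : ε < (m Set.univ).toReal / (d + 1)) :
    IsCompact {x : EuclideanSpace ℝ (Fin d) |
        ∀ (u : EuclideanSpace ℝ (Fin d)), u ≠ 0 →
          (m Set.univ).toReal / (d + 1) - ε ≤ (m {y | 0 ≤ ⟪u, y - x⟫}).toReal} ∧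
    Convex ℝ {x : EuclideanSpace ℝ (Fin d) |
        ∀ (u : EuclideanSpace ℝ (Fin d)), u ≠ 0 →
          (m Set.univ).toReal / (d + 1) - ε ≤ (m {y | 0 ≤ ⟪u, y - x⟫}).toReal} ∧
    (interior {x : EuclideanSpace ℝ (Fin d) |
        ∀ (u : EuclideanSpace ℝ (Fin d)), u ≠ 0 →
          (m Set.univ).toReal / (d + 1) - ε ≤ (m {y | 0 ≤ ⟪u, y - x⟫}).toReal}).Nonempty := by
  classical
  set M := (m Set.univ).toReal with hMdef
  have hM : 0 < M := ENNReal.toReal_pos hpos.ne' (measure_ne_top m _)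
  set α := M / ((d:ℝ) + 1) with hαdef
  set K := {x : EuclideanSpace ℝ (Fin d) |
      ∀ (u : EuclideanSpace ℝ (Fin d)), u ≠ 0 →
        α - ε ≤ (m {y | 0 ≤ ⟪u, y - x⟫}).toReal} with hKdef
  have hεα : ε < α := hε'
  have hd1 : (1:ℝ) ≤ (d:ℝ) := by exact_mod_cast hd
  have hset : ∀ (u x : EuclideanSpace ℝ (Fin d)),
      {y : EuclideanSpace ℝ (Fin d) | 0 ≤ ⟪u, y - x⟫} = {y | ⟪u, x⟫ ≤ ⟪u, y⟫} := by
    intro u x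
    ext y
    simp [inner_sub_right, sub_nonneg]
  -- Convexity
  have hKconv : Convex ℝ K := by
    intro x hx z hz a b ha hb hab
    simp only [hKdef, Set.mem_setOf_eq] at hx hz ⊢
    intro u hu
    have hw : ⟪u, a • x + b • z⟫ = a * ⟪u, x⟫ + b * ⟪u, z⟫ := by
      rw [inner_add_right, real_inner_smul_right, real_inner_smul_right]
    rcases le_total ⟪u, z⟫ ⟪u, x⟫ with h | h
    · refine le_trans (hx u hu) (ENNReal.toReal_mono (measure_ne_top m _) (measure_mono ?_))
      rw [hset u x, hset u (a • x + b • z)]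
      intro y hy
      simp only [Set.mem_setOf_eq] at hy ⊢
      have h1 := mul_le_mul_of_nonneg_left h hb
      have h2 : a * ⟪u, x⟫ + b * ⟪u, x⟫ = ⟪u, x⟫ := by rw [← add_mul, hab, one_mul]
      rw [hw]
      linarith
    · refine le_trans (hz u hu) (ENNReal.toReal_mono (measure_ne_top m _) (measure_mono ?_))
      rw [hset u z, hset u (a • x + b • z)]
      intro y hy
      simp only [Set.mem_setOf_eq] at hy ⊢
      have h1 := mul_le_mul_of_nonneg_left h ha
      have h2 : a * ⟪u, z⟫ + b * ⟪u, z⟫ = ⟪u, z⟫ := by rw [← add_mul, hab, one_mul]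
      rw [hw]
      linarith
  -- Closedness
  have hKclosed : IsClosed K := by
    rw [← isOpen_compl_iff, isOpen_iff_forall_mem_open]
    intro x hx
    simp only [hKdef, Set.mem_compl_iff, Set.mem_setOf_eq] at hx
    push_neg at hx
    obtain ⟨u, hu, hlt⟩ := hx
    rw [hset u x] at hlt
    obtain ⟨n, hn⟩ :=
      ((tendsto_measure_halfspace m u ⟪u, x⟫).eventually (gt_mem_nhds hlt)).exists
    refine ⟨{x' : EuclideanSpace ℝ (Fin d) | ⟪u, x⟫ - 1/((n:ℝ)+1) < ⟪u, x'⟫}, ?_,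
      isOpen_lt continuous_const (continuous_const.inner continuous_id), ?_⟩
    · intro x' hx'
      simp only [Set.mem_setOf_eq] at hx'
      simp only [hKdef, Set.mem_compl_iff, Set.mem_setOf_eq]
      push_neg
      refine ⟨u, hu, ?_⟩
      rw [hset u x']
      refine lt_of_le_of_lt (ENNReal.toReal_mono (measure_ne_top m _) (measure_mono ?_)) hn
      intro y hy
      simp only [Set.mem_setOf_eq] at hy ⊢
      linarith
    · simp only [Set.mem_setOf_eq]
      have : (0:ℝ) < 1/((n:ℝ)+1) := by positivity
      linarith
  -- Boundedness
  obtain ⟨R, hRpos, hR⟩ := tail_small m (show (0:ℝ) < α - ε by linarith)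
  have hKsub : K ⊆ Metric.closedBall 0 R := by
    intro x hx
    simp only [hKdef, Set.mem_setOf_eq] at hx
    by_contra hxB
    have hxn : R < ‖x‖ := by
      simpa [Metric.mem_closedBall, dist_zero_right, not_le] using hxB
    have hx0 : x ≠ 0 := by
      intro h
      rw [h, norm_zero] at hxn
      linarith
    have h1 := hx x hx0
    have hsub : {y : EuclideanSpace ℝ (Fin d) | 0 ≤ ⟪x, y - x⟫} ⊆
        (Metric.closedBall (0 : EuclideanSpace ℝ (Fin d)) R)ᶜ := by
      intro y hy
      simp only [Set.mem_setOf_eq] at hy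
      have h2 : ⟪x, y - x⟫ = ⟪x, y⟫ - ‖x‖^2 := by
        rw [inner_sub_right, real_inner_self_eq_norm_sq]
      have h3 := real_inner_le_norm x y
      have h4 : 0 < ‖x‖ := norm_pos_iff.mpr hx0
      have h5 : ‖x‖ ≤ ‖y‖ := by nlinarith
      simp only [Set.mem_compl_iff, Metric.mem_closedBall, dist_zero_right, not_le]
      linarith
    have h6 := ENNReal.toReal_mono (measure_ne_top m _) (measure_mono hsub)
    linarith
  -- the big ball B₀
  obtain ⟨R₀, hR₀pos, hB⟩ := tail_small m (show (0:ℝ) < ε/4 by linarith)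
  set B₀ := Metric.closedBall (0 : EuclideanSpace ℝ (Fin d)) R₀ with hB₀def
  -- Helly's theorem: a deep point xs exists
  let ι := {p : (EuclideanSpace ℝ (Fin d)) × ℝ //
    p.1 ≠ 0 ∧ (m {y | ⟪p.1, y⟫ < p.2}).toReal ≤ α - ε/2}
  let F : ι → Set (EuclideanSpace ℝ (Fin d)) := fun p => {y | p.1.2 ≤ ⟪p.1.1, y⟫} ∩ B₀
  have hhelly : (⋂ p, F p).Nonempty := by
    apply Convex.helly_theorem_compact' (𝕜 := ℝ)
      (fun p => (hs_convex _ _).inter (convex_closedBall _ _))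
      (fun p => (isCompact_closedBall _ _).inter_left (hs_closed _ _))
    intro I hI
    rw [finrank_euclideanSpace_fin] at hI
    by_contra hemp
    rw [Set.not_nonempty_iff_eq_empty] at hemp
    have hcover : (Set.univ : Set (EuclideanSpace ℝ (Fin d))) ⊆
        (⋃ p ∈ I, {y | ⟪(p : ι).1.1, y⟫ < (p : ι).1.2}) ∪ B₀ᶜ := by
      intro y _
      by_cases hyB : y ∈ B₀
      · by_cases hyH : ∀ p ∈ I, y ∈ F p
        · exfalso
          have hmem : y ∈ ⋂ p ∈ I, F p := Set.mem_biInter hyH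
          rw [hemp] at hmem
          exact hmem
        · push_neg at hyH
          obtain ⟨p, hpI, hyp⟩ := hyH
          refine (Set.mem_union _ _ _).mpr (Or.inl (Set.mem_biUnion hpI ?_))
          have hnle : ¬ (p.1.2 ≤ ⟪p.1.1, y⟫) := fun h => hyp ⟨h, hyB⟩
          exact Set.mem_setOf_eq ▸ not_le.mp hnle
      · exact (Set.mem_union _ _ _).mpr (Or.inr hyB)
    have h1 : m Set.univ ≤ (∑ p ∈ I, m {y | ⟪(p : ι).1.1, y⟫ < (p : ι).1.2}) + m B₀ᶜ :=
      calc m Set.univ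
          ≤ m ((⋃ p ∈ I, {y | ⟪(p : ι).1.1, y⟫ < (p : ι).1.2}) ∪ B₀ᶜ) := measure_mono hcover
        _ ≤ m (⋃ p ∈ I, {y | ⟪(p : ι).1.1, y⟫ < (p : ι).1.2}) + m B₀ᶜ := measure_union_le _ _
        _ ≤ _ := add_le_add (measure_biUnion_finset_le _ _) le_rfl
    have hsum_ne : (∑ p ∈ I, m {y | ⟪(p : ι).1.1, y⟫ < (p : ι).1.2}) ≠ ⊤ :=
      (ENNReal.sum_lt_top.mpr (fun p _ => measure_lt_top m _)).ne
    have h2 : M ≤ (∑ p ∈ I, (m {y | ⟪(p : ι).1.1, y⟫ < (p : ι).1.2}).toReal) + (m B₀ᶜ).toReal := by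
      have h2' := ENNReal.toReal_mono
        (ENNReal.add_ne_top.mpr ⟨hsum_ne, measure_ne_top m _⟩) h1
      rwa [ENNReal.toReal_add hsum_ne (measure_ne_top m _),
        ENNReal.toReal_sum (fun p _ => measure_ne_top m _)] at h2'
    have h3 : (∑ p ∈ I, (m {y | ⟪(p : ι).1.1, y⟫ < (p : ι).1.2}).toReal) ≤
        (I.card : ℝ) * (α - ε/2) := by
      rw [← nsmul_eq_mul]
      exact Finset.sum_le_card_nsmul I _ _ (fun p _ => p.2.2)
    have hcard : (I.card : ℝ) ≤ (d:ℝ) + 1 := by exact_mod_cast hI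
    have hα2 : (0:ℝ) ≤ α - ε/2 := by linarith
    have hMα : M = ((d:ℝ)+1) * α := by
      rw [hαdef]
      field_simp
    nlinarith [mul_le_mul_of_nonneg_right hcard hα2, hB,
      mul_nonneg (sub_nonneg.mpr hd1) hε.le]
  obtain ⟨xs, hxs⟩ := hhelly
  rw [Set.mem_iInter] at hxs
  -- xs is a (ε/2)-center point
  have hdepth : ∀ u : EuclideanSpace ℝ (Fin d), u ≠ 0 →
      α - ε/2 ≤ (m {y | ⟪u, xs⟫ ≤ ⟪u, y⟫}).toReal := by
    intro u hu
    by_contra hlt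
    push_neg at hlt
    obtain ⟨n, hn⟩ :=
      ((tendsto_measure_halfspace m u ⟪u, xs⟫).eventually (gt_mem_nhds hlt)).exists
    have hseteq : {y : EuclideanSpace ℝ (Fin d) | ⟪-u, y⟫ < 1/((n:ℝ)+1) - ⟪u, xs⟫}
        = {y : EuclideanSpace ℝ (Fin d) | ⟪u, xs⟫ - 1/((n:ℝ)+1) < ⟪u, y⟫} := by
      ext y
      simp only [Set.mem_setOf_eq, inner_neg_left]
      constructor <;> intro h <;> linarith
    let p : ι := ⟨(-u, 1/((n:ℝ)+1) - ⟪u, xs⟫), by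
      refine ⟨neg_ne_zero.mpr hu, ?_⟩
      dsimp only
      rw [hseteq]
      exact hn.le⟩
    have hxp := (hxs p).1
    simp only [Set.mem_setOf_eq, inner_neg_left, p, F] at hxp
    have hpos1 : (0:ℝ) < 1/((n:ℝ)+1) := by positivity
    linarith
  -- upgrade to open halfspaces using absolute continuity
  have hdepth' : ∀ u : EuclideanSpace ℝ (Fin d), u ≠ 0 →
      α - ε/2 ≤ (m {y | 0 < ⟪u, y - xs⟫}).toReal := by
    intro u hu
    refine le_trans (hdepth u hu) (ENNReal.toReal_mono (measure_ne_top m _) ?_)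
    calc m {y | ⟪u, xs⟫ ≤ ⟪u, y⟫}
        ≤ m ({y : EuclideanSpace ℝ (Fin d) | 0 < ⟪u, y - xs⟫} ∪ {y | ⟪u, y⟫ = ⟪u, xs⟫}) := by
          apply measure_mono
          intro y hy
          simp only [Set.mem_setOf_eq] at hy
          rcases lt_or_eq_of_le hy with h | h
          · exact (Set.mem_union _ _ _).mpr (Or.inl (by
              simp only [Set.mem_setOf_eq, inner_sub_right]
              linarith))
          · exact (Set.mem_union _ _ _).mpr (Or.inr h.symm)
      _ ≤ m {y | 0 < ⟪u, y - xs⟫} + m {y | ⟪u, y⟫ = ⟪u, xs⟫} := measure_union_le _ _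
      _ = m {y | 0 < ⟪u, y - xs⟫} := by
          rw [hyperplane_null m hac u hu, add_zero]
  -- restrict to B₀
  have hcut : ∀ u : EuclideanSpace ℝ (Fin d), u ≠ 0 →
      α - 3*ε/4 ≤ (m ({y | 0 < ⟪u, y - xs⟫} ∩ B₀)).toReal := by
    intro u hu
    have h1 := hdepth' u hu
    have h2 : m {y | 0 < ⟪u, y - xs⟫} ≤ m ({y | 0 < ⟪u, y - xs⟫} ∩ B₀) + m B₀ᶜ := by
      refine le_trans (measure_mono ?_) (measure_union_le _ _)
      intro y hy
      by_cases h : y ∈ B₀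
      · exact (Set.mem_union _ _ _).mpr (Or.inl ⟨hy, h⟩)
      · exact (Set.mem_union _ _ _).mpr (Or.inr h)
    have h3 := ENNReal.toReal_mono
      (ENNReal.add_ne_top.mpr ⟨measure_ne_top m _, measure_ne_top m _⟩) h2
    rw [ENNReal.toReal_add (measure_ne_top m _) (measure_ne_top m _)] at h3
    linarith
  -- uniform margin on the sphere
  have hch : ∀ u : Metric.sphere (0 : EuclideanSpace ℝ (Fin d)) 1, ∃ n : ℕ,
      α - ε < (m ({y | 2/((n:ℝ)+1) < ⟪(u : EuclideanSpace ℝ (Fin d)), y - xs⟫} ∩ B₀)).toReal := by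
    intro u
    have hu1 : ‖(u : EuclideanSpace ℝ (Fin d))‖ = 1 := by
      have h := u.2
      rwa [mem_sphere_zero_iff_norm] at h
    have hu0 : (u : EuclideanSpace ℝ (Fin d)) ≠ 0 := by
      intro h
      rw [h, norm_zero] at hu1
      norm_num at hu1
    have hgt : α - ε <
        (m ({y | 0 < ⟪(u : EuclideanSpace ℝ (Fin d)), y - xs⟫} ∩ B₀)).toReal :=
      lt_of_lt_of_le (by linarith) (hcut _ hu0)
    exact ((tendsto_measure_slab m (u : EuclideanSpace ℝ (Fin d)) xs B₀).eventually
      (lt_mem_nhds hgt)).exists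
  choose nn hnn using hch
  set ρ := R₀ + ‖xs‖ + 1 with hρdef
  have hρpos : 0 < ρ := by positivity
  have hρy : ∀ y ∈ B₀, ‖y - xs‖ ≤ ρ := by
    intro y hy
    rw [hB₀def, Metric.mem_closedBall, dist_zero_right] at hy
    calc ‖y - xs‖ ≤ ‖y‖ + ‖xs‖ := norm_sub_le _ _
      _ ≤ ρ := by rw [hρdef]; linarith
  obtain ⟨t, ht⟩ := (isCompact_sphere (0 : EuclideanSpace ℝ (Fin d)) 1).elim_finite_subcover
    (fun u : Metric.sphere (0 : EuclideanSpace ℝ (Fin d)) 1 =>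
      Metric.ball (u : EuclideanSpace ℝ (Fin d)) (1/((nn u : ℝ)+1)/ρ))
    (fun u => Metric.isOpen_ball)
    (by
      intro x hx
      exact Set.mem_iUnion.mpr ⟨⟨x, hx⟩, Metric.mem_ball_self (by positivity)⟩)
  have hdpos : 0 < d := hd
  have hu₀S : EuclideanSpace.single (⟨0, hdpos⟩ : Fin d) (1:ℝ) ∈
      Metric.sphere (0 : EuclideanSpace ℝ (Fin d)) 1 := by
    rw [mem_sphere_zero_iff_norm, EuclideanSpace.norm_single]
    norm_num
  have htne : t.Nonempty := by
    obtain ⟨i, hit, _⟩ := Set.mem_iUnion₂.mp (ht hu₀S)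
    exact ⟨i, hit⟩
  set δ := t.inf' htne (fun u => 1/((nn u : ℝ)+1)) with hδdef
  have hδpos : 0 < δ := by
    rw [hδdef, Finset.lt_inf'_iff]
    intro u _
    positivity
  have hδle : ∀ u ∈ t, δ ≤ 1/((nn u : ℝ)+1) := fun u hu => Finset.inf'_le _ hu
  -- the ball around xs is inside K
  have hball : Metric.ball xs δ ⊆ K := by
    intro x hx
    rw [Metric.mem_ball, dist_eq_norm] at hx
    simp only [hKdef, Set.mem_setOf_eq]
    intro u hu
    set u' : EuclideanSpace ℝ (Fin d) := ‖u‖⁻¹ • u with hu'def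
    have hun : 0 < ‖u‖ := norm_pos_iff.mpr hu
    have hu'1 : ‖u'‖ = 1 := by
      rw [hu'def, norm_smul, norm_inv, norm_norm]
      field_simp
    have hu'S : u' ∈ Metric.sphere (0 : EuclideanSpace ℝ (Fin d)) 1 := by
      rwa [mem_sphere_zero_iff_norm]
    obtain ⟨v, hvt, hv⟩ := Set.mem_iUnion₂.mp (ht hu'S)
    rw [Metric.mem_ball, dist_eq_norm] at hv
    have hsub2 : {y : EuclideanSpace ℝ (Fin d) |
        2/((nn v : ℝ)+1) < ⟪(v : EuclideanSpace ℝ (Fin d)), y - xs⟫} ∩ B₀ ⊆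
        {y | 0 ≤ ⟪u, y - x⟫} := by
      rintro y ⟨hy1, hy2⟩
      simp only [Set.mem_setOf_eq] at hy1 ⊢
      have hyρ := hρy y hy2
      have hb1 : |⟪u' - (v : EuclideanSpace ℝ (Fin d)), y - xs⟫| ≤
          ‖u' - (v : EuclideanSpace ℝ (Fin d))‖ * ‖y - xs‖ := abs_real_inner_le_norm _ _
      have hb2 : ‖u' - (v : EuclideanSpace ℝ (Fin d))‖ * ‖y - xs‖ ≤
          (1/((nn v : ℝ)+1)/ρ) * ρ :=
        mul_le_mul hv.le hyρ (norm_nonneg _) (by positivity)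
      have hb3 : (1/((nn v : ℝ)+1)/ρ) * ρ = 1/((nn v : ℝ)+1) := by
        field_simp
      have hsplit : ⟪u', y - xs⟫ =
          ⟪(v : EuclideanSpace ℝ (Fin d)), y - xs⟫ +
            ⟪u' - (v : EuclideanSpace ℝ (Fin d)), y - xs⟫ := by
        rw [← inner_add_left]
        congr 1
        abel
      have habs := abs_le.mp (hb1.trans (hb2.trans_eq hb3))
      have h2A : 2/((nn v : ℝ)+1) = 1/((nn v : ℝ)+1) + 1/((nn v : ℝ)+1) := by ring
      have h6 : 1/((nn v : ℝ)+1) < ⟪u', y - xs⟫ := by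
        rw [hsplit]
        linarith [habs.1, hy1]
      have h7 : |⟪u', x - xs⟫| ≤ ‖x - xs‖ := by
        have h := abs_real_inner_le_norm u' (x - xs)
        rwa [hu'1, one_mul] at h
      have h8 : ⟪u', y - x⟫ = ⟪u', y - xs⟫ - ⟪u', x - xs⟫ := by
        rw [← inner_sub_right]
        congr 1
        abel
      have hδv := hδle v hvt
      have habs7 := abs_le.mp h7
      have h9 : 0 ≤ ⟪u', y - x⟫ := by
        rw [h8]
        linarith
      have h10 : ⟪u', y - x⟫ = ‖u‖⁻¹ * ⟪u, y - x⟫ := real_inner_smul_left _ _ _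
      have h12 : 0 ≤ ‖u‖ * (‖u‖⁻¹ * ⟪u, y - x⟫) := mul_nonneg hun.le (h10 ▸ h9)
      rwa [← mul_assoc, mul_inv_cancel₀ hun.ne', one_mul] at h12
    exact le_trans (hnn v).le (ENNReal.toReal_mono (measure_ne_top m _) (measure_mono hsub2))
  refine ⟨IsCompact.of_isClosed_subset (isCompact_closedBall _ _) hKclosed hKsub, hKconv, ?_⟩
  refine ⟨xs, interior_maximal hball Metric.isOpen_ball (Metric.mem_ball_self hδpos)⟩
end

section
/- For every finite set S of points in R^d (d ≥ 1), there exists δ > 0 with the following property: for every affine function f : R^d → R of the form f(x) = ⟨a, x⟩ + b with a ≠ 0 (defining the hyperplane H = f⁻¹({0})), there exists an affine function g : R^d → R of the form g(x) = ⟨a′, x⟩ + b′ with a′ ≠ 0 such that (i) every s ∈ S whose distance to H is at most δ satisfies g(s) = 0, and (ii) every s ∈ S satisfies f(s)·g(s) ≥ 0 (so no site lies in the interior of the double wedge bounded by H and g⁻¹({0}), i.e., the two hyperplanes are combinatorially equivalent). -/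
open scoped RealInnerProductSpace
open Filter Topology

/-!
Normalise `f` so that `a` is a unit vector; then `|f s|` is at most the distance from `s` to
the hyperplane. Record for each site `0` if `|f s| ≤ δ` and the sign of `f s` otherwise. There
are finitely many such sign patterns, so `δ` may be chosen for each pattern separately. If a
pattern occurs for unit `f` and arbitrarily small `δ`, a limit of these `f` (which exists by
compactness) vanishes at the sites marked `0` and weakly has the recorded sign elsewhere, so it
is the required `g`. The constant terms stay bounded because some site is within `δ ≤ 1` of
the hyperplane; if none is, `g = f` already works.
-/

section SignPatterns

variable {E : Type*} [NormedAddCommGroup E] [InnerProductSpace ℝ E]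

theorem abs_inner_add_le_norm_mul_infDist {a : E} (ha : a ≠ 0) (b : ℝ) (y : E) :
    |⟪a, y⟫ + b| ≤ ‖a‖ * Metric.infDist y {x : E | ⟪a, x⟫ + b = 0} := by
  have hna : 0 < ‖a‖ := norm_pos_iff.2 ha
  have hne : ({x : E | ⟪a, x⟫ + b = 0}).Nonempty := by
    refine ⟨(-b / ‖a‖ ^ 2) • a, ?_⟩
    simp only [Set.mem_ofPred_eq, real_inner_smul_right, real_inner_self_eq_norm_sq]
    field_simp
    ring
  rw [← div_le_iff₀' hna, Metric.le_infDist hne]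
  intro z hz
  rw [div_le_iff₀' hna, dist_eq_norm]
  calc |⟪a, y⟫ + b| = |⟪a, y - z⟫| := by
        rw [inner_sub_right]
        congr 1
        linarith [show ⟪a, z⟫ + b = 0 from hz]
    _ ≤ ‖a‖ * ‖y - z‖ := abs_real_inner_le_norm a (y - z)

def affineEval (p : E × ℝ) (y : E) : ℝ := ⟪p.1, y⟫ + p.2

theorem affineEval_smul (c : ℝ) (p : E × ℝ) (y : E) :
    affineEval (c • p) y = c * affineEval p y := by
  simp only [affineEval, Prod.smul_fst, Prod.smul_snd, real_inner_smul_left, smul_eq_mul]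
  ring

theorem continuous_affineEval (y : E) : Continuous fun p : E × ℝ => affineEval p y := by
  unfold affineEval; fun_prop

theorem abs_snd_le_of_norm_fst_eq_one {p : E × ℝ} (hp : ‖p.1‖ = 1) (y : E) :
    |p.2| ≤ ‖y‖ + |affineEval p y| := by
  have h := abs_real_inner_le_norm p.1 y
  rw [hp, one_mul] at h
  unfold affineEval at *
  calc |p.2| = |⟪p.1, y⟫ + p.2 - ⟪p.1, y⟫| := by ring_nf
    _ ≤ |⟪p.1, y⟫ + p.2| + |⟪p.1, y⟫| := abs_sub _ _
    _ ≤ ‖y‖ + |⟪p.1, y⟫ + p.2| := by linarith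

noncomputable def nearSign (δ : ℝ) (p : E × ℝ) (y : E) : SignType :=
  if |affineEval p y| ≤ δ then 0 else SignType.sign (affineEval p y)

theorem zero_le_nearSign_mul (δ : ℝ) (p : E × ℝ) (y : E) :
    0 ≤ (nearSign δ p y : ℝ) * affineEval p y := by
  unfold nearSign
  split_ifs
  · simp
  · rw [sign_mul_self]
    exact abs_nonneg _

theorem abs_affineEval_le_of_nearSign_eq_zero {δ : ℝ} (hδ : 0 ≤ δ) {p : E × ℝ} {y : E}
    (h : nearSign δ p y = 0) : |affineEval p y| ≤ δ := by
  unfold nearSign at h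
  split_ifs at h with hle
  · exact hle
  · rw [sign_eq_zero_iff] at h
    simpa [h] using hδ

variable {ι : Type*}

def RealizesPattern (x : ι → E) (σ : ι → SignType) (q : E × ℝ) : Prop :=
  q.1 ≠ 0 ∧ ∀ i, (σ i = 0 → affineEval q (x i) = 0) ∧ 0 ≤ (σ i : ℝ) * affineEval q (x i)

theorem realizesPattern_of_forall_ne_zero {x : ι → E} {σ : ι → SignType} (hσ : ∀ i, σ i ≠ 0)
    {δ : ℝ} {p : E × ℝ} (hp : ‖p.1‖ = 1) (hpσ : ∀ i, nearSign δ p (x i) = σ i) :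
    RealizesPattern x σ p :=
  ⟨norm_ne_zero_iff.1 (hp.symm ▸ one_ne_zero), fun i =>
    ⟨fun h => absurd h (hσ i), hpσ i ▸ zero_le_nearSign_mul δ p (x i)⟩⟩

theorem mul_nonneg_of_realizesPattern_nearSign {x : ι → E} {δ : ℝ} {p q : E × ℝ}
    (hq : RealizesPattern x (fun i => nearSign δ p (x i)) q) (i : ι) :
    0 ≤ affineEval p (x i) * affineEval q (x i) := by
  obtain ⟨hzero, hsign⟩ := hq.2 i
  by_cases hle : |affineEval p (x i)| ≤ δ
  · simp [hzero (if_pos hle)]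
  · simp only [nearSign, if_neg hle] at hsign
    rw [← sign_mul_abs (affineEval p (x i)), mul_comm _ |_|, mul_assoc]
    exact mul_nonneg (abs_nonneg _) hsign

theorem isCompact_setOf_unit_signPattern [FiniteDimensional ℝ E] (x : ι → E) (σ : ι → SignType)
    (R : ℝ) : IsCompact {p : E × ℝ | ‖p.1‖ = 1 ∧ |p.2| ≤ R ∧
      ∀ i, 0 ≤ (σ i : ℝ) * affineEval p (x i)} := by
  refine Metric.isCompact_of_isClosed_isBounded ?_ ?_
  · simp only [Set.ofPred_and, Set.ofPred_forall]
    exact (isClosed_eq (by fun_prop) continuous_const).inter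
      ((isClosed_le (by fun_prop) continuous_const).inter
        (isClosed_iInter fun i => isClosed_le continuous_const
          (continuous_const.mul (continuous_affineEval (x i)))))
  · refine (isBounded_iff_forall_norm_le).2 ⟨max 1 R, fun p ⟨h1, hR, _⟩ => ?_⟩
    rw [Prod.norm_def, h1, Real.norm_eq_abs]
    exact max_le_max le_rfl hR

theorem exists_realizesPattern_of_frequently [FiniteDimensional ℝ E] [Fintype ι] {x : ι → E}
    {σ : ι → SignType}
    (h : ∃ᶠ δ in 𝓝[>] (0 : ℝ), ∃ p : E × ℝ, ‖p.1‖ = 1 ∧ ∀ i, nearSign δ p (x i) = σ i) :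
    ∃ q, RealizesPattern x σ q := by
  by_cases hσ : ∀ i, σ i ≠ 0
  · obtain ⟨δ, p, hp, hpσ⟩ := h.exists
    exact ⟨p, realizesPattern_of_forall_ne_zero hσ hp hpσ⟩
  obtain ⟨i₀, hi₀⟩ := not_forall_not.1 hσ
  by_contra hnone
  set T := Finset.univ.filter fun i => σ i = 0
  set K := {p : E × ℝ | ‖p.1‖ = 1 ∧ |p.2| ≤ ‖x i₀‖ + 1 ∧
    ∀ i, 0 ≤ (σ i : ℝ) * affineEval p (x i)}
  have hpos : ∀ p ∈ K, 0 < ∑ i ∈ T, |affineEval p (x i)| := by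
    rintro p ⟨hp1, -, hpσ⟩
    refine (Finset.sum_nonneg fun i _ => abs_nonneg _).lt_of_ne fun hsum => hnone ⟨p, ?_⟩
    have hzero := (Finset.sum_eq_zero_iff_of_nonneg fun i _ => abs_nonneg _).1 hsum.symm
    refine ⟨norm_ne_zero_iff.1 (hp1.symm ▸ one_ne_zero), fun i => ⟨fun hi => ?_, hpσ i⟩⟩
    exact abs_eq_zero.1 (hzero i (Finset.mem_filter.2 ⟨Finset.mem_univ i, hi⟩))
  obtain ⟨ε, hε, hεK⟩ := (isCompact_setOf_unit_signPattern x σ _).exists_forall_le'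
    (continuous_finsetSum _ fun i _ => (continuous_affineEval (x i)).abs).continuousOn hpos
  have hsmall : ∀ᶠ δ in 𝓝[>] (0 : ℝ), δ ∈ Set.Ioo 0 (min 1 (ε / (T.card + 1))) :=
    Ioo_mem_nhdsGT (by positivity)
  obtain ⟨δ, ⟨p, hp1, hpσ⟩, hδ0, hδ⟩ := (h.and_eventually hsmall).exists
  have hδ1 : δ < 1 := hδ.trans_le (min_le_left _ _)
  have hδε : (T.card + 1) * δ < ε := by
    rw [← lt_div_iff₀' (by positivity)]
    exact hδ.trans_le (min_le_right _ _)
  have hT : ∀ i ∈ T, |affineEval p (x i)| ≤ δ := fun i hi =>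
    abs_affineEval_le_of_nearSign_eq_zero hδ0.le ((hpσ i).trans (Finset.mem_filter.1 hi).2)
  have hpK : p ∈ K := by
    refine ⟨hp1, ?_, fun i => hpσ i ▸ zero_le_nearSign_mul δ p (x i)⟩
    linarith [abs_snd_le_of_norm_fst_eq_one hp1 (x i₀), hT i₀ (by simp [T, hi₀])]
  have hsum : ∑ i ∈ T, |affineEval p (x i)| ≤ T.card * δ := by
    simpa only [nsmul_eq_mul] using Finset.sum_le_card_nsmul T _ δ hT
  linarith [hεK p hpK]

theorem eventually_exists_sharpening [FiniteDimensional ℝ E] [Fintype ι] (x : ι → E) :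
    ∀ᶠ δ in 𝓝[>] (0 : ℝ), ∀ p : E × ℝ, ‖p.1‖ = 1 → ∃ q : E × ℝ, q.1 ≠ 0 ∧
      (∀ i, |affineEval p (x i)| ≤ δ → affineEval q (x i) = 0) ∧
      ∀ i, 0 ≤ affineEval p (x i) * affineEval q (x i) := by
  have hpattern : ∀ σ : ι → SignType, ∀ᶠ δ in 𝓝[>] (0 : ℝ), ∀ p : E × ℝ, ‖p.1‖ = 1 →
      (∀ i, nearSign δ p (x i) = σ i) → ∃ q, RealizesPattern x σ q := by
    intro σ
    by_cases hσ : ∃ q, RealizesPattern x σ q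
    · exact Eventually.of_forall fun _ _ _ _ => hσ
    · filter_upwards [not_frequently.1 (mt exists_realizesPattern_of_frequently hσ)]
        with δ hδ p hp hpσ
      exact absurd ⟨p, hp, hpσ⟩ hδ
  filter_upwards [eventually_all.2 hpattern] with δ hδ p hp
  obtain ⟨q, hq⟩ := hδ _ p hp fun _ => rfl
  exact ⟨q, hq.1, fun i hi => (hq.2 i).1 (if_pos hi),
    mul_nonneg_of_realizesPattern_nearSign hq⟩

end SignPatterns

theorem hyperplane_sharpening_general
    (d : ℕ) (S : Finset (EuclideanSpace ℝ (Fin d))) :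
    ∃ δ : ℝ, 0 < δ ∧
      ∀ (a : EuclideanSpace ℝ (Fin d)) (b : ℝ), a ≠ 0 →
        ∃ (a' : EuclideanSpace ℝ (Fin d)) (b' : ℝ), a' ≠ 0 ∧
          (∀ s ∈ S, Metric.infDist s {x : EuclideanSpace ℝ (Fin d) | ⟪a, x⟫ + b = 0} ≤ δ →
            ⟪a', s⟫ + b' = 0) ∧
          (∀ s ∈ S, 0 ≤ (⟪a, s⟫ + b) * (⟪a', s⟫ + b')) := by
  obtain ⟨δ, hδ, hδ0⟩ := ((eventually_exists_sharpening
    (Subtype.val : S → EuclideanSpace ℝ (Fin d))).and self_mem_nhdsWithin).exists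
  refine ⟨δ, hδ0, fun a b ha => ?_⟩
  have hna : 0 < ‖a‖ := norm_pos_iff.2 ha
  have hp : ‖(‖a‖⁻¹ • (a, b)).1‖ = 1 := by
    simp [norm_smul, hna.ne']
  obtain ⟨q, hq0, hnear, hsign⟩ := hδ _ hp
  have heval (y) : affineEval (‖a‖⁻¹ • (a, b)) y = ‖a‖⁻¹ * (⟪a, y⟫ + b) := affineEval_smul _ _ _
  refine ⟨q.1, q.2, hq0, fun s hs hdist => hnear ⟨s, hs⟩ ?_, fun s hs => ?_⟩
  · rw [heval, abs_mul, abs_of_pos (inv_pos.2 hna), inv_mul_le_iff₀ hna]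
    exact (abs_inner_add_le_norm_mul_infDist ha b s).trans (by gcongr)
  · have := hsign ⟨s, hs⟩
    rw [heval, mul_assoc] at this
    exact nonneg_of_mul_nonneg_right this (inv_pos.2 hna)

/-- Sharpening lemma: for any finite set of sites in `ℝ^d` there is a `δ > 0`
such that every hyperplane `{x | ⟪a, x⟫ + b = 0}` can be replaced by a
combinatorially equivalent hyperplane incident to all sites within distance
`δ` of it. -/
theorem hyperplane_sharpening
    (d : ℕ) (hd : 1 ≤ d) (S : Finset (EuclideanSpace ℝ (Fin d))) :
    ∃ δ : ℝ, 0 < δ ∧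
      ∀ (a : EuclideanSpace ℝ (Fin d)) (b : ℝ), a ≠ 0 →
        ∃ (a' : EuclideanSpace ℝ (Fin d)) (b' : ℝ), a' ≠ 0 ∧
          (∀ s ∈ S, Metric.infDist s {x : EuclideanSpace ℝ (Fin d) | ⟪a, x⟫ + b = 0} ≤ δ →
            ⟪a', s⟫ + b' = 0) ∧
          (∀ s ∈ S, 0 ≤ (⟪a, s⟫ + b) * (⟪a', s⟫ + b')) :=
  hyperplane_sharpening_general d S
end

section
/- For every finite set S of points in R^d (d ≥ 1), there exists δ > 0 with the following property: for every affine function f : R^d → R of the form f(x) = ⟨a, x⟩ + b with a ≠ 0, there exists an affine function g : R^d → R of the form g(x) = ⟨a′, x⟩ + b′ with ‖a′‖ = 1 such that (i) |g(s)| ≥ δ for every s ∈ S (so the hyperplane g⁻¹({0}) is at distance at least δ from every site), and (ii) f(s)·g(s) ≥ 0 for every s ∈ S (so the hyperplanes f⁻¹({0}) and g⁻¹({0}) are combinatorially equivalent). -/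
open scoped RealInnerProductSpace

/-- Perturbation lemma: any hyperplane can be replaced by a sign-compatible one
with unit normal that misses all sites. -/
lemma perturb_aux (d : ℕ) (S : Finset (EuclideanSpace ℝ (Fin d)))
    (a : EuclideanSpace ℝ (Fin d)) (b : ℝ) (ha : a ≠ 0) :
    ∃ (a' : EuclideanSpace ℝ (Fin d)) (b' : ℝ), ‖a'‖ = 1 ∧
      ∀ s ∈ S, (⟪a', s⟫ + b' ≠ 0 ∧
        0 ≤ ((SignType.sign (⟪a, s⟫ + b) : ℝ)) * (⟪a', s⟫ + b')) := by
  classical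
  have hc : (0:ℝ) < ‖a‖ := norm_pos_iff.mpr ha
  set c : ℝ := ‖a‖ with hcdef
  set a' : EuclideanSpace ℝ (Fin d) := c⁻¹ • a with ha'
  have hnorm : ‖a'‖ = 1 := by
    rw [ha', norm_smul, norm_inv, Real.norm_eq_abs, abs_of_pos hc]
    field_simp
    exact hcdef.symm
  have key : ∀ s : EuclideanSpace ℝ (Fin d),
      ⟪a', s⟫ + c⁻¹ * b = c⁻¹ * (⟪a, s⟫ + b) := by
    intro s
    rw [ha', real_inner_smul_left]
    ring
  set T : Finset (EuclideanSpace ℝ (Fin d)) :=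
    S.filter (fun s => ⟪a', s⟫ + c⁻¹ * b ≠ 0) with hT
  set ε : ℝ := (insert (1:ℝ) (T.image fun s => |⟪a', s⟫ + c⁻¹ * b|)).min'
      (by simp) with hε
  have hεpos : 0 < ε := by
    rw [hε]
    apply (Finset.lt_min'_iff _ _).mpr
    intro y hy
    rcases Finset.mem_insert.mp hy with h | h
    · simp [h]
    · obtain ⟨s, hs, rfl⟩ := Finset.mem_image.mp h
      exact abs_pos.mpr (Finset.mem_filter.mp hs).2
  have hεle : ∀ s ∈ S, ⟪a', s⟫ + c⁻¹ * b ≠ 0 → ε ≤ |⟪a', s⟫ + c⁻¹ * b| := by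
    intro s hs hne
    apply Finset.min'_le
    exact Finset.mem_insert_of_mem (Finset.mem_image.mpr
      ⟨s, Finset.mem_filter.mpr ⟨hs, hne⟩, rfl⟩)
  clear_value ε
  refine ⟨a', c⁻¹ * b + ε / 2, hnorm, ?_⟩
  intro s hs
  set v : ℝ := ⟪a', s⟫ + c⁻¹ * b with hv
  have hfs : ⟪a, s⟫ + b = c * v := by
    rw [hv, key s]
    field_simp
  have hg : ⟪a', s⟫ + (c⁻¹ * b + ε / 2) = v + ε / 2 := by rw [hv]; ring
  clear_value v
  rw [hg, hfs]
  rcases lt_trichotomy v 0 with hvlt | hveq | hvgt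
  · have h1 : ε ≤ -v := by
      have := hεle s hs (by rw [← hv]; exact ne_of_lt hvlt)
      rwa [← hv, abs_of_neg hvlt] at this
    have hgneg : v + ε / 2 < 0 := by linarith [hεpos, h1, hvlt]
    have hsign : SignType.sign (c * v) = -1 :=
      sign_neg (mul_neg_of_pos_of_neg hc hvlt)
    constructor
    · exact ne_of_lt hgneg
    · rw [hsign, SignType.coe_neg_one]
      nlinarith [hgneg]
  · have hsign : SignType.sign (c * v) = 0 := by rw [hveq, mul_zero, sign_zero]
    constructor
    · rw [hveq]; positivity
    · rw [hsign]; simp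
  · have hgpos : 0 < v + ε / 2 := by positivity
    have hsign : SignType.sign (c * v) = 1 := sign_pos (mul_pos hc hvgt)
    constructor
    · exact ne_of_gt hgpos
    · rw [hsign, SignType.coe_one, one_mul]
      exact le_of_lt hgpos

/-- Unsharpening lemma: for any finite set of sites in `ℝ^d` there is a
`δ > 0` such that every hyperplane `{x | ⟪a, x⟫ + b = 0}` can be replaced by
a combinatorially equivalent hyperplane (given by a unit normal `a'`) lying
at distance at least `δ` from every site. -/
theorem hyperplane_unsharpening
    (d : ℕ) (hd : 1 ≤ d) (S : Finset (EuclideanSpace ℝ (Fin d))) :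
    ∃ δ : ℝ, 0 < δ ∧
      ∀ (a : EuclideanSpace ℝ (Fin d)) (b : ℝ), a ≠ 0 →
        ∃ (a' : EuclideanSpace ℝ (Fin d)) (b' : ℝ), ‖a'‖ = 1 ∧
          (∀ s ∈ S, δ ≤ |⟪a', s⟫ + b'|) ∧
          (∀ s ∈ S, 0 ≤ (⟪a, s⟫ + b) * (⟪a', s⟫ + b')) := by
  classical
  -- a nonzero vector exists since d ≥ 1
  have hex : ∃ u : EuclideanSpace ℝ (Fin d), ‖u‖ = 1 := by
    refine ⟨EuclideanSpace.single ⟨0, hd⟩ (1:ℝ), ?_⟩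
    rw [EuclideanSpace.norm_single]
    norm_num
  obtain ⟨u, hu⟩ := hex
  set R : ({ x // x ∈ S } → SignType) → Prop := fun τ =>
    ∃ (a : EuclideanSpace ℝ (Fin d)) (b : ℝ), a ≠ 0 ∧
      ∀ s : { x // x ∈ S }, SignType.sign (⟪a, (s : EuclideanSpace ℝ (Fin d))⟫ + b) = τ s
    with hR
  have H : ∀ τ : { x // x ∈ S } → SignType,
      ∃ (a' : EuclideanSpace ℝ (Fin d)) (b' : ℝ), ‖a'‖ = 1 ∧
        (R τ → ∀ s : { x // x ∈ S },
          (⟪a', (s : EuclideanSpace ℝ (Fin d))⟫ + b' ≠ 0 ∧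
           0 ≤ ((τ s : ℝ)) * (⟪a', (s : EuclideanSpace ℝ (Fin d))⟫ + b'))) := by
    intro τ
    by_cases hRτ : R τ
    · obtain ⟨a, b, ha, hsign⟩ := hRτ
      obtain ⟨a', b', hnorm, hprop⟩ := perturb_aux d S a b ha
      refine ⟨a', b', hnorm, fun _ s => ?_⟩
      have := hprop s.1 s.2
      rwa [hsign s] at this
    · exact ⟨u, 0, hu, fun h => absurd h hRτ⟩
  choose a' b' hnorm hτ using H
  set δf : ({ x // x ∈ S } → SignType) → ℝ := fun τ =>
    (insert (1:ℝ) (Finset.image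
      (fun s : { x // x ∈ S } => |⟪a' τ, (s : EuclideanSpace ℝ (Fin d))⟫ + b' τ|)
      S.attach)).min' (by simp) with hδf
  set F : Finset ({ x // x ∈ S } → SignType) := Finset.univ.filter R with hF
  refine ⟨(insert (1:ℝ) (F.image δf)).min' (by simp), ?_, ?_⟩
  · apply (Finset.lt_min'_iff _ _).mpr
    intro y hy
    rcases Finset.mem_insert.mp hy with h | h
    · simp [h]
    · obtain ⟨τ, hτF, rfl⟩ := Finset.mem_image.mp h
      have hRτ : R τ := (Finset.mem_filter.mp hτF).2
      rw [hδf]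
      apply (Finset.lt_min'_iff _ _).mpr
      intro z hz
      rcases Finset.mem_insert.mp hz with h' | h'
      · simp [h']
      · obtain ⟨s, _, rfl⟩ := Finset.mem_image.mp h'
        exact abs_pos.mpr (hτ τ hRτ s).1
  · intro a b ha
    set τ : { x // x ∈ S } → SignType := fun s =>
      SignType.sign (⟪a, (s : EuclideanSpace ℝ (Fin d))⟫ + b) with hτdef
    have hRτ : R τ := ⟨a, b, ha, fun s => rfl⟩
    have hτF : τ ∈ F := Finset.mem_filter.mpr ⟨Finset.mem_univ _, hRτ⟩
    refine ⟨a' τ, b' τ, hnorm τ, ?_, ?_⟩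
    · intro s hs
      have h1 : (insert (1:ℝ) (F.image δf)).min' (by simp) ≤ δf τ :=
        Finset.min'_le _ _ (Finset.mem_insert_of_mem
          (Finset.mem_image.mpr ⟨τ, hτF, rfl⟩))
      have h2 : δf τ ≤ |⟪a' τ, s⟫ + b' τ| := by
        apply Finset.min'_le
        exact Finset.mem_insert_of_mem (Finset.mem_image.mpr
          ⟨⟨s, hs⟩, Finset.mem_attach _ _, rfl⟩)
      linarith
    · intro s hs
      have h := (hτ τ hRτ ⟨s, hs⟩).2
      have h' : (0:ℝ) ≤ (SignType.sign (⟪a, s⟫ + b) : ℝ) * (⟪a' τ, s⟫ + b' τ) := h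
      have habs : (SignType.sign (⟪a, s⟫ + b) : ℝ) * |⟪a, s⟫ + b| = ⟪a, s⟫ + b :=
        sign_mul_abs _
      have heq : (⟪a, s⟫ + b) * (⟪a' τ, s⟫ + b' τ)
          = |⟪a, s⟫ + b| * ((SignType.sign (⟪a, s⟫ + b) : ℝ) * (⟪a' τ, s⟫ + b' τ)) := by
        conv_lhs => rw [← habs]
        ring
      rw [heq]
      exact mul_nonneg (abs_nonneg _) h'
end

section
/- Let d ≥ 1, let S be a finite set of points in R^d, and let c ∈ R^d have location depth at least D with respect to S (every closed halfspace containing c contains at least D points of S). Then there exist ⌈D/d⌉ pairwise disjoint subsets S_1, …, S_{⌈D/d⌉} of S such that c lies in the convex hull of each S_i; in particular, c has Tverberg depth at least ⌈D/d⌉ with respect to S. -/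
open scoped RealInnerProductSpace

variable {d : ℕ}

lemma tvAux_mem_hull (hd : 1 ≤ d) (S : Finset (EuclideanSpace ℝ (Fin d)))
    (c : EuclideanSpace ℝ (Fin d))
    (h : ∀ u : EuclideanSpace ℝ (Fin d), u ≠ 0 → ∃ s ∈ S, 0 ≤ ⟪u, s - c⟫) :
    c ∈ convexHull ℝ (S : Set (EuclideanSpace ℝ (Fin d))) := by
  by_contra hc
  obtain ⟨f, u₀, hfa, hfc⟩ := geometric_hahn_banach_closed_point
    (convex_convexHull ℝ _) (S.finite_toSet.isClosed_convexHull ℝ) hc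
  set v : EuclideanSpace ℝ (Fin d) := (InnerProductSpace.toDual ℝ _).symm f with hv
  have hvapp : ∀ x, ⟪v, x⟫ = f x := fun x => InnerProductSpace.toDual_symm_apply
  have hS : S.Nonempty := by
    rcases h (EuclideanSpace.single ⟨0, hd⟩ (1:ℝ)) (by
      intro h0
      have := congrArg (fun x => x ⟨0, hd⟩) h0
      simp [EuclideanSpace.single_apply] at this) with ⟨s, hs, -⟩
    exact ⟨s, hs⟩
  obtain ⟨s₀, hs₀⟩ := hS
  have hv0 : v ≠ 0 := by
    intro h0
    have h3 := hfa s₀ (subset_convexHull ℝ _ hs₀)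
    have h1 : f s₀ = 0 := by rw [← hvapp, h0, inner_zero_left]
    have h2 : f c = 0 := by rw [← hvapp, h0, inner_zero_left]
    linarith
  obtain ⟨s, hs, hip⟩ := h v hv0
  have h1 : f s < u₀ := hfa s (subset_convexHull ℝ _ hs)
  have h2 : ⟪v, s - c⟫ = f s - f c := by rw [inner_sub_right, hvapp, hvapp]
  rw [h2] at hip
  linarith

lemma tvAux_step (hd : 1 ≤ d) (S : Finset (EuclideanSpace ℝ (Fin d)))
    (c : EuclideanSpace ℝ (Fin d))
    (hc : c ∈ convexHull ℝ (S : Set (EuclideanSpace ℝ (Fin d)))) :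
    ∃ T : Finset (EuclideanSpace ℝ (Fin d)), T ⊆ S ∧
      c ∈ convexHull ℝ (T : Set (EuclideanSpace ℝ (Fin d))) ∧
      ∀ u : EuclideanSpace ℝ (Fin d), u ≠ 0 →
        (T.filter fun s => 0 ≤ ⟪u, s - c⟫).card ≤ d := by
  classical
  obtain ⟨ι, _inst, z, w, hzS, hai, hw, hw1, hzc⟩ := eq_pos_convex_span_of_mem_convexHull hc
  have hinj : Function.Injective z := hai.injective
  have hfr : Module.finrank ℝ (EuclideanSpace ℝ (Fin d)) = d := finrank_euclideanSpace_fin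
  have hcard : (Finset.univ.image z).card = Fintype.card ι := by
    rw [Finset.card_image_of_injective _ hinj, Finset.card_univ]
  refine ⟨Finset.univ.image z, ?_, ?_, ?_⟩
  · intro x hx
    simp only [Finset.mem_image] at hx
    obtain ⟨i, -, rfl⟩ := hx
    exact hzS (Set.mem_range_self i)
  · have h1 : Finset.univ.centerMass w z ∈
        convexHull ℝ ((Finset.univ.image z : Finset (EuclideanSpace ℝ (Fin d))) :
          Set (EuclideanSpace ℝ (Fin d))) := by
      refine Finset.centerMass_mem_convexHull _ (fun i _ => (hw i).le) (by rw [hw1]; norm_num) ?_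
      intro i _
      simp
    rwa [Finset.centerMass_eq_of_sum_1 _ _ hw1, hzc] at h1
  · intro u hu
    have hsub0 : ∑ i, w i • (z i - c) = 0 := by
      have h1 : ∑ i, w i • (z i - c) = (∑ i, w i • z i) - (∑ i, w i) • c := by
        rw [Finset.sum_smul]
        rw [← Finset.sum_sub_distrib]
        congr 1
        ext i
        rw [smul_sub]
      rw [h1, hzc, hw1, one_smul, sub_self]
    have hsum0 : ∑ i, w i * ⟪u, z i - c⟫ = 0 := by
      have h2 : ∑ i, w i * ⟪u, z i - c⟫ = ⟪u, ∑ i, w i • (z i - c)⟫ := by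
        rw [inner_sum]
        congr 1
        ext i
        rw [real_inner_smul_right]
      rw [h2, hsub0, inner_zero_right]
    by_cases hneg : ∃ i, ⟪u, z i - c⟫ < 0
    · obtain ⟨i0, hi0⟩ := hneg
      have hsubset : (Finset.univ.image z).filter (fun s => 0 ≤ ⟪u, s - c⟫) ⊆
          (Finset.univ.image z).erase (z i0) := by
        intro x hx
        rw [Finset.mem_filter] at hx
        rw [Finset.mem_erase]
        refine ⟨?_, hx.1⟩
        rintro rfl
        exact absurd hx.2 (not_le.mpr hi0)
      have hci : Fintype.card ι ≤ d + 1 := by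
        calc Fintype.card ι ≤
            Module.finrank ℝ (vectorSpan ℝ (Set.range z)) + 1 := hai.card_le_finrank_succ
          _ ≤ d + 1 := by
            have := Submodule.finrank_le (vectorSpan ℝ (Set.range z))
            omega
      calc ((Finset.univ.image z).filter (fun s => 0 ≤ ⟪u, s - c⟫)).card
          ≤ ((Finset.univ.image z).erase (z i0)).card := Finset.card_le_card hsubset
        _ = (Finset.univ.image z).card - 1 := by
            rw [Finset.card_erase_of_mem (by simp)]
        _ ≤ d := by omega
    · push_neg at hneg
      have hzero : ∀ i, ⟪u, z i - c⟫ = 0 := by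
        intro i
        have h3 : ∀ i ∈ Finset.univ, 0 ≤ w i * ⟪u, z i - c⟫ :=
          fun i _ => mul_nonneg (hw i).le (hneg i)
        have h4 := (Finset.sum_eq_zero_iff_of_nonneg h3).mp hsum0 i (Finset.mem_univ i)
        rcases mul_eq_zero.mp h4 with h5 | h5
        · exact absurd h5 (ne_of_gt (hw i))
        · exact h5
      have hmemK : ∀ i, z i - c ∈ (ℝ ∙ u)ᗮ := fun i =>
        Submodule.mem_orthogonal_singleton_iff_inner_right.mpr (hzero i)
      have hvs : vectorSpan ℝ (Set.range z) ≤ (ℝ ∙ u)ᗮ := by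
        rw [vectorSpan]
        rw [Submodule.span_le]
        rintro x ⟨a, ⟨i, rfl⟩, b, ⟨j, rfl⟩, rfl⟩
        show z i - z j ∈ ((ℝ ∙ u)ᗮ : Submodule ℝ (EuclideanSpace ℝ (Fin d)))
        have h8 : z i - z j = (z i - c) - (z j - c) := by abel
        rw [h8]
        exact Submodule.sub_mem _ (hmemK i) (hmemK j)
      haveI : Fact (Module.finrank ℝ (EuclideanSpace ℝ (Fin d)) = (d - 1) + 1) :=
        ⟨by omega⟩
      have hfrK : Module.finrank ℝ ((ℝ ∙ u)ᗮ : Submodule ℝ (EuclideanSpace ℝ (Fin d)))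
          = d - 1 := Submodule.finrank_orthogonal_span_singleton hu
      have hci : Fintype.card ι ≤ d := by
        have h6 := hai.card_le_finrank_succ
        have h7 : Module.finrank ℝ (vectorSpan ℝ (Set.range z)) ≤ d - 1 := by
          rw [← hfrK]
          exact Submodule.finrank_mono hvs
        omega
      calc ((Finset.univ.image z).filter (fun s => 0 ≤ ⟪u, s - c⟫)).card
          ≤ (Finset.univ.image z).card := Finset.card_filter_le _ _
        _ ≤ d := by omega

lemma tvAux_main (hd : 1 ≤ d) (c : EuclideanSpace ℝ (Fin d)) :
    ∀ (n : ℕ) (S : Finset (EuclideanSpace ℝ (Fin d))),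
      (∀ u : EuclideanSpace ℝ (Fin d), u ≠ 0 →
        n * d < (S.filter fun s => 0 ≤ ⟪u, s - c⟫).card + d) →
      ∃ parts : Fin n → Finset (EuclideanSpace ℝ (Fin d)),
        (∀ j, parts j ⊆ S) ∧
        (Pairwise fun j j' => Disjoint (parts j) (parts j')) ∧
        (∀ j, c ∈ convexHull ℝ (parts j : Set (EuclideanSpace ℝ (Fin d)))) := by
  intro n
  induction n with
  | zero =>
      intro S _
      exact ⟨fun j => ∅, fun j => j.elim0, fun i => i.elim0, fun j => j.elim0⟩
  | succ n IH =>
      intro S h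
      classical
      have hne : ∀ u : EuclideanSpace ℝ (Fin d), u ≠ 0 → ∃ s ∈ S, 0 ≤ ⟪u, s - c⟫ := by
        intro u hu
        have h1 := h u hu
        have h2 : 0 < (S.filter fun s => 0 ≤ ⟪u, s - c⟫).card := by
          have : d ≤ (n + 1) * d := by nlinarith
          omega
        obtain ⟨s, hs⟩ := Finset.card_pos.mp h2
        rw [Finset.mem_filter] at hs
        exact ⟨s, hs.1, hs.2⟩
      have hc : c ∈ convexHull ℝ (S : Set (EuclideanSpace ℝ (Fin d))) :=
        tvAux_mem_hull hd S c hne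
      obtain ⟨T, hTS, hThull, hTfilt⟩ := tvAux_step hd S c hc
      have h' : ∀ u : EuclideanSpace ℝ (Fin d), u ≠ 0 →
          n * d < ((S \ T).filter fun s => 0 ≤ ⟪u, s - c⟫).card + d := by
        intro u hu
        have e : (S \ T).filter (fun s => 0 ≤ ⟪u, s - c⟫)
            = S.filter (fun s => 0 ≤ ⟪u, s - c⟫) \ T.filter (fun s => 0 ≤ ⟪u, s - c⟫) := by
          ext x
          simp only [Finset.mem_filter, Finset.mem_sdiff]
          tauto
        have hBA : T.filter (fun s => 0 ≤ ⟪u, s - c⟫) ⊆ S.filter (fun s => 0 ≤ ⟪u, s - c⟫) :=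
          Finset.filter_subset_filter _ hTS
        have ecard : ((S \ T).filter fun s => 0 ≤ ⟪u, s - c⟫).card
            = (S.filter fun s => 0 ≤ ⟪u, s - c⟫).card
              - (T.filter fun s => 0 ≤ ⟪u, s - c⟫).card := by
          rw [e, Finset.card_sdiff_of_subset hBA]
        have h1 := h u hu
        have h2 := hTfilt u hu
        have h3 := Finset.card_le_card hBA
        have h4 : (n + 1) * d = n * d + d := by ring
        omega
      obtain ⟨parts', hsub', hpw', hhull'⟩ := IH (S \ T) h'
      have hdisjT : ∀ i, Disjoint T (parts' i) := by
        intro i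
        rw [Finset.disjoint_left]
        intro x hxT hxp
        exact (Finset.mem_sdiff.mp (hsub' i hxp)).2 hxT
      refine ⟨Fin.cons T parts', ?_, ?_, ?_⟩
      · intro j
        induction j using Fin.cases with
        | zero => simpa using hTS
        | succ j =>
            simp only [Fin.cons_succ]
            exact (hsub' j).trans (Finset.sdiff_subset)
      · intro i j hij
        induction i using Fin.cases with
        | zero =>
            induction j using Fin.cases with
            | zero => exact absurd rfl hij
            | succ j => simpa using hdisjT j
        | succ i =>
            induction j using Fin.cases with
            | zero => simpa using (hdisjT i).symm
            | succ j =>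
                have hij' : i ≠ j := fun hh => hij (congrArg Fin.succ hh)
                simpa using hpw' hij'
      · intro j
        induction j using Fin.cases with
        | zero => simpa using hThull
        | succ j => simpa using hhull' j

/-- If `c` has location depth at least `D` with respect to a finite set `S`
of points in `ℝ^d`, then `c` has Tverberg depth at least `⌈D/d⌉`: there are
`⌈D/d⌉` pairwise disjoint subsets of `S` whose convex hulls all contain `c`. -/
theorem tverberg_depth_ge_location_depth_div_d
    (d D : ℕ) (hd : 1 ≤ d)
    (S : Finset (EuclideanSpace ℝ (Fin d))) (c : EuclideanSpace ℝ (Fin d))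
    (hdepth : ∀ (u : EuclideanSpace ℝ (Fin d)), u ≠ 0 →
      D ≤ {s : EuclideanSpace ℝ (Fin d) | s ∈ S ∧ 0 ≤ ⟪u, s - c⟫}.ncard) :
    ∃ parts : Fin ((D + d - 1) / d) → Finset (EuclideanSpace ℝ (Fin d)),
      (∀ j, parts j ⊆ S) ∧
      (Pairwise fun j j' => Disjoint (parts j) (parts j')) ∧
      (∀ j, c ∈ convexHull ℝ (parts j : Set (EuclideanSpace ℝ (Fin d)))) := by
  classical
  apply tvAux_main hd c ((D + d - 1) / d) S
  intro u hu
  have h1 := hdepth u hu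
  have e : {s : EuclideanSpace ℝ (Fin d) | s ∈ S ∧ 0 ≤ ⟪u, s - c⟫}
      = ((S.filter fun s => 0 ≤ ⟪u, s - c⟫ : Finset (EuclideanSpace ℝ (Fin d))) :
        Set (EuclideanSpace ℝ (Fin d))) := by
    ext x
    simp [Finset.mem_filter]
  rw [e, Set.ncard_coe_finset] at h1
  have h2 : (D + d - 1) / d * d ≤ D + d - 1 := Nat.div_mul_le_self _ _
  omega
end

section
/- (Birch) Let S be a finite set of 3k points in R^2 (k ≥ 1) and let x be a center point of S, i.e., x has location depth at least k with respect to S. Then x is a Tverberg point of S: there exists a partition of S into k subsets, each of size 3, such that x lies in the convex hull of each subset. -/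
set_option maxHeartbeats 1600000

open scoped RealInnerProductSpace Classical

open Real

noncomputable section
abbrev E2 := EuclideanSpace ℝ (Fin 2)

def toC (v : E2) : ℂ := ⟨v 0, v 1⟩

lemma toC_ne_zero {v : E2} (hv : v ≠ 0) : toC v ≠ 0 := by
  intro h
  apply hv
  have h0 : (toC v).re = 0 := by rw [h]; rfl
  have h1 : (toC v).im = 0 := by rw [h]; rfl
  ext i
  fin_cases i
  · exact h0
  · exact h1

lemma inner_eq_re_conj_mul (u v : E2) :
    ⟪u, v⟫ = ((starRingEnd ℂ) (toC u) * toC v).re := by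
  simp [PiLp.inner_apply, RCLike.inner_apply, Fin.sum_univ_two, toC, Complex.mul_re]; ring

lemma re_conj_mul_eq (ζ z : ℂ) :
    ((starRingEnd ℂ) ζ * z).re
      = ‖ζ‖ * ‖z‖ * Real.cos (z.arg - ζ.arg) := by
  by_cases hζ : ζ = 0
  · simp [hζ]
  by_cases hz : z = 0
  · simp [hz]
  have hζ' : (‖ζ‖ : ℝ) ≠ 0 := by simpa using hζ
  have hz' : (‖z‖ : ℝ) ≠ 0 := by simpa using hz
  rw [Real.cos_sub, Complex.cos_arg hz, Complex.sin_arg, Complex.cos_arg hζ,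
    Complex.sin_arg, Complex.mul_re]
  field_simp
  simp only [Complex.conj_re, Complex.conj_im]; ring

lemma inner_polar (u : E2) (s x : E2) :
    ⟪u, s - x⟫ = ‖toC u‖ * ‖toC (s - x)‖ *
      Real.cos ((toC (s - x)).arg - (toC u).arg) := by
  rw [inner_eq_re_conj_mul, re_conj_mul_eq]

lemma sep_lemma {s : Finset E2} {x : E2} (h : x ∉ convexHull ℝ (↑s : Set E2)) :
    ∃ u : E2, u ≠ 0 ∧ ∀ y ∈ s, ⟪u, y - x⟫ < 0 := by
  rcases s.eq_empty_or_nonempty with rfl | ⟨y₀, hy₀⟩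
  · refine ⟨EuclideanSpace.single 0 1, fun h0 => ?_, by simp⟩
    have : (EuclideanSpace.single (0:Fin 2) (1:ℝ)) 0 = 0 := by rw [h0]; rfl
    simp at this
  have hconv : Convex ℝ (convexHull ℝ (↑s : Set E2)) := convex_convexHull ℝ _
  have hclosed : IsClosed (convexHull ℝ (↑s : Set E2)) :=
    (s.finite_toSet.isCompact_convexHull ℝ).isClosed
  obtain ⟨f, α, hfx, hfb⟩ := geometric_hahn_banach_point_closed hconv hclosed h
  set w := (InnerProductSpace.toDual ℝ E2).symm f with hw
  have hwy : ∀ y, ⟪w, y⟫ = f y := fun y => InnerProductSpace.toDual_symm_apply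
  have hmem : ∀ y ∈ s, α < f y := fun y hy =>
    hfb y (subset_convexHull ℝ _ (by exact_mod_cast hy))
  refine ⟨-w, ?_, ?_⟩
  · intro h0
    have hw0 : w = 0 := by simpa using congrArg Neg.neg h0
    have h1 : f x < f y₀ := lt_trans hfx (hmem y₀ hy₀)
    have h2 : ∀ y, f y = 0 := by
      intro y; rw [← hwy, hw0, inner_zero_left]
    rw [h2 x, h2 y₀] at h1
    exact lt_irrefl _ h1
  · intro y hy
    have h1 : α < f y := hmem y hy
    have : ⟪-w, y - x⟫ = -(f y) + f x := by
      rw [inner_neg_left, inner_sub_right, hwy, hwy]; ring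
    rw [this]
    linarith

lemma exists_sorted_listing {α : Type*} (S : Finset α) (f : α → ℝ) :
    ∃ l : List α, l.length = S.card ∧ l.Nodup ∧ (∀ s, s ∈ l ↔ s ∈ S) ∧
      l.Pairwise (fun a b => f a ≤ f b) := by
  haveI : Std.Total (fun a b : α => f a ≤ f b) := ⟨fun a b => le_total _ _⟩
  haveI : IsTrans α (fun a b => f a ≤ f b) := ⟨fun a b c => le_trans⟩
  refine ⟨List.insertionSort (fun a b => f a ≤ f b) S.toList, ?_, ?_, ?_, ?_⟩
  · rw [(List.perm_insertionSort _ _).length_eq, Finset.length_toList]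
  · exact ((List.perm_insertionSort _ _).nodup_iff).mpr S.nodup_toList
  · intro s
    rw [(List.perm_insertionSort _ _).mem_iff, Finset.mem_toList]
  · exact List.pairwise_insertionSort _ _

lemma card_lt_bound' {n a : ℕ} (B : Finset (Fin n))
    (h : ∀ i ∈ B, (i : ℕ) < a) :
    B.card ≤ a := by
  calc B.card
      ≤ (Finset.range a).card := by
        refine Finset.card_le_card_of_injOn (fun i => (i : ℕ)) ?_ ?_
        · intro i hi
          simp [h i hi]
        · intro i _ j _ hij
          exact Fin.ext hij
    _ = a := Finset.card_range a

lemma card_mem_Ioo' {n a b : ℕ} (B : Finset (Fin n))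
    (h : ∀ i ∈ B, a < (i : ℕ) ∧ (i : ℕ) < b) :
    B.card ≤ b - a - 1 := by
  calc B.card
      ≤ (Finset.Ioo a b).card := by
        refine Finset.card_le_card_of_injOn (fun i => (i : ℕ)) ?_ ?_
        · intro i hi
          simp [Finset.mem_Ioo, (h i hi).1, (h i hi).2]
        · intro i _ j _ hij
          exact Fin.ext hij
    _ = b - a - 1 := by rw [Nat.card_Ioo]

lemma cos_nonneg_cases {s : ℝ} (h1 : -(2*π) < s) (h2 : s < 2*π)
    (hc : 0 ≤ Real.cos s) :
    (-(π/2) ≤ s ∧ s ≤ π/2) ∨ 3*π/2 ≤ s ∨ s ≤ -(3*π/2) := by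
  by_contra hcon
  push_neg at hcon
  obtain ⟨hmid, hhigh, hlow⟩ := hcon
  have hpi := Real.pi_pos
  rcases le_or_gt s (π/2) with hs | hs
  · have hs' : s < -(π/2) := by
      by_contra hx
      push_neg at hx
      exact absurd (hmid hx) (not_lt.mpr hs)
    have : Real.cos (-s) < 0 :=
      Real.cos_neg_of_pi_div_two_lt_of_lt (by linarith) (by linarith)
    rw [Real.cos_neg] at this
    linarith
  · have : Real.cos s < 0 :=
      Real.cos_neg_of_pi_div_two_lt_of_lt (by linarith) (by linarith)
    linarith

lemma cos_neg_cases {s : ℝ} (h1 : -(2*π) < s) (h2 : s < 2*π)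
    (hc : Real.cos s < 0) :
    (π/2 < s ∧ s < 3*π/2) ∨ (-(3*π/2) < s ∧ s < -(π/2)) := by
  have hpi := Real.pi_pos
  by_contra hcon
  push_neg at hcon
  obtain ⟨hA, hB⟩ := hcon
  have : 0 ≤ Real.cos s := by
    rcases le_or_gt s (-(3*π/2)) with h | h
    · have heq : Real.cos (s + 2*π) = Real.cos s := by
        rw [Real.cos_add, Real.cos_two_pi, Real.sin_two_pi]; ring
      rw [← heq]
      exact Real.cos_nonneg_of_mem_Icc ⟨by linarith, by linarith⟩
    · rcases le_or_gt s (π/2) with h'' | h''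
      · exact Real.cos_nonneg_of_mem_Icc ⟨hB h, h''⟩
      · have h3 : 3*π/2 ≤ s := hA h''
        have heq : Real.cos (s - 2*π) = Real.cos s := by
          rw [Real.cos_sub, Real.cos_two_pi, Real.sin_two_pi]; ring
        rw [← heq]
        exact Real.cos_nonneg_of_mem_Icc ⟨by linarith, by linarith⟩
  linarith

lemma interval_avoid {k j : ℕ} (hj : j < k) (B : Finset (Fin (3*k)))
    (hconv : ∀ i1 i2 i3 : Fin (3*k), (i1 : ℕ) ≤ i2 → (i2 : ℕ) ≤ i3 →
      i1 ∈ B → i3 ∈ B → i2 ∈ B)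
    (ha : (⟨j, by omega⟩ : Fin (3*k)) ∉ B) (hb : (⟨j + k, by omega⟩ : Fin (3*k)) ∉ B)
    (hc : (⟨j + 2*k, by omega⟩ : Fin (3*k)) ∉ B) :
    B.card ≤ k - 1 := by
  have step : ∀ t : ℕ, (ht : t < 3*k) → (⟨t, ht⟩ : Fin (3*k)) ∉ B →
      (¬ ∀ i ∈ B, (i : ℕ) < t) → ∀ i ∈ B, t < (i : ℕ) := by
    intro t ht hPt hnot i hPi
    push_neg at hnot
    obtain ⟨i1, hPi1, hi1⟩ := hnot
    rcases lt_trichotomy (i : ℕ) t with h | h | h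
    · exact absurd (hconv i ⟨t, ht⟩ i1 (le_of_lt h) hi1 hPi hPi1) hPt
    · exact absurd (by convert hPi using 2; exact h.symm) hPt
    · exact h
  by_cases h1 : ∀ i ∈ B, (i : ℕ) < j
  · exact le_trans (card_lt_bound' B h1) (by omega)
  have h1' := step j (by omega) ha h1
  by_cases h2 : ∀ i ∈ B, (i : ℕ) < j + k
  · exact le_trans (card_mem_Ioo' B (fun i hi => ⟨h1' i hi, h2 i hi⟩)) (by omega)
  have h2' := step (j + k) (by omega) hb h2
  by_cases h3 : ∀ i ∈ B, (i : ℕ) < j + 2*k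
  · exact le_trans (card_mem_Ioo' B (fun i hi => ⟨h2' i hi, h3 i hi⟩)) (by omega)
  have h3' := step (j + 2*k) (by omega) hc h3
  exact le_trans (card_mem_Ioo' B (fun i hi => ⟨h3' i hi, i.isLt⟩)) (by omega)

lemma birch_notmem (k : ℕ) (hk : 1 ≤ k) (S : Finset E2) (hcard : S.card = 3 * k)
    (x : E2) (hx : x ∉ S)
    (hdepth : ∀ u : E2, u ≠ 0 → k ≤ {s : E2 | s ∈ S ∧ 0 ≤ ⟪u, s - x⟫}.ncard) :
    ∃ parts : Fin k → Finset E2,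
      (∀ j, parts j ⊆ S) ∧
      (Pairwise fun j j' => Disjoint (parts j) (parts j')) ∧
      (Finset.univ.biUnion parts = S) ∧
      (∀ j, (parts j).card = 3) ∧
      (∀ j, x ∈ convexHull ℝ (parts j : Set E2)) := by
  have hk0 : 0 < k := hk
  obtain ⟨l, hlen, hnodup, hmeml, hsort⟩ :=
    exists_sorted_listing S (fun s => (toC (s - x)).arg)
  rw [hcard] at hlen
  set θ : E2 → ℝ := fun s => (toC (s - x)).arg with hθ
  set g : Fin (3*k) → E2 := fun i => l.get (Fin.cast hlen.symm i) with hg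
  have hgmem : ∀ i, g i ∈ S := fun i => (hmeml _).1 (l.get_mem _)
  have hginj : Function.Injective g := by
    intro i i' h
    have h2 := List.nodup_iff_injective_get.1 hnodup h
    have h3 : ((Fin.cast hlen.symm i) : ℕ) = ((Fin.cast hlen.symm i') : ℕ) :=
      congrArg Fin.val h2
    exact Fin.ext h3
  have hmono : ∀ i i' : Fin (3*k), (i : ℕ) ≤ (i' : ℕ) → θ (g i) ≤ θ (g i') := by
    intro i i' hle
    rcases eq_or_lt_of_le hle with heq | hlt
    · have : i = i' := Fin.ext heq
      subst this
      exact le_rfl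
    · exact hsort.rel_get_of_lt hlt
  have hgsurj : ∀ s ∈ S, ∃ i, g i = s := by
    intro s hs
    obtain ⟨n, hn⟩ := List.mem_iff_get.1 ((hmeml s).2 hs)
    refine ⟨Fin.cast hlen n, ?_⟩
    exact hn
  -- the parts
  set parts : Fin k → Finset E2 := fun j =>
    {g ⟨(j : ℕ), by have := j.isLt; omega⟩,
     g ⟨(j : ℕ) + k, by have := j.isLt; omega⟩,
     g ⟨(j : ℕ) + 2*k, by have := j.isLt; omega⟩} with hparts
  have hmempart : ∀ (j : Fin k) (s : E2), s ∈ parts j ↔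
      s = g ⟨(j : ℕ), by have := j.isLt; omega⟩ ∨
      s = g ⟨(j : ℕ) + k, by have := j.isLt; omega⟩ ∨
      s = g ⟨(j : ℕ) + 2*k, by have := j.isLt; omega⟩ := by
    intro j s
    simp [hparts]
  refine ⟨parts, ?_, ?_, ?_, ?_, ?_⟩
  · -- subset
    intro j s hs
    rcases (hmempart j s).1 hs with h | h | h <;> (rw [h]; exact hgmem _)
  · -- pairwise disjoint
    intro j j' hne
    have hvalne : (j : ℕ) ≠ (j' : ℕ) := fun h => hne (Fin.ext h)
    rw [Finset.disjoint_left]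
    intro s hsj hsj'
    have h1 := (hmempart j s).1 hsj
    have h2 := (hmempart j' s).1 hsj'
    have hjlt := j.isLt
    have hj'lt := j'.isLt
    rcases h1 with h1 | h1 | h1 <;> rcases h2 with h2 | h2 | h2 <;>
      (rw [h1] at h2; have h4 := hginj h2; simp only [Fin.mk.injEq] at h4; omega)
  · -- biUnion
    ext s
    constructor
    · intro hs
      obtain ⟨j, _, hmem⟩ := Finset.mem_biUnion.1 hs
      rcases (hmempart j s).1 hmem with h | h | h <;> (rw [h]; exact hgmem _)
    · intro hs
      obtain ⟨i, hi⟩ := hgsurj s hs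
      have hiv := i.isLt
      have hm0 : (i : ℕ) % k + k * ((i : ℕ) / k) = (i : ℕ) := Nat.mod_add_div _ _
      have hm1 : (i : ℕ) % k < k := Nat.mod_lt _ hk0
      have hm3 : (i : ℕ) / k < 3 := by
        rw [Nat.div_lt_iff_lt_mul hk0]
        omega
      refine Finset.mem_biUnion.2 ⟨⟨(i : ℕ) % k, hm1⟩, Finset.mem_univ _, ?_⟩
      refine (hmempart _ _).2 ?_
      interval_cases h : ((i : ℕ) / k)
      · left
        rw [← hi]
        exact congrArg g (Fin.ext (by simp; omega))
      · right; left
        rw [← hi]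
        exact congrArg g (Fin.ext (by simp; omega))
      · right; right
        rw [← hi]
        exact congrArg g (Fin.ext (by simp; omega))
  · -- card
    intro j
    have hjlt := j.isLt
    refine Finset.card_eq_three.mpr ⟨_, _, _, ?_, ?_, ?_, rfl⟩ <;>
      (intro h; have h4 := hginj h; simp only [Fin.mk.injEq] at h4; omega)
  · -- hull
    intro j
    by_contra hcon
    obtain ⟨u, hu0, hneg⟩ := sep_lemma hcon
    have hjlt := j.isLt
    have hpi := Real.pi_pos
    have pfa : (j:ℕ) < 3*k := by omega
    have pfb : (j:ℕ) + k < 3*k := by omega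
    have pfc : (j:ℕ) + 2*k < 3*k := by omega
    have hζpos : 0 < ‖toC u‖ := by
      rw [norm_pos_iff]
      exact toC_ne_zero hu0
    have habs : ∀ i : Fin (3*k), 0 < ‖toC (g i - x)‖ := by
      intro i
      rw [norm_pos_iff]
      apply toC_ne_zero
      exact sub_ne_zero_of_ne (fun h => hx (h ▸ hgmem i))
    have hθub : ∀ i : Fin (3*k), (toC (g i - x)).arg ≤ π := fun i => Complex.arg_le_pi _
    have hθlb : ∀ i : Fin (3*k), -π < (toC (g i - x)).arg := fun i => Complex.neg_pi_lt_arg _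
    have hγub : (toC u).arg ≤ π := Complex.arg_le_pi _
    have hγlb : -π < (toC u).arg := Complex.neg_pi_lt_arg _
    have hrlb : ∀ i : Fin (3*k), -(2*π) < (toC (g i - x)).arg - (toC u).arg := by
      intro i; have := hθlb i; linarith
    have hrub : ∀ i : Fin (3*k), (toC (g i - x)).arg - (toC u).arg < 2*π := by
      intro i; have := hθub i; linarith
    set P : Fin (3*k) → Prop := fun i => 0 ≤ ⟪u, g i - x⟫ with hP
    have hcount : k ≤ (Finset.univ.filter P).card := by
      have h1 := hdepth u hu0
      have h2 : {s : E2 | s ∈ S ∧ 0 ≤ ⟪u, s - x⟫}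
          = ↑(S.filter (fun s => 0 ≤ ⟪u, s - x⟫)) := by
        ext s; simp
      rw [h2, Set.ncard_coe_finset] at h1
      have h3 : S.filter (fun s => 0 ≤ ⟪u, s - x⟫) ⊆ (Finset.univ.filter P).image g := by
        intro s hs
        rw [Finset.mem_filter] at hs
        obtain ⟨i, hi⟩ := hgsurj s hs.1
        refine Finset.mem_image.2 ⟨i, ?_, hi⟩
        rw [Finset.mem_filter]
        refine ⟨Finset.mem_univ _, ?_⟩
        show 0 ≤ ⟪u, g i - x⟫
        rw [hi]
        exact hs.2
      calc k ≤ _ := h1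
        _ ≤ ((Finset.univ.filter P).image g).card := Finset.card_le_card h3
        _ ≤ (Finset.univ.filter P).card := Finset.card_image_le
    have hPcos : ∀ i : Fin (3*k), P i →
        0 ≤ Real.cos ((toC (g i - x)).arg - (toC u).arg) := by
      intro i hPi
      have hPi' : 0 ≤ ⟪u, g i - x⟫ := hPi
      rw [inner_polar] at hPi'
      by_contra hcc
      push_neg at hcc
      have hneg' : ‖toC u‖ * ‖toC (g i - x)‖ *
          Real.cos ((toC (g i - x)).arg - (toC u).arg) < 0 :=
        mul_neg_of_pos_of_neg (mul_pos hζpos (habs i)) hcc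
      linarith
    have hcosP : ∀ i : Fin (3*k),
        0 ≤ Real.cos ((toC (g i - x)).arg - (toC u).arg) → P i := by
      intro i hc
      show 0 ≤ ⟪u, g i - x⟫
      rw [inner_polar]
      exact mul_nonneg (mul_nonneg hζpos.le (habs i).le) hc
    have hcostri : ∀ (t : ℕ) (ht : t < 3*k), g ⟨t, ht⟩ ∈ parts j →
        Real.cos ((toC (g ⟨t, ht⟩ - x)).arg - (toC u).arg) < 0 := by
      intro t ht hmem
      have h5 := hneg _ hmem
      rw [inner_polar] at h5
      by_contra hcc
      push_neg at hcc
      have h6 : 0 ≤ ‖toC u‖ * ‖toC (g ⟨t, ht⟩ - x)‖ *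
          Real.cos ((toC (g ⟨t, ht⟩ - x)).arg - (toC u).arg) :=
        mul_nonneg (mul_nonneg hζpos.le (habs ⟨t, ht⟩).le) hcc
      linarith
    have hnotPa : ¬ P ⟨(j:ℕ), pfa⟩ := fun hp => absurd (hPcos _ hp)
      (not_le.mpr (hcostri _ pfa ((hmempart j _).2 (Or.inl rfl))))
    have hnotPb : ¬ P ⟨(j:ℕ) + k, pfb⟩ := fun hp => absurd (hPcos _ hp)
      (not_le.mpr (hcostri _ pfb ((hmempart j _).2 (Or.inr (Or.inl rfl)))))
    have hnotPc : ¬ P ⟨(j:ℕ) + 2*k, pfc⟩ := fun hp => absurd (hPcos _ hp)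
      (not_le.mpr (hcostri _ pfc ((hmempart j _).2 (Or.inr (Or.inr rfl)))))
    have htri : ∀ (t : ℕ) (ht : t < 3*k), g ⟨t, ht⟩ ∈ parts j →
        (π/2 < (toC (g ⟨t,ht⟩ - x)).arg - (toC u).arg ∧
          (toC (g ⟨t,ht⟩ - x)).arg - (toC u).arg < 3*π/2) ∨
        (-(3*π/2) < (toC (g ⟨t,ht⟩ - x)).arg - (toC u).arg ∧
          (toC (g ⟨t,ht⟩ - x)).arg - (toC u).arg < -(π/2)) :=
      fun t ht hmem => cos_neg_cases (hrlb _) (hrub _) (hcostri t ht hmem)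
    have hta := htri (j:ℕ) pfa ((hmempart j _).2 (Or.inl rfl))
    have htb := htri ((j:ℕ) + k) pfb ((hmempart j _).2 (Or.inr (Or.inl rfl)))
    have htc := htri ((j:ℕ) + 2*k) pfc ((hmempart j _).2 (Or.inr (Or.inr rfl)))
    rcases lt_or_ge (π/2) ((toC u).arg) with hγ1 | hγ1
    · -- γ > π/2 : B ⊆ D ∪ U
      have hta' : -(3*π/2) < (toC (g ⟨(j:ℕ),pfa⟩ - x)).arg - (toC u).arg ∧
          (toC (g ⟨(j:ℕ),pfa⟩ - x)).arg - (toC u).arg < -(π/2) := by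
        rcases hta with ⟨h1, _⟩ | h
        · exfalso; linarith [hθub ⟨(j:ℕ),pfa⟩]
        · exact h
      have htc' : -(3*π/2) < (toC (g ⟨(j:ℕ)+2*k,pfc⟩ - x)).arg - (toC u).arg ∧
          (toC (g ⟨(j:ℕ)+2*k,pfc⟩ - x)).arg - (toC u).arg < -(π/2) := by
        rcases htc with ⟨h1, _⟩ | h
        · exfalso; linarith [hθub ⟨(j:ℕ)+2*k,pfc⟩]
        · exact h
      have hsplit : ∀ i : Fin (3*k), P i →
          ((i:ℕ) < (j:ℕ)) ∨ ((j:ℕ) + 2*k < (i:ℕ)) := by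
        intro i hPi
        rcases cos_nonneg_cases (hrlb i) (hrub i) (hPcos i hPi) with ⟨hm1, hm2⟩ | hh | hl
        · right
          by_contra hle
          push_neg at hle
          have h6 := hmono i ⟨(j:ℕ)+2*k, pfc⟩ hle
          linarith [htc'.2]
        · exfalso; linarith [hθub i]
        · left
          by_contra hge
          push_neg at hge
          have h6 := hmono ⟨(j:ℕ), pfa⟩ i hge
          linarith [hta'.1]
      have hsub : Finset.univ.filter P ⊆
          (Finset.univ.filter (fun i : Fin (3*k) => (i:ℕ) < (j:ℕ))) ∪
          (Finset.univ.filter (fun i : Fin (3*k) => (j:ℕ) + 2*k < (i:ℕ))) := by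
        intro i hi
        rw [Finset.mem_filter] at hi
        rcases hsplit i hi.2 with h | h
        · exact Finset.mem_union_left _ (Finset.mem_filter.2 ⟨Finset.mem_univ _, h⟩)
        · exact Finset.mem_union_right _ (Finset.mem_filter.2 ⟨Finset.mem_univ _, h⟩)
      have hc1 := card_lt_bound' (Finset.univ.filter (fun i : Fin (3*k) => (i:ℕ) < (j:ℕ)))
        (fun i h => (Finset.mem_filter.1 h).2)
      have hc2 := card_mem_Ioo' (Finset.univ.filter (fun i : Fin (3*k) => (j:ℕ) + 2*k < (i:ℕ)))
        (fun i h => ⟨(Finset.mem_filter.1 h).2, i.isLt⟩)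
      have := Finset.card_le_card hsub
      have := Finset.card_union_le
        (Finset.univ.filter (fun i : Fin (3*k) => (i:ℕ) < (j:ℕ)))
        (Finset.univ.filter (fun i : Fin (3*k) => (j:ℕ) + 2*k < (i:ℕ)))
      omega
    rcases le_or_gt ((toC u).arg) (-(π/2)) with hγ2 | hγ2
    · -- γ ≤ -π/2
      have hta' : π/2 < (toC (g ⟨(j:ℕ),pfa⟩ - x)).arg - (toC u).arg ∧
          (toC (g ⟨(j:ℕ),pfa⟩ - x)).arg - (toC u).arg < 3*π/2 := by
        rcases hta with h | ⟨_, h2⟩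
        · exact h
        · exfalso; linarith [hθlb ⟨(j:ℕ),pfa⟩]
      have htc' : π/2 < (toC (g ⟨(j:ℕ)+2*k,pfc⟩ - x)).arg - (toC u).arg ∧
          (toC (g ⟨(j:ℕ)+2*k,pfc⟩ - x)).arg - (toC u).arg < 3*π/2 := by
        rcases htc with h | ⟨_, h2⟩
        · exact h
        · exfalso; linarith [hθlb ⟨(j:ℕ)+2*k,pfc⟩]
      have hsplit : ∀ i : Fin (3*k), P i →
          ((i:ℕ) < (j:ℕ)) ∨ ((j:ℕ) + 2*k < (i:ℕ)) := by
        intro i hPi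
        rcases cos_nonneg_cases (hrlb i) (hrub i) (hPcos i hPi) with ⟨hm1, hm2⟩ | hh | hl
        · left
          by_contra hge
          push_neg at hge
          have h6 := hmono ⟨(j:ℕ), pfa⟩ i hge
          linarith [hta'.1]
        · right
          by_contra hle
          push_neg at hle
          have h6 := hmono i ⟨(j:ℕ)+2*k, pfc⟩ hle
          linarith [htc'.2]
        · exfalso; linarith [hθlb i]
      have hsub : Finset.univ.filter P ⊆
          (Finset.univ.filter (fun i : Fin (3*k) => (i:ℕ) < (j:ℕ))) ∪
          (Finset.univ.filter (fun i : Fin (3*k) => (j:ℕ) + 2*k < (i:ℕ))) := by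
        intro i hi
        rw [Finset.mem_filter] at hi
        rcases hsplit i hi.2 with h | h
        · exact Finset.mem_union_left _ (Finset.mem_filter.2 ⟨Finset.mem_univ _, h⟩)
        · exact Finset.mem_union_right _ (Finset.mem_filter.2 ⟨Finset.mem_univ _, h⟩)
      have hc1 := card_lt_bound' (Finset.univ.filter (fun i : Fin (3*k) => (i:ℕ) < (j:ℕ)))
        (fun i h => (Finset.mem_filter.1 h).2)
      have hc2 := card_mem_Ioo' (Finset.univ.filter (fun i : Fin (3*k) => (j:ℕ) + 2*k < (i:ℕ)))
        (fun i h => ⟨(Finset.mem_filter.1 h).2, i.isLt⟩)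
      have := Finset.card_le_card hsub
      have := Finset.card_union_le
        (Finset.univ.filter (fun i : Fin (3*k) => (i:ℕ) < (j:ℕ)))
        (Finset.univ.filter (fun i : Fin (3*k) => (j:ℕ) + 2*k < (i:ℕ)))
      omega
    · -- -π/2 < γ ≤ π/2 : middle interval case
      have hmid : ∀ i : Fin (3*k), P i →
          -(π/2) ≤ (toC (g i - x)).arg - (toC u).arg ∧
          (toC (g i - x)).arg - (toC u).arg ≤ π/2 := by
        intro i hPi
        rcases cos_nonneg_cases (hrlb i) (hrub i) (hPcos i hPi) with h | hh | hl
        · exact h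
        · exfalso; linarith [hθub i]
        · exfalso; linarith [hθlb i]
      have hconv : ∀ i1 i2 i3 : Fin (3*k), (i1 : ℕ) ≤ i2 → (i2 : ℕ) ≤ i3 →
          P i1 → P i3 → P i2 := by
        intro i1 i2 i3 h12 h23 hp1 hp3
        have hm1 := hmid i1 hp1
        have hm3 := hmid i3 hp3
        have e12 := hmono i1 i2 h12
        have e23 := hmono i2 i3 h23
        apply hcosP
        apply Real.cos_nonneg_of_mem_Icc
        constructor
        · linarith [hm1.1]
        · linarith [hm3.2]
      have hfinal := interval_avoid j.isLt (Finset.univ.filter P)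
        (fun i1 i2 i3 h12 h23 hm1 hm3 => Finset.mem_filter.2
          ⟨Finset.mem_univ _, hconv i1 i2 i3 h12 h23 (Finset.mem_filter.1 hm1).2
            (Finset.mem_filter.1 hm3).2⟩)
        (fun hm => hnotPa (Finset.mem_filter.1 hm).2)
        (fun hm => hnotPb (Finset.mem_filter.1 hm).2)
        (fun hm => hnotPc (Finset.mem_filter.1 hm).2)
      omega

lemma inner_coords (u v : E2) : ⟪u, v⟫ = u 0 * v 0 + u 1 * v 1 := by
  simp [PiLp.inner_apply, RCLike.inner_apply, Fin.sum_univ_two]; ring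

def rotE (v : E2) : E2 := WithLp.toLp 2 (fun i : Fin 2 => if i = 0 then -(v 1) else v 0)

lemma rotE_apply0 (v : E2) : rotE v 0 = -(v 1) := by simp [rotE]
lemma rotE_apply1 (v : E2) : rotE v 1 = v 0 := by simp [rotE]

lemma inner_decomp {uu : E2} (h : uu 0 * uu 0 + uu 1 * uu 1 = 1) (u v : E2) :
    ⟪u, v⟫ = ⟪u, rotE uu⟫ * ⟪rotE uu, v⟫ + ⟪u, uu⟫ * ⟪uu, v⟫ := by
  rw [inner_coords u v, inner_coords u (rotE uu), inner_coords (rotE uu) v,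
    inner_coords u uu, inner_coords uu v, rotE_apply0, rotE_apply1]
  linear_combination (-(u 0 * v 0 + u 1 * v 1)) * h

lemma ncard_setOf_filter (F : Finset E2) (x u : E2) :
    {s : E2 | s ∈ F ∧ 0 ≤ ⟪u, s - x⟫}.ncard
      = (F.filter (fun s => 0 ≤ ⟪u, s - x⟫)).card := by
  rw [show {s : E2 | s ∈ F ∧ 0 ≤ ⟪u, s - x⟫}
      = ↑(F.filter (fun s => 0 ≤ ⟪u, s - x⟫)) from by ext s; simp,
    Set.ncard_coe_finset]

lemma pair_removal (k : ℕ) (hk : 2 ≤ k) (S : Finset E2) (hcard : S.card = 3 * k)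
    (x : E2) (hx : x ∈ S)
    (hdepth : ∀ u : E2, u ≠ 0 → k ≤ {s : E2 | s ∈ S ∧ 0 ≤ ⟪u, s - x⟫}.ncard) :
    ∃ p q : E2, p ∈ S ∧ q ∈ S ∧ p ≠ x ∧ q ≠ x ∧ p ≠ q ∧
      ∀ u : E2, u ≠ 0 →
        k - 1 ≤ {s : E2 | s ∈ ((S.erase x).erase p).erase q ∧ 0 ≤ ⟪u, s - x⟫}.ncard := by
  classical
  set A := S.erase x with hA
  have hAcard : A.card + 1 = 3 * k := by
    rw [hA, Finset.card_erase_of_mem hx, hcard]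
    omega
  have hdepthA : ∀ u : E2, u ≠ 0 →
      k - 1 ≤ (A.filter (fun s => 0 ≤ ⟪u, s - x⟫)).card := by
    intro u hu
    have h1 := hdepth u hu
    rw [ncard_setOf_filter] at h1
    have hxin : x ∈ S.filter (fun s => 0 ≤ ⟪u, s - x⟫) := by
      rw [Finset.mem_filter]
      exact ⟨hx, by simp⟩
    have h2 : (A.filter (fun s => 0 ≤ ⟪u, s - x⟫)).card + 1
        = (S.filter (fun s => 0 ≤ ⟪u, s - x⟫)).card := by
      rw [hA, Finset.filter_erase, Finset.card_erase_of_mem hxin]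
      have : 1 ≤ (S.filter (fun s => 0 ≤ ⟪u, s - x⟫)).card :=
        Finset.card_pos.2 ⟨x, hxin⟩
      omega
    omega
  -- the minimum halfplane count
  have hne : ∃ c : ℕ, ∃ u : E2, u ≠ 0 ∧ (A.filter (fun s => 0 ≤ ⟪u, s - x⟫)).card = c := by
    refine ⟨_, EuclideanSpace.single 0 1, fun h0 => ?_, rfl⟩
    have : (EuclideanSpace.single (0 : Fin 2) (1:ℝ)) 0 = 0 := by rw [h0]; rfl
    simp at this
  set m := sInf {c : ℕ | ∃ u : E2, u ≠ 0 ∧ (A.filter (fun s => 0 ≤ ⟪u, s - x⟫)).card = c} with hm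
  obtain ⟨u₀, hu₀ne, hu₀card⟩ : ∃ u : E2, u ≠ 0 ∧ (A.filter (fun s => 0 ≤ ⟪u, s - x⟫)).card = m := by
    have := Nat.sInf_mem (s := {c : ℕ | ∃ u : E2, u ≠ 0 ∧ (A.filter (fun s => 0 ≤ ⟪u, s - x⟫)).card = c}) ⟨_, hne.choose_spec⟩
    exact this
  have hmle : ∀ u : E2, u ≠ 0 → m ≤ (A.filter (fun s => 0 ≤ ⟪u, s - x⟫)).card := by
    intro u hu
    exact Nat.sInf_le ⟨u, hu, rfl⟩
  have hmge : k - 1 ≤ m := by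
    rw [← hu₀card]
    exact hdepthA u₀ hu₀ne
  by_cases hbig : k + 1 ≤ m
  · -- any two distinct points of A work
    have h2card : 1 < A.card := by omega
    obtain ⟨p, hp, q, hq, hpq⟩ := Finset.one_lt_card.1 h2card
    refine ⟨p, q, (Finset.mem_erase.1 hp).2, (Finset.mem_erase.1 hq).2,
      (Finset.mem_erase.1 hp).1, (Finset.mem_erase.1 hq).1, hpq, ?_⟩
    intro u hu
    rw [ncard_setOf_filter]
    rw [Finset.filter_erase, Finset.filter_erase]
    have e1 := Finset.pred_card_le_card_erase
      (s := (A.filter (fun s => 0 ≤ ⟪u, s - x⟫)).erase p) (a := q)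
    have e2 := Finset.pred_card_le_card_erase
      (s := A.filter (fun s => 0 ≤ ⟪u, s - x⟫)) (a := p)
    have := hmle u hu
    omega
  · -- m ≤ k : choose the pair using the sorted order on the open halfplane
    push_neg at hbig
    have hbig' : m ≤ k := by omega
    -- normalize u₀ to a unit vector
    have hnormpos : 0 < ‖u₀‖ := norm_pos_iff.2 hu₀ne
    set uu : E2 := ‖u₀‖⁻¹ • u₀ with huu
    have huune : uu ≠ 0 := smul_ne_zero (by positivity) hu₀ne
    have hiff0 : ∀ v : E2, (0 ≤ ⟪uu, v⟫ ↔ 0 ≤ ⟪u₀, v⟫) := by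
      intro v
      rw [huu, real_inner_smul_left]
      exact mul_nonneg_iff_of_pos_left (by positivity)
    have huucard : (A.filter (fun s => 0 ≤ ⟪uu, s - x⟫)).card = m := by
      rw [Finset.filter_congr (fun s _ => hiff0 (s - x))]
      exact hu₀card
    have hunit : uu 0 * uu 0 + uu 1 * uu 1 = 1 := by
      have hn : ‖uu‖ = 1 := by
        rw [huu, norm_smul, norm_inv, norm_norm]
        field_simp
      have h1 : ⟪uu, uu⟫ = 1 := by
        rw [real_inner_self_eq_norm_mul_norm, hn]
        norm_num
      rw [inner_coords] at h1
      exact h1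
    set w : E2 := rotE uu with hw
    set H : Finset E2 := A.filter (fun s => ⟪uu, s - x⟫ < 0) with hH
    have hHA : ∀ s ∈ H, s ∈ A := fun s hs => (Finset.mem_filter.1 hs).1
    have hHneg : ∀ s ∈ H, ⟪uu, s - x⟫ < 0 := fun s hs => (Finset.mem_filter.1 hs).2
    have hMcard : H.card + m + 1 = 3 * k := by
      have hsplit := Finset.card_filter_add_card_filter_not
        (s := A) (p := fun s => 0 ≤ ⟪uu, s - x⟫)
      have hHeq : H = A.filter (fun s => ¬ (0 ≤ ⟪uu, s - x⟫)) := by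
        rw [hH]
        exact Finset.filter_congr (fun s _ => (not_le).symm)
      rw [hHeq]
      omega
    have hHM : k < H.card := by omega
    -- sorted listing of H by τ
    set τ : E2 → ℝ := fun s => ⟪w, s - x⟫ / (-⟪uu, s - x⟫) with hτ
    obtain ⟨l2, hlen2, hnodup2, hmem2, hsort2⟩ := exists_sorted_listing H τ
    rw [← hlen2] at hHM
    set g2 : Fin l2.length → E2 := fun i => l2.get i with hg2
    have hg2mem : ∀ i, g2 i ∈ H := fun i => (hmem2 _).1 (l2.get_mem _)
    have hg2inj : Function.Injective g2 := fun i i' h =>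
      List.nodup_iff_injective_get.1 hnodup2 h
    have hmono2 : ∀ i i' : Fin l2.length, (i : ℕ) ≤ (i' : ℕ) → τ (g2 i) ≤ τ (g2 i') := by
      intro i i' hle
      rcases eq_or_lt_of_le hle with heq | hlt
      · have : i = i' := Fin.ext heq
        subst this
        exact le_rfl
      · exact hsort2.rel_get_of_lt hlt
    have hl2card : l2.length = H.card := hlen2
    set ip : ℕ := l2.length - (k+1) with hip
    have hipk : ip < l2.length := by omega
    set p : E2 := g2 ⟨ip, hipk⟩ with hp
    set q : E2 := g2 ⟨k, hHM⟩ with hq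
    have hpH : p ∈ H := hg2mem _
    have hqH : q ∈ H := hg2mem _
    have hpq : p ≠ q := by
      intro h
      have h2 := hg2inj h
      simp only [Fin.mk.injEq] at h2
      omega
    have hpA : p ∈ A := hHA _ hpH
    have hqA : q ∈ A := hHA _ hqH
    refine ⟨p, q, (Finset.mem_erase.1 hpA).2, (Finset.mem_erase.1 hqA).2,
      (Finset.mem_erase.1 hpA).1, (Finset.mem_erase.1 hqA).1, hpq, ?_⟩
    intro u hu
    rw [ncard_setOf_filter, Finset.filter_erase, Finset.filter_erase]
    set F : Finset E2 := A.filter (fun s => 0 ≤ ⟪u, s - x⟫) with hF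
    have hFm : m ≤ F.card := hmle u hu
    -- linear form on the halfplane H
    set aa : ℝ := ⟪u, w⟫ with haa
    set bb : ℝ := ⟪u, uu⟫ with hbb
    have hlin : ∀ s ∈ H, (0 ≤ ⟪u, s - x⟫ ↔ bb ≤ aa * τ s) := by
      intro s hs
      have hd : 0 < -⟪uu, s - x⟫ := by linarith [hHneg s hs]
      have hτs : ⟪w, s - x⟫ = τ s * (-⟪uu, s - x⟫) := by
        rw [hτ]
        exact (div_mul_cancel₀ _ (ne_of_gt hd)).symm
      rw [inner_decomp hunit u (s - x), hτs, ← hw, ← haa, ← hbb]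
      constructor
      · intro h
        nlinarith [hd]
      · intro h
        nlinarith [hd]
    have hmemF : ∀ s, s ∈ H → (0 ≤ ⟪u, s - x⟫) → s ∈ F := by
      intro s hs hle
      rw [hF, Finset.mem_filter]
      exact ⟨hHA _ hs, hle⟩
    -- counting helpers
    have hcnt : ∀ I : Finset (Fin l2.length), (∀ i ∈ I, g2 i ∈ F) → I.card ≤ F.card :=
      fun I hI => Finset.card_le_card_of_injOn g2 hI (fun a _ b _ h => hg2inj h)
    have hl2pos : 0 < l2.length := by omega
    have hprefix : ∀ t : ℕ, t < l2.length →
        (∀ i : Fin l2.length, (i:ℕ) ≤ t → g2 i ∈ F) → t + 1 ≤ F.card := by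
      intro t ht hall
      refine le_trans (le_of_eq (Finset.card_range (t+1)).symm)
        (Finset.card_le_card_of_injOn
          (fun n => g2 ⟨n % l2.length, Nat.mod_lt _ hl2pos⟩) ?_ ?_)
      · intro n hn
        simp only [Finset.coe_range, Set.mem_Iio] at hn
        have he : n % l2.length = n := Nat.mod_eq_of_lt (by omega)
        apply hall
        show n % l2.length ≤ t
        omega
      · intro n1 h1 n2 h2 heq
        simp only [Finset.coe_range, Set.mem_Iio] at h1 h2
        have h3 := hg2inj heq
        simp only [Fin.mk.injEq] at h3
        have e1 : n1 % l2.length = n1 := Nat.mod_eq_of_lt (by omega)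
        have e2 : n2 % l2.length = n2 := Nat.mod_eq_of_lt (by omega)
        omega
    have hsuffix : ∀ t : ℕ, t < l2.length →
        (∀ i : Fin l2.length, t ≤ (i:ℕ) → g2 i ∈ F) → l2.length - t ≤ F.card := by
      intro t ht hall
      refine le_trans (le_of_eq (Finset.card_range (l2.length - t)).symm)
        (Finset.card_le_card_of_injOn
          (fun n => g2 ⟨(t + n) % l2.length, Nat.mod_lt _ hl2pos⟩) ?_ ?_)
      · intro n hn
        simp only [Finset.coe_range, Set.mem_Iio] at hn
        have he : (t + n) % l2.length = t + n := Nat.mod_eq_of_lt (by omega)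
        apply hall
        show t ≤ (t + n) % l2.length
        omega
      · intro n1 h1 n2 h2 heq
        simp only [Finset.coe_range, Set.mem_Iio] at h1 h2
        have h3 := hg2inj heq
        simp only [Fin.mk.injEq] at h3
        have e1 : (t + n1) % l2.length = t + n1 := Nat.mod_eq_of_lt (by omega)
        have e2 : (t + n2) % l2.length = t + n2 := Nat.mod_eq_of_lt (by omega)
        omega
    -- main bound : F.card is large enough depending on membership of p and q
    have hmain : k - 1 + (if p ∈ F then 1 else 0) + (if q ∈ F then 1 else 0) ≤ F.card := by
      by_cases hpF : p ∈ F <;> by_cases hqF : q ∈ F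
      -- both in F
      · rw [if_pos hpF, if_pos hqF]
        rcases lt_trichotomy aa 0 with hlt | heq0 | hgt
        · -- down-closed; use q (index k) : prefix of length k+1
          have hqlin : bb ≤ aa * τ q := (hlin q hqH).1 (Finset.mem_filter.1 hqF).2
          have hall : ∀ i : Fin l2.length, (i:ℕ) ≤ k → g2 i ∈ F := by
            intro i hik
            refine hmemF _ (hg2mem i) ?_
            rw [hlin _ (hg2mem i)]
            have hmq : τ (g2 i) ≤ τ q := hmono2 i ⟨k, hHM⟩ hik
            nlinarith
          have := hprefix k hHM hall
          omega
        · -- aa = 0 : all of H is in F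
          have hplin : bb ≤ aa * τ p := (hlin p hpH).1 (Finset.mem_filter.1 hpF).2
          rw [heq0, zero_mul] at hplin
          have hallcnt := hcnt Finset.univ (fun i _ => by
            refine hmemF _ (hg2mem i) ?_
            rw [hlin _ (hg2mem i), heq0, zero_mul]
            exact hplin)
          simp only [Finset.card_univ, Fintype.card_fin] at hallcnt
          omega
        · -- up-closed; use p (index ip) : suffix of length k+1
          have hplin : bb ≤ aa * τ p := (hlin p hpH).1 (Finset.mem_filter.1 hpF).2
          have hall : ∀ i : Fin l2.length, ip ≤ (i:ℕ) → g2 i ∈ F := by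
            intro i hik
            refine hmemF _ (hg2mem i) ?_
            rw [hlin _ (hg2mem i)]
            have hmq : τ p ≤ τ (g2 i) := hmono2 ⟨ip, hipk⟩ i hik
            nlinarith
          have := hsuffix ip hipk hall
          omega
      -- p in F, q not
      · rw [if_pos hpF, if_neg hqF]
        rcases lt_trichotomy aa 0 with hlt | heq0 | hgt
        · have hplin : bb ≤ aa * τ p := (hlin p hpH).1 (Finset.mem_filter.1 hpF).2
          have hall : ∀ i : Fin l2.length, (i:ℕ) ≤ ip → g2 i ∈ F := by
            intro i hik
            refine hmemF _ (hg2mem i) ?_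
            rw [hlin _ (hg2mem i)]
            have hmq : τ (g2 i) ≤ τ p := hmono2 i ⟨ip, hipk⟩ hik
            nlinarith
          have := hprefix ip hipk hall
          omega
        · have hplin : bb ≤ aa * τ p := (hlin p hpH).1 (Finset.mem_filter.1 hpF).2
          rw [heq0, zero_mul] at hplin
          have hallcnt := hcnt Finset.univ (fun i _ => by
            refine hmemF _ (hg2mem i) ?_
            rw [hlin _ (hg2mem i), heq0, zero_mul]
            exact hplin)
          simp only [Finset.card_univ, Fintype.card_fin] at hallcnt
          omega
        · have hplin : bb ≤ aa * τ p := (hlin p hpH).1 (Finset.mem_filter.1 hpF).2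
          have hall : ∀ i : Fin l2.length, ip ≤ (i:ℕ) → g2 i ∈ F := by
            intro i hik
            refine hmemF _ (hg2mem i) ?_
            rw [hlin _ (hg2mem i)]
            have hmq : τ p ≤ τ (g2 i) := hmono2 ⟨ip, hipk⟩ i hik
            nlinarith
          have := hsuffix ip hipk hall
          omega
      -- q in F, p not
      · rw [if_neg hpF, if_pos hqF]
        rcases lt_trichotomy aa 0 with hlt | heq0 | hgt
        · have hqlin : bb ≤ aa * τ q := (hlin q hqH).1 (Finset.mem_filter.1 hqF).2
          have hall : ∀ i : Fin l2.length, (i:ℕ) ≤ k → g2 i ∈ F := by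
            intro i hik
            refine hmemF _ (hg2mem i) ?_
            rw [hlin _ (hg2mem i)]
            have hmq : τ (g2 i) ≤ τ q := hmono2 i ⟨k, hHM⟩ hik
            nlinarith
          have := hprefix k hHM hall
          omega
        · have hqlin : bb ≤ aa * τ q := (hlin q hqH).1 (Finset.mem_filter.1 hqF).2
          rw [heq0, zero_mul] at hqlin
          have hallcnt := hcnt Finset.univ (fun i _ => by
            refine hmemF _ (hg2mem i) ?_
            rw [hlin _ (hg2mem i), heq0, zero_mul]
            exact hqlin)
          simp only [Finset.card_univ, Fintype.card_fin] at hallcnt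
          omega
        · have hqlin : bb ≤ aa * τ q := (hlin q hqH).1 (Finset.mem_filter.1 hqF).2
          have hall : ∀ i : Fin l2.length, k ≤ (i:ℕ) → g2 i ∈ F := by
            intro i hik
            refine hmemF _ (hg2mem i) ?_
            rw [hlin _ (hg2mem i)]
            have hmq : τ q ≤ τ (g2 i) := hmono2 ⟨k, hHM⟩ i hik
            nlinarith
          have := hsuffix k hHM hall
          omega
      -- neither
      · rw [if_neg hpF, if_neg hqF]
        omega
    -- conclude via erase cardinalities
    have hqp : q ∈ F.erase p ↔ q ∈ F := by
      rw [Finset.mem_erase]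
      simp [Ne.symm hpq]
    by_cases hpF : p ∈ F <;> by_cases hqF : q ∈ F
    · rw [Finset.card_erase_of_mem (hqp.2 hqF), Finset.card_erase_of_mem hpF]
      simp only [hpF, hqF, if_true] at hmain
      omega
    · rw [Finset.erase_eq_of_notMem (fun hc => hqF (hqp.1 hc)), Finset.card_erase_of_mem hpF]
      simp only [hpF, hqF, if_true, if_false] at hmain
      omega
    · rw [Finset.card_erase_of_mem (hqp.2 hqF), Finset.erase_eq_of_notMem hpF]
      simp only [hpF, hqF, if_true, if_false] at hmain
      omega
    · rw [Finset.erase_eq_of_notMem (fun hc => hqF (hqp.1 hc)), Finset.erase_eq_of_notMem hpF]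
      omega


/-- Birch's lemma: a center point `x` of a set of `3k` points in the plane
(i.e. a point of location depth at least `k`) is a Tverberg point: the points
can be partitioned into `k` triples each of whose convex hulls contains `x`. -/
theorem birch_center_point_is_tverberg_point
    (k : ℕ) (hk : 1 ≤ k)
    (S : Finset (EuclideanSpace ℝ (Fin 2))) (hcard : S.card = 3 * k)
    (x : EuclideanSpace ℝ (Fin 2))
    (hdepth : ∀ (u : EuclideanSpace ℝ (Fin 2)), u ≠ 0 →
      k ≤ {s : EuclideanSpace ℝ (Fin 2) | s ∈ S ∧ 0 ≤ ⟪u, s - x⟫}.ncard) :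
    ∃ parts : Fin k → Finset (EuclideanSpace ℝ (Fin 2)),
      (∀ j, parts j ⊆ S) ∧
      (Pairwise fun j j' => Disjoint (parts j) (parts j')) ∧
      (Finset.univ.biUnion parts = S) ∧
      (∀ j, (parts j).card = 3) ∧
      (∀ j, x ∈ convexHull ℝ (parts j : Set (EuclideanSpace ℝ (Fin 2)))) := by
  have main : ∀ n : ℕ, ∀ k : ℕ, k ≤ n → 1 ≤ k → ∀ S : Finset E2, S.card = 3 * k →
      (∀ (u : E2), u ≠ 0 → k ≤ {s : E2 | s ∈ S ∧ 0 ≤ ⟪u, s - x⟫}.ncard) →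
      ∃ parts : Fin k → Finset E2,
        (∀ j, parts j ⊆ S) ∧
        (Pairwise fun j j' => Disjoint (parts j) (parts j')) ∧
        (Finset.univ.biUnion parts = S) ∧
        (∀ j, (parts j).card = 3) ∧
        (∀ j, x ∈ convexHull ℝ (parts j : Set E2)) := by
    intro n
    induction n with
    | zero => intro k hkn hk1; omega
    | succ n ih =>
      intro k hkn hk1 S hcard hdepth
      by_cases hxS : x ∈ S
      · by_cases hk2 : k = 1
        · subst hk2
          refine ⟨fun _ => S, fun _ => le_refl _, ?_, ?_, fun _ => by rw [hcard], fun _ =>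
            subset_convexHull ℝ _ (by exact_mod_cast hxS)⟩
          · intro j j' hne
            exact absurd (Subsingleton.elim j j') hne
          · ext s
            simp [Finset.mem_biUnion]
        · have hk2' : 2 ≤ k := by omega
          obtain ⟨p, q, hpS, hqS, hpx, hqx, hpq, hrem⟩ :=
            pair_removal k hk2' S hcard x hxS hdepth
          set S' : Finset E2 := ((S.erase x).erase p).erase q with hS'
          have hpmem : p ∈ S.erase x := Finset.mem_erase.2 ⟨hpx, hpS⟩
          have hqmem : q ∈ (S.erase x).erase p :=
            Finset.mem_erase.2 ⟨hpq.symm, Finset.mem_erase.2 ⟨hqx, hqS⟩⟩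
          have hS'card : S'.card = 3 * (k - 1) := by
            rw [hS', Finset.card_erase_of_mem hqmem, Finset.card_erase_of_mem hpmem,
              Finset.card_erase_of_mem hxS, hcard]
            omega
          obtain ⟨parts', hsub', hdisj', hbi', hcard3', hhull'⟩ :=
            ih (k - 1) (by omega) (by omega) S' hS'card hrem
          have hmemS' : ∀ s, s ∈ S' ↔ (s ≠ q ∧ s ≠ p ∧ s ≠ x ∧ s ∈ S) := by
            intro s
            rw [hS']
            simp only [Finset.mem_erase]
          set T : Finset E2 := {x, p, q} with hT
          have hmemT : ∀ s, s ∈ T ↔ (s = x ∨ s = p ∨ s = q) := by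
            intro s
            simp [hT]
          have hTsubS : T ⊆ S := by
            intro s hs
            rcases (hmemT s).1 hs with h | h | h <;> (subst h; assumption)
          have hS'subS : S' ⊆ S := by
            intro s hs
            exact ((hmemS' s).1 hs).2.2.2
          have hdisjT : ∀ s, s ∈ S' → s ∉ T := by
            intro s hs hsT
            rw [hmemS'] at hs
            rcases (hmemT s).1 hsT with h | h | h <;> tauto
          set parts : Fin k → Finset E2 := fun j =>
            if h : (j : ℕ) < k - 1 then parts' ⟨(j : ℕ), h⟩ else T with hparts
          have hpartscase : ∀ j : Fin k, ((j : ℕ) < k - 1 ∧ ∃ h, parts j = parts' ⟨(j : ℕ), h⟩)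
              ∨ ((j : ℕ) = k - 1 ∧ parts j = T) := by
            intro j
            by_cases h : (j : ℕ) < k - 1
            · exact Or.inl ⟨h, h, by rw [hparts]; simp [h]⟩
            · refine Or.inr ⟨by have := j.isLt; omega, by rw [hparts]; simp [h]⟩
          refine ⟨parts, ?_, ?_, ?_, ?_, ?_⟩
          · intro j
            rcases hpartscase j with ⟨h, hpf, heq⟩ | ⟨h, heq⟩
            · rw [heq]
              exact (hsub' _).trans hS'subS
            · rw [heq]
              exact hTsubS
          · intro j j' hne
            rcases hpartscase j with ⟨h1, hpf1, heq1⟩ | ⟨h1, heq1⟩ <;>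
              rcases hpartscase j' with ⟨h2, hpf2, heq2⟩ | ⟨h2, heq2⟩
            · rw [heq1, heq2]
              refine hdisj' ?_
              intro hc
              apply hne
              have := congrArg Fin.val hc
              simp only [Fin.mk.injEq] at this
              exact Fin.ext this
            · rw [heq1, heq2, Finset.disjoint_left]
              intro s hs
              exact hdisjT s ((hsub' _) hs)
            · rw [heq1, heq2, Finset.disjoint_right]
              intro s hs
              exact hdisjT s ((hsub' _) hs)
            · exfalso
              exact hne (Fin.ext (by omega))
          · ext s
            constructor
            · intro hs
              obtain ⟨j, _, hmem⟩ := Finset.mem_biUnion.1 hs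
              rcases hpartscase j with ⟨h, hpf, heq⟩ | ⟨h, heq⟩
              · rw [heq] at hmem
                exact hS'subS ((hsub' _) hmem)
              · rw [heq] at hmem
                exact hTsubS hmem
            · intro hs
              by_cases hsT : s ∈ T
              · refine Finset.mem_biUnion.2 ⟨⟨k - 1, by omega⟩, Finset.mem_univ _, ?_⟩
                rcases hpartscase ⟨k - 1, by omega⟩ with ⟨h, _, _⟩ | ⟨_, heq⟩
                · simp at h
                · rw [heq]
                  exact hsT
              · have hsS' : s ∈ S' := by
                  rw [hmemS']
                  refine ⟨?_, ?_, ?_, hs⟩ <;>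
                    (intro hc; exact hsT ((hmemT s).2 (by tauto)))
                rw [← hbi'] at hsS'
                obtain ⟨j', _, hmem'⟩ := Finset.mem_biUnion.1 hsS'
                refine Finset.mem_biUnion.2 ⟨⟨(j' : ℕ), by have := j'.isLt; omega⟩,
                  Finset.mem_univ _, ?_⟩
                rcases hpartscase ⟨(j' : ℕ), by have := j'.isLt; omega⟩ with
                  ⟨h, hpf, heq⟩ | ⟨h, heq⟩
                · rw [heq]
                  have : (⟨(j' : ℕ), hpf⟩ : Fin (k - 1)) = j' := Fin.ext rfl
                  rw [this]
                  exact hmem'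
                · exfalso
                  simp at h
                  have := j'.isLt
                  omega
          · intro j
            rcases hpartscase j with ⟨h, hpf, heq⟩ | ⟨h, heq⟩
            · rw [heq]
              exact hcard3' _
            · rw [heq, hT]
              rw [Finset.card_insert_of_notMem, Finset.card_insert_of_notMem,
                Finset.card_singleton]
              · simp only [Finset.mem_singleton]
                exact hpq
              · simp only [Finset.mem_insert, Finset.mem_singleton]
                push_neg
                exact ⟨fun hc => hpx hc.symm, fun hc => hqx hc.symm⟩
          · intro j
            rcases hpartscase j with ⟨h, hpf, heq⟩ | ⟨h, heq⟩
            · rw [heq]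
              exact hhull' _
            · rw [heq]
              exact subset_convexHull ℝ _ (by rw [hT]; simp)
      · exact birch_notmem k hk1 S hcard x hxS hdepth
  exact main k k le_rfl hk S hcard hdepth

end
end

section
/- Let S be a finite set of n points in R^2, let k ≥ 1 with n > 3k, and suppose the point x ∈ R^2 has location depth exactly k with respect to S. Then there exists a subset T ⊆ S with exactly 3k points such that x still has location depth k with respect to T. -/
/-!
Remove `x` from `S` (it lies in every closed halfplane through `x`) and measure the angles of the
remaining points around `x`, rotated so that a closed halfplane containing the least number `m`
of them becomes the upper half `[0, π]` of the circle. Rotating a closed halfplane slightly shows that every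
half-open semicircle `(b, b + π]` also contains at least `m` points. Let `G` be the `m` points with
angle in `(0, π]` and `B` the others, both sorted by angle, let `g i` and `f i` be the `i`-th
points of `G` and `B`, and `h i` the `i`-th of the last `m` points of `B`. Counting the points in
the semicircles starting at `g i` and at `h i` gives `θ (f i) ≤ θ (g i) + π ≤ θ (h i)`, so every
semicircle contains, for each `i`, one of `g i, f i` or one of `g i, h i`. Thus these at most `3m`
points (and `x`, if `x ∈ S`) keep the depth; any further points of `S` can be added.
-/

open Finset Real Filter Topology
open scoped RealInnerProductSpace

theorem ncard_setOf_mem_and {α : Type*} (S : Finset α) (P : α → Prop) [DecidablePred P] :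
    {a | a ∈ S ∧ P a}.ncard = #{a ∈ S | P a} := by
  rw [← Set.ncard_coe_finset, coe_filter]

theorem card_filter_insert_of_notMem {α : Type*} [DecidableEq α] {T : Finset α} {x : α}
    {P : α → Prop} [DecidablePred P] (hx : x ∉ T) (hP : P x) :
    #{a ∈ insert x T | P a} = #{a ∈ T | P a} + 1 := by
  rw [filter_insert, if_pos hP, card_insert_of_notMem fun h => hx (mem_filter.1 h).1]

theorem le_card_filter_of_forall_or {α : Type*} {T : Finset α} {P : α → Prop} [DecidablePred P]
    {m : ℕ} {p q : Fin m → α} (hp : Function.Injective p) (hq : Function.Injective q)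
    (hpq : ∀ i j, p i ≠ q j) (hpT : ∀ i, p i ∈ T) (hqT : ∀ i, q i ∈ T)
    (h : ∀ i, P (p i) ∨ P (q i)) : m ≤ #{a ∈ T | P a} := by
  let w i := if P (p i) then p i else q i
  have hw : ∀ i, w i ∈ {a ∈ T | P a} := fun i => by
    by_cases hi : P (p i)
    · simp only [w, if_pos hi]; exact mem_filter.2 ⟨hpT i, hi⟩
    · simp only [w, if_neg hi]; exact mem_filter.2 ⟨hqT i, (h i).resolve_left hi⟩
  have hinj : Function.Injective w := fun i j hij => by
    by_cases hi : P (p i) <;> by_cases hj : P (p j) <;>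
      simp only [w, hi, hj, if_true, if_false] at hij
    exacts [hp hij, absurd hij (hpq i j), absurd hij.symm (hpq j i), hq hij]
  simpa using card_le_card_of_injOn (s := univ) w (fun i _ => hw i) hinj.injOn

section SortedEnum

variable {α β : Type*} [LinearOrder β]

structure IsSortedEnum (t : α → β) (s : Finset α) {n : ℕ} (e : Fin n → α) : Prop where
  injective : Function.Injective e
  range_eq : Set.range e = s
  monotone : Monotone (t ∘ e)

theorem exists_isSortedEnum (t : α → β) {s : Finset α} {n : ℕ} (hn : #s = n) :
    ∃ e : Fin n → α, IsSortedEnum t s e := by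
  subst hn
  let σ := s.equivFin.symm
  let f : Fin #s → β := fun i => t (σ i)
  refine ⟨fun i => σ (Tuple.sort f i), Subtype.val_injective.comp
    (σ.injective.comp (Tuple.sort f).injective), ?_, Tuple.monotone_sort f⟩
  ext a
  refine ⟨?_, fun ha => ⟨(Tuple.sort f).symm (σ.symm ⟨a, ha⟩), by simp⟩⟩
  rintro ⟨i, rfl⟩
  exact (σ _).2

namespace IsSortedEnum

variable {t : α → β} {s : Finset α} {n : ℕ} {e : Fin n → α}

theorem mem (he : IsSortedEnum t s e) (i : Fin n) : e i ∈ s := by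
  rw [← Finset.mem_coe, ← he.range_eq]
  exact ⟨i, rfl⟩

theorem card_eq (he : IsSortedEnum t s e) : #s = n := by
  classical
  have : univ.image e = s := coe_injective (by simp [he.range_eq])
  rw [← this, card_image_of_injective _ he.injective, card_univ, Fintype.card_fin]

theorem apply_le_of_lt_card_filter (he : IsSortedEnum t s e) {i : Fin n} {v : β}
    (h : (i : ℕ) < #{a ∈ s | t a ≤ v}) : t (e i) ≤ v := by
  classical
  by_contra! hv
  have hsub : {a ∈ s | t a ≤ v} ⊆ (Iio i).image e := by
    intro a ha
    rw [mem_filter, ← mem_coe, ← he.range_eq] at ha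
    obtain ⟨⟨j, rfl⟩, hj⟩ := ha
    exact mem_image_of_mem e (mem_Iio.2 (lt_of_not_ge fun hij =>
      (hj.trans_lt hv).not_ge (he.monotone hij)))
  have := (card_le_card hsub).trans card_image_le
  rw [Fin.card_Iio] at this
  omega

theorem card_filter_lt_add_le (he : IsSortedEnum t s e) (i : Fin n) :
    #{a ∈ s | t (e i) < t a} + i + 1 ≤ n := by
  classical
  have hle : (Iic i).image e ⊆ {a ∈ s | t a ≤ t (e i)} := by
    intro a ha
    obtain ⟨j, hj, rfl⟩ := mem_image.1 ha
    exact mem_filter.2 ⟨he.mem j, he.monotone (mem_Iic.1 hj)⟩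
  have hcard : #((Iic i).image e) = i + 1 := by
    rw [card_image_of_injective _ he.injective, Fin.card_Iic]
  have hsplit := card_filter_add_card_filter_not (s := s) (fun a => t a ≤ t (e i))
  simp only [not_le] at hsplit
  have := card_le_card hle
  rw [he.card_eq] at hsplit
  omega

end IsSortedEnum

end SortedEnum

/-- For `b t ∈ (0, 2π]`: `t` lies on the half-open arc `(b, b + π]` of the circle `ℝ / 2πℤ`. -/
def InSemicircle (b t : ℝ) : Prop := (b < t ∧ t ≤ b + π) ∨ t ≤ b - π

noncomputable instance (b t : ℝ) : Decidable (InSemicircle b t) :=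
  inferInstanceAs (Decidable (_ ∨ _))

theorem inSemicircle_iff_of_le_pi {b t : ℝ} (hb : b ≤ π) (ht : 0 < t) :
    InSemicircle b t ↔ b < t ∧ t ≤ b + π :=
  or_iff_left fun h => by linarith

theorem inSemicircle_iff_of_pi_lt {b t : ℝ} (hb : π < b) (ht : t ≤ 2 * π) :
    InSemicircle b t ↔ b < t ∨ t ≤ b - π :=
  or_congr_left ⟨And.left, fun h => ⟨h, by linarith⟩⟩

theorem cos_nonneg_of_inSemicircle {b t : ℝ} (hb : b ≤ 2 * π) (ht : 0 < t)
    (h : InSemicircle b t) : 0 ≤ cos (t - (b + π / 2)) := by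
  rcases h with ⟨h₁, h₂⟩ | h
  · exact cos_nonneg_of_mem_Icc ⟨by linarith, by linarith⟩
  · rw [← cos_add_two_pi]
    exact cos_nonneg_of_mem_Icc ⟨by linarith, by linarith⟩

theorem eventually_inSemicircle_of_cos_nonneg {b t : ℝ} (hb : 0 < b) (ht : t ≤ 2 * π) :
    ∀ᶠ φ in 𝓝[>] (b + π / 2), 0 ≤ cos (t - φ) → InSemicircle b t := by
  by_cases h : InSemicircle b t
  · exact .of_forall fun _ _ => h
  simp only [InSemicircle, not_or, not_and, not_le] at h
  obtain ⟨hgt, hlow⟩ := h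
  rcases lt_or_ge b t with hbt | htb
  · have := hgt hbt
    filter_upwards [Ioo_mem_nhdsGT (show b + π / 2 < t - π / 2 by linarith)] with φ hφ hcos
    exact absurd hcos
      (cos_neg_of_pi_div_two_lt_of_lt (by linarith [hφ.2]) (by linarith [hφ.1])).not_ge
  · filter_upwards [Ioo_mem_nhdsGT (show b + π / 2 < t + 3 * π / 2 by linarith)] with φ hφ hcos
    rw [← cos_neg, neg_sub] at hcos
    exact absurd hcos
      (cos_neg_of_pi_div_two_lt_of_lt (by linarith [hφ.1]) (by linarith [hφ.2])).not_ge

theorem cos_sub_toIocMod (a x y : ℝ) : cos (x - toIocMod two_pi_pos a y) = cos (x - y) := by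
  conv_rhs => rw [← toIocMod_add_toIocDiv_zsmul two_pi_pos a y]
  rw [zsmul_eq_mul, ← sub_sub, cos_sub_int_mul_two_pi]

section Circle

variable {α : Type*} {A : Finset α} {t : α → ℝ} {m : ℕ}

theorem le_card_inSemicircle (ht : ∀ a ∈ A, t a ≤ 2 * π)
    (hdepth : ∀ φ, m ≤ #{a ∈ A | 0 ≤ cos (t a - φ)}) {b : ℝ} (hb : 0 < b) :
    m ≤ #{a ∈ A | InSemicircle b (t a)} := by
  obtain ⟨φ, hφ⟩ := ((eventually_all_finset A).2 fun a ha =>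
    eventually_inSemicircle_of_cos_nonneg hb (ht a ha)).exists
  refine (hdepth φ).trans (card_le_card fun a ha => ?_)
  rw [mem_filter] at ha ⊢
  exact ⟨ha.1, hφ a ha.1 ha.2⟩

theorem le_card_filter_le_pi (ht : ∀ a ∈ A, t a ≤ 2 * π)
    (hdepth : ∀ b ∈ Set.Ioc 0 (2 * π), m ≤ #{a ∈ A | InSemicircle b (t a)}) :
    m ≤ #{a ∈ A | t a ≤ π} := by
  refine (hdepth (2 * π) ⟨by positivity, le_rfl⟩).trans (card_le_card fun a ha => ?_)
  obtain ⟨haA, h | h⟩ := mem_filter.1 ha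
  · linarith [ht a haA, h.1]
  · exact mem_filter.2 ⟨haA, by linarith⟩

theorem le_card_filter_pi_lt (ht : ∀ a ∈ A, 0 < t a)
    (hdepth : ∀ b ∈ Set.Ioc 0 (2 * π), m ≤ #{a ∈ A | InSemicircle b (t a)}) :
    m ≤ #{a ∈ A | π < t a} := by
  refine (hdepth π ⟨pi_pos, by linarith [pi_pos]⟩).trans (card_le_card fun a ha => ?_)
  obtain ⟨haA, hπa⟩ := mem_filter.1 ha
  exact mem_filter.2 ⟨haA, ((inSemicircle_iff_of_le_pi le_rfl (ht a haA)).1 hπa).1⟩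

theorem le_add_pi_of_isSortedEnum {n : ℕ} (ht : ∀ a ∈ A, 0 < t a)
    (hdepth : ∀ b ∈ Set.Ioc 0 (2 * π), m ≤ #{a ∈ A | InSemicircle b (t a)})
    {g : Fin m → α} {e : Fin n → α} (hg : IsSortedEnum t {a ∈ A | t a ≤ π} g)
    (he : IsSortedEnum t {a ∈ A | π < t a} e) {i : Fin m} {j : Fin n} (hij : (j : ℕ) = i) :
    t (e j) ≤ t (g i) + π := by
  classical
  obtain ⟨hgA, hgπ⟩ := mem_filter.1 (hg.mem i)
  have hcover : {a ∈ A | InSemicircle (t (g i)) (t a)} ⊆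
      {a ∈ A | t a ≤ π ∧ t (g i) < t a} ∪ {a ∈ A | π < t a ∧ t a ≤ t (g i) + π} := fun a ha => by
    obtain ⟨haA, hga⟩ := mem_filter.1 ha
    rw [inSemicircle_iff_of_le_pi hgπ (ht a haA)] at hga
    simp only [mem_union, mem_filter]
    rcases le_or_gt (t a) π with h | h
    exacts [.inl ⟨haA, h, hga.1⟩, .inr ⟨haA, h, hga.2⟩]
  have := (hdepth _ ⟨ht _ hgA, by linarith [pi_pos]⟩).trans
    ((card_le_card hcover).trans (card_union_le _ _))
  have := hg.card_filter_lt_add_le i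
  simp only [filter_filter] at this
  exact he.apply_le_of_lt_card_filter (by simp only [filter_filter]; omega)

theorem add_pi_le_of_isSortedEnum {n : ℕ} (ht : ∀ a ∈ A, t a ≤ 2 * π)
    (hdepth : ∀ b ∈ Set.Ioc 0 (2 * π), m ≤ #{a ∈ A | InSemicircle b (t a)})
    {g : Fin m → α} {e : Fin n → α} (hg : IsSortedEnum t {a ∈ A | t a ≤ π} g)
    (he : IsSortedEnum t {a ∈ A | π < t a} e) {i : Fin m} {j : Fin n} (hij : j + m = n + i) :
    t (g i) + π ≤ t (e j) := by
  classical
  obtain ⟨heA, heπ⟩ := mem_filter.1 (he.mem j)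
  have hcover : {a ∈ A | InSemicircle (t (e j)) (t a)} ⊆
      {a ∈ A | π < t a ∧ t (e j) < t a} ∪ {a ∈ A | t a ≤ π ∧ t a ≤ t (e j) - π} := fun a ha => by
    obtain ⟨haA, hea⟩ := mem_filter.1 ha
    rw [inSemicircle_iff_of_pi_lt heπ (ht a haA)] at hea
    simp only [mem_union, mem_filter]
    rcases hea with h | h
    exacts [.inl ⟨haA, by linarith, h⟩, .inr ⟨haA, by linarith [ht _ heA], h⟩]
  have := (hdepth _ ⟨by linarith [pi_pos], ht _ heA⟩).trans
    ((card_le_card hcover).trans (card_union_le _ _))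
  have := he.card_filter_lt_add_le j
  simp only [filter_filter] at this
  linarith [hg.apply_le_of_lt_card_filter (i := i) (v := t (e j) - π)
    (by simp only [filter_filter]; omega)]

theorem exists_semicircle_pairing (ht : ∀ a ∈ A, t a ∈ Set.Ioc 0 (2 * π))
    (hdepth : ∀ b ∈ Set.Ioc 0 (2 * π), m ≤ #{a ∈ A | InSemicircle b (t a)})
    (htight : #{a ∈ A | t a ≤ π} ≤ m) :
    ∃ g f h : Fin m → α, Function.Injective g ∧ Function.Injective f ∧ Function.Injective h ∧
      (∀ i, g i ∈ A ∧ t (g i) ≤ π) ∧ (∀ i, f i ∈ A ∧ π < t (f i)) ∧ (∀ i, h i ∈ A) ∧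
      (∀ i, t (f i) ≤ t (g i) + π) ∧ (∀ i, t (g i) + π ≤ t (h i)) := by
  have hB := le_card_filter_pi_lt (fun a ha => (ht a ha).1) hdepth
  obtain ⟨r, hr⟩ : ∃ r, #{a ∈ A | π < t a} = r + m := ⟨_ - m, (Nat.sub_add_cancel hB).symm⟩
  obtain ⟨g, hg⟩ := exists_isSortedEnum t
    (le_antisymm htight (le_card_filter_le_pi (fun a ha => (ht a ha).2) hdepth))
  obtain ⟨e, he⟩ := exists_isSortedEnum t hr
  refine ⟨g, fun i => e (Fin.castLE (Nat.le_add_left m r) i), fun i => e (Fin.natAdd r i),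
    hg.injective, he.injective.comp (Fin.castLE_injective _),
    he.injective.comp (Fin.natAdd_injective _ _), fun i => mem_filter.1 (hg.mem i),
    fun i => mem_filter.1 (he.mem _), fun i => (mem_filter.1 (he.mem _)).1,
    fun i => le_add_pi_of_isSortedEnum (fun a ha => (ht a ha).1) hdepth hg he (Fin.val_castLE _ _),
    fun i => add_pi_le_of_isSortedEnum (fun a ha => (ht a ha).2) hdepth hg he ?_⟩
  rw [Fin.val_natAdd]
  omega

theorem exists_subset_card_le_three_mul_inSemicircle (ht : ∀ a ∈ A, t a ∈ Set.Ioc 0 (2 * π))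
    (hdepth : ∀ b ∈ Set.Ioc 0 (2 * π), m ≤ #{a ∈ A | InSemicircle b (t a)})
    (htight : #{a ∈ A | t a ≤ π} ≤ m) :
    ∃ T ⊆ A, #T ≤ 3 * m ∧ ∀ b ∈ Set.Ioc 0 (2 * π), m ≤ #{a ∈ T | InSemicircle b (t a)} := by
  classical
  obtain ⟨g, f, h, hg, hf, hh, hgA, hfA, hhA, hfg, hgh⟩ :=
    exists_semicircle_pairing ht hdepth htight
  set T := univ.image g ∪ univ.image f ∪ univ.image h
  have hgT i : g i ∈ T := by simp [T]
  have hfT i : f i ∈ T := by simp [T]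
  have hhT i : h i ∈ T := by simp [T]
  refine ⟨T, ?_, ?_, fun b hb => ?_⟩
  · simp only [T, union_subset_iff, image_subset_iff, mem_univ, forall_const]
    exact ⟨⟨fun i => (hgA i).1, fun i => (hfA i).1⟩, hhA⟩
  · calc #T ≤ #(univ.image g) + #(univ.image f) + #(univ.image h) :=
          (card_union_le _ _).trans (add_le_add_left (card_union_le _ _) _)
      _ ≤ m + m + m := by gcongr <;> exact card_image_le.trans (by simp)
      _ = 3 * m := by ring
  have hgf i j : g i ≠ f j := fun hij => by linarith [(hgA i).2, hij ▸ (hfA j).2]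
  have hgh' i j : g i ≠ h j := fun hij => by
    linarith [(hgA i).2, hij ▸ hgh j, (ht _ (hgA j).1).1]
  rcases le_or_gt b π with hbπ | hbπ
  · refine le_card_filter_of_forall_or hg hf hgf hgT hfT fun i => ?_
    rw [inSemicircle_iff_of_le_pi hbπ (ht _ (hgA i).1).1,
      inSemicircle_iff_of_le_pi hbπ (ht _ (hfA i).1).1]
    rcases lt_or_ge b (t (g i)) with h' | h'
    exacts [.inl ⟨h', by linarith [(hgA i).2, hb.1]⟩,
      .inr ⟨by linarith [(hfA i).2], by linarith [hfg i]⟩]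
  · refine le_card_filter_of_forall_or hg hh hgh' hgT hhT fun i => ?_
    rw [inSemicircle_iff_of_pi_lt hbπ (ht _ (hgA i).1).2,
      inSemicircle_iff_of_pi_lt hbπ (ht _ (hhA i)).2]
    rcases le_or_gt (t (g i)) (b - π) with h' | h'
    exacts [.inl (.inr h'), .inr (.inl (by linarith [hgh i]))]

theorem exists_subset_card_le_three_mul_cos_nonneg_of_mem_Ioc
    (ht : ∀ a ∈ A, t a ∈ Set.Ioc 0 (2 * π))
    (hdepth : ∀ φ, m ≤ #{a ∈ A | 0 ≤ cos (t a - φ)})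
    (htight : #{a ∈ A | 0 ≤ cos (t a - π / 2)} ≤ m) :
    ∃ T ⊆ A, #T ≤ 3 * m ∧ ∀ φ, m ≤ #{a ∈ T | 0 ≤ cos (t a - φ)} := by
  have htight' : #{a ∈ A | t a ≤ π} ≤ m := (card_le_card fun a ha => by
    obtain ⟨haA, haπ⟩ := mem_filter.1 ha
    exact mem_filter.2 ⟨haA, cos_nonneg_of_mem_Icc ⟨by linarith [(ht a haA).1], by linarith⟩⟩)
    |>.trans htight
  obtain ⟨T, hTA, hT, hTdepth⟩ := exists_subset_card_le_three_mul_inSemicircle ht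
    (fun b hb => le_card_inSemicircle (fun a ha => (ht a ha).2) hdepth hb.1) htight'
  refine ⟨T, hTA, hT, fun φ => ?_⟩
  set b := toIocMod two_pi_pos 0 (φ - π / 2)
  have hb : b ∈ Set.Ioc 0 (2 * π) := by simpa using toIocMod_mem_Ioc two_pi_pos 0 (φ - π / 2)
  refine (hTdepth b hb).trans (card_le_card fun a ha => ?_)
  obtain ⟨haT, hab⟩ := mem_filter.1 ha
  have := cos_nonneg_of_inSemicircle hb.2 (ht a (hTA haT)).1 hab
  rw [show t a - (b + π / 2) = t a - π / 2 - b by ring, cos_sub_toIocMod,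
    show t a - π / 2 - (φ - π / 2) = t a - φ by ring] at this
  exact mem_filter.2 ⟨haT, this⟩

theorem exists_subset_card_le_three_mul_cos_nonneg {θ : α → ℝ}
    (hdepth : ∀ φ, m ≤ #{a ∈ A | 0 ≤ cos (θ a - φ)}) {φ₀ : ℝ}
    (htight : #{a ∈ A | 0 ≤ cos (θ a - φ₀)} ≤ m) :
    ∃ T ⊆ A, #T ≤ 3 * m ∧ ∀ φ, m ≤ #{a ∈ T | 0 ≤ cos (θ a - φ)} := by
  set t : α → ℝ := fun a => toIocMod two_pi_pos 0 (θ a - φ₀ + π / 2)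
  have hcos a φ : cos (t a - φ) = cos (θ a - (φ + φ₀ - π / 2)) := by
    rw [← cos_neg, neg_sub, cos_sub_toIocMod, ← cos_neg]
    ring_nf
  obtain ⟨T, hTA, hT, hTdepth⟩ := exists_subset_card_le_three_mul_cos_nonneg_of_mem_Ioc
    (t := t) (fun a _ => by simpa using toIocMod_mem_Ioc two_pi_pos 0 (θ a - φ₀ + π / 2))
    (fun φ => by simpa only [hcos] using hdepth _) (by simpa only [hcos, add_sub_cancel_right,
      add_sub_cancel_left] using htight)
  refine ⟨T, hTA, hT, fun φ => ?_⟩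
  simpa only [hcos, show φ - φ₀ + π / 2 + φ₀ - π / 2 = φ by ring] using hTdepth (φ - φ₀ + π / 2)

end Circle

section Plane

open Module

variable {V : Type*} [NormedAddCommGroup V] [InnerProductSpace ℝ V] [Fact (finrank ℝ V = 2)]

theorem Orientation.inner_nonneg_iff_cos_sub_nonneg (o : Orientation ℝ V (Fin 2)) {r u v : V}
    (hr : r ≠ 0) (hu : u ≠ 0) (hv : v ≠ 0) {φ : ℝ} (hφ : o.oangle r u = φ) :
    0 ≤ ⟪u, v⟫ ↔ 0 ≤ cos ((o.oangle r v).toReal - φ) := by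
  have hangle : o.oangle u v = ↑((o.oangle r v).toReal - φ) := by
    rw [Real.Angle.coe_sub, Real.Angle.coe_toReal, ← hφ, o.oangle_sub_left hr hu hv]
  rw [o.inner_eq_norm_mul_norm_mul_cos_oangle, hangle, Real.Angle.cos_coe,
    mul_nonneg_iff_of_pos_left (by positivity)]

theorem exists_subset_card_le_three_mul_of_notMem {A : Finset V} {x : V} (hx : x ∉ A) {m : ℕ}
    (hdepth : ∀ u ≠ 0, m ≤ #{a ∈ A | 0 ≤ ⟪u, a - x⟫})
    (htight : ∃ u ≠ 0, #{a ∈ A | 0 ≤ ⟪u, a - x⟫} ≤ m) :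
    ∃ T ⊆ A, #T ≤ 3 * m ∧ ∀ u ≠ 0, m ≤ #{a ∈ T | 0 ≤ ⟪u, a - x⟫} := by
  obtain ⟨u₀, hu₀, htight⟩ := htight
  have : FiniteDimensional ℝ V := .of_fact_finrank_eq_two
  let o : Orientation ℝ V (Fin 2) := (finBasisOfFinrankEq ℝ V Fact.out).orientation
  have hcount {u : V} (hu : u ≠ 0) {φ : ℝ} (hφ : o.oangle u₀ u = φ) {T : Finset V} (hTA : T ⊆ A) :
      #{a ∈ T | 0 ≤ ⟪u, a - x⟫} = #{a ∈ T | 0 ≤ cos ((o.oangle u₀ (a - x)).toReal - φ)} := by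
    refine congrArg card (filter_congr fun a ha => ?_)
    exact o.inner_nonneg_iff_cos_sub_nonneg hu₀ hu
      (sub_ne_zero.2 fun h : a = x => hx (h ▸ hTA ha)) hφ
  have hrot (φ : ℝ) : o.rotation φ u₀ ≠ 0 := (o.rotation φ).map_eq_zero_iff.not.2 hu₀
  obtain ⟨T, hTA, hT, hTdepth⟩ := exists_subset_card_le_three_mul_cos_nonneg (m := m)
    (θ := fun a => (o.oangle u₀ (a - x)).toReal) (φ₀ := 0)
    (fun φ => by
      rw [← hcount (hrot φ) (o.oangle_rotation_self_right hu₀ φ) subset_rfl]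
      exact hdepth _ (hrot φ))
    (by rwa [← hcount hu₀ (by simp) subset_rfl])
  refine ⟨T, hTA, hT, fun u hu => ?_⟩
  rw [hcount hu (Real.Angle.coe_toReal _).symm hTA]
  exact hTdepth _

theorem exists_subset_card_le_three_mul {S : Finset V} {x : V} {k : ℕ}
    (hdepth : ∀ u ≠ 0, k ≤ #{s ∈ S | 0 ≤ ⟪u, s - x⟫})
    (htight : ∃ u ≠ 0, #{s ∈ S | 0 ≤ ⟪u, s - x⟫} ≤ k) :
    ∃ T ⊆ S, #T ≤ 3 * k ∧ ∀ u ≠ 0, k ≤ #{s ∈ T | 0 ≤ ⟪u, s - x⟫} := by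
  classical
  by_cases hxS : x ∉ S
  · exact exists_subset_card_le_three_mul_of_notMem hxS hdepth htight
  rw [not_not] at hxS
  have hcount (u : V) :
      #{s ∈ S | 0 ≤ ⟪u, s - x⟫} = #{s ∈ S.erase x | 0 ≤ ⟪u, s - x⟫} + 1 := by
    conv_lhs => rw [← insert_erase hxS]
    exact card_filter_insert_of_notMem (notMem_erase x S) (by simp)
  obtain ⟨u₀, hu₀, htight⟩ := htight
  have hk := hcount u₀ ▸ htight
  obtain ⟨T, hTS, hT, hTdepth⟩ := exists_subset_card_le_three_mul_of_notMem
    (notMem_erase x S) (m := k - 1) (fun u hu => by have := hcount u ▸ hdepth u hu; omega)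
    ⟨u₀, hu₀, by omega⟩
  refine ⟨insert x T, insert_subset hxS (hTS.trans (erase_subset x S)),
    (card_insert_le x T).trans (by omega), fun u hu => ?_⟩
  rw [card_filter_insert_of_notMem (fun h => notMem_erase x S (hTS h)) (by simp)]
  have := hTdepth u hu
  omega

end Plane

theorem location_depth_subset_three_k_general
    (n k : ℕ) (hn : 3 * k < n)
    (S : Finset (EuclideanSpace ℝ (Fin 2))) (hcard : S.card = n)
    (x : EuclideanSpace ℝ (Fin 2))
    (hdepth_ge : ∀ (u : EuclideanSpace ℝ (Fin 2)), u ≠ 0 →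
      k ≤ {s : EuclideanSpace ℝ (Fin 2) | s ∈ S ∧ 0 ≤ ⟪u, s - x⟫}.ncard)
    (hdepth_eq : ∃ u : EuclideanSpace ℝ (Fin 2), u ≠ 0 ∧
      {s : EuclideanSpace ℝ (Fin 2) | s ∈ S ∧ 0 ≤ ⟪u, s - x⟫}.ncard = k) :
    ∃ T : Finset (EuclideanSpace ℝ (Fin 2)), T ⊆ S ∧ T.card = 3 * k ∧
      (∀ (u : EuclideanSpace ℝ (Fin 2)), u ≠ 0 →
        k ≤ {s : EuclideanSpace ℝ (Fin 2) | s ∈ T ∧ 0 ≤ ⟪u, s - x⟫}.ncard) ∧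
      (∃ u : EuclideanSpace ℝ (Fin 2), u ≠ 0 ∧
        {s : EuclideanSpace ℝ (Fin 2) | s ∈ T ∧ 0 ≤ ⟪u, s - x⟫}.ncard = k) := by
  have : Fact (Module.finrank ℝ (EuclideanSpace ℝ (Fin 2)) = 2) := ⟨finrank_euclideanSpace_fin⟩
  simp only [ncard_setOf_mem_and] at hdepth_ge hdepth_eq ⊢
  obtain ⟨u₀, hu₀, hS⟩ := hdepth_eq
  obtain ⟨T₀, hT₀S, hT₀, hT₀depth⟩ := exists_subset_card_le_three_mul hdepth_ge ⟨u₀, hu₀, hS.le⟩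
  obtain ⟨T, hT₀T, hTS, hT⟩ := exists_subsuperset_card_eq hT₀S hT₀ (by omega)
  have hmono (u : EuclideanSpace ℝ (Fin 2)) :
      #{s ∈ T₀ | 0 ≤ ⟪u, s - x⟫} ≤ #{s ∈ T | 0 ≤ ⟪u, s - x⟫} :=
    card_le_card (filter_subset_filter _ hT₀T)
  refine ⟨T, hTS, hT, fun u hu => (hT₀depth u hu).trans (hmono u), u₀, hu₀, ?_⟩
  exact le_antisymm (hS ▸ card_le_card (filter_subset_filter _ hTS))
    ((hT₀depth u₀ hu₀).trans (hmono u₀))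

/-- If `x` has location depth exactly `k` with respect to a set `S` of
`n > 3k` points in the plane, then there is a subset `T ⊆ S` of exactly `3k`
points such that `x` still has location depth `k` with respect to `T`. -/
theorem location_depth_subset_three_k
    (n k : ℕ) (hk : 1 ≤ k) (hn : 3 * k < n)
    (S : Finset (EuclideanSpace ℝ (Fin 2))) (hcard : S.card = n)
    (x : EuclideanSpace ℝ (Fin 2))
    (hdepth_ge : ∀ (u : EuclideanSpace ℝ (Fin 2)), u ≠ 0 →
      k ≤ {s : EuclideanSpace ℝ (Fin 2) | s ∈ S ∧ 0 ≤ ⟪u, s - x⟫}.ncard)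
    (hdepth_eq : ∃ u : EuclideanSpace ℝ (Fin 2), u ≠ 0 ∧
      {s : EuclideanSpace ℝ (Fin 2) | s ∈ S ∧ 0 ≤ ⟪u, s - x⟫}.ncard = k) :
    ∃ T : Finset (EuclideanSpace ℝ (Fin 2)), T ⊆ S ∧ T.card = 3 * k ∧
      (∀ (u : EuclideanSpace ℝ (Fin 2)), u ≠ 0 →
        k ≤ {s : EuclideanSpace ℝ (Fin 2) | s ∈ T ∧ 0 ≤ ⟪u, s - x⟫}.ncard) ∧
      (∃ u : EuclideanSpace ℝ (Fin 2), u ≠ 0 ∧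
        {s : EuclideanSpace ℝ (Fin 2) | s ∈ T ∧ 0 ≤ ⟪u, s - x⟫}.ncard = k) :=
  location_depth_subset_three_k_general n k hn S hcard x hdepth_ge hdepth_eq
end

section
/- Let S be a finite set of n points in R^2 and let x ∈ R^2 have location depth at least k with respect to S. Then x has Tverberg depth at least min{k, ⌊n/3⌋} with respect to S: there exist min{k, ⌊n/3⌋} pairwise disjoint subsets of S, each of whose convex hulls contains x. -/
open scoped RealInnerProductSpace

open Real

local notation "Pt" => EuclideanSpace ℝ (Fin 2)

noncomputable local instance : DecidableEq (EuclideanSpace ℝ (Fin 2)) := Classical.decEq _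

noncomputable def cplx (v : EuclideanSpace ℝ (Fin 2)) : ℂ := ⟨v 0, v 1⟩
lemma inner_eq_re (u v : Pt) : ⟪u, v⟫ = ((starRingEnd ℂ) (cplx u) * cplx v).re := by
  simp [PiLp.inner_apply, cplx, Complex.mul_re, Fin.sum_univ_two]
  ring
lemma cplx_ne_zero {v : Pt} (h : v ≠ 0) : cplx v ≠ 0 := by
  intro hc
  apply h
  ext i
  fin_cases i <;>
  · have h1 := congrArg Complex.re hc
    have h2 := congrArg Complex.im hc
    simp [cplx] at *
    tauto
lemma inner_neg_iff_cos {u w : Pt} (hu : u ≠ 0) (hw : w ≠ 0) :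
    ⟪u, w⟫ < 0 ↔ Real.cos ((cplx w).arg - (cplx u).arg) < 0 := by
  have hu' := cplx_ne_zero hu
  have hw' := cplx_ne_zero hw
  set z := (starRingEnd ℂ) (cplx u) * cplx w with hz
  have hzne : z ≠ 0 := mul_ne_zero (by simpa using hu') hw'
  have habs : 0 < ‖z‖ := norm_pos_iff.mpr hzne
  have hre : ⟪u, w⟫ = z.re := inner_eq_re u w
  have hcosz : Real.cos z.arg = z.re / ‖z‖ := Complex.cos_arg hzne
  have hargz : (z.arg : Real.Angle) = (((cplx w).arg - (cplx u).arg : ℝ) : Real.Angle) := by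
    rw [hz, Complex.arg_mul_coe_angle (by simpa using hu') hw', Complex.arg_conj_coe_angle]
    rw [Real.Angle.coe_sub]
    abel
  have hcos : Real.cos z.arg = Real.cos ((cplx w).arg - (cplx u).arg) := by
    have := congrArg Real.Angle.cos hargz
    rwa [Real.Angle.cos_coe, Real.Angle.cos_coe] at this
  rw [hre, ← hcos, hcosz]
  constructor
  · intro h
    exact div_neg_of_neg_of_pos h habs
  · intro h
    nlinarith [div_mul_cancel₀ z.re (ne_of_gt habs)]
lemma cos_sub_neg_char {θ γ : ℝ} (hθ₁ : -π < θ) (hθ₂ : θ ≤ π) (hγ₁ : -π < γ) (hγ₂ : γ ≤ π) :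
    Real.cos (θ - γ) < 0 ↔
      (γ + π/2 < θ ∧ θ < γ + 3*π/2) ∨ (γ - 3*π/2 < θ ∧ θ < γ - π/2) := by
  have hpi := Real.pi_pos
  set r := θ - γ with hr
  constructor
  · intro hcos
    by_contra hcon
    push_neg at hcon
    obtain ⟨h1, h2⟩ := hcon
    rcases le_or_gt r (-(3*π/2)) with hc | hc
    · have : Real.cos r = Real.cos (r + 2*π) := (Real.cos_add_two_pi r).symm
      rw [this] at hcos
      have : 0 ≤ Real.cos (r + 2*π) := Real.cos_nonneg_of_mem_Icc ⟨by simp [hr]; linarith, by linarith⟩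
      linarith
    · rcases le_or_gt r (π/2) with hc2 | hc2
      · have hge : -(π/2) ≤ r := by
          by_contra hlt
          push_neg at hlt
          have := h2 (by linarith)
          linarith
        have : 0 ≤ Real.cos r := Real.cos_nonneg_of_mem_Icc ⟨by linarith, by linarith⟩
        linarith
      · have := h1 (by linarith)
        have : Real.cos r = Real.cos (r - 2*π) := (Real.cos_sub_two_pi r).symm
        rw [this] at hcos
        have : 0 ≤ Real.cos (r - 2*π) := Real.cos_nonneg_of_mem_Icc ⟨by linarith, by linarith⟩
        linarith
  · rintro (⟨h1, h2⟩ | ⟨h1, h2⟩)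
    · have : Real.cos (r - π) = -Real.cos r := Real.cos_sub_pi r
      have hpos : 0 < Real.cos (r - π) := Real.cos_pos_of_mem_Ioo ⟨by simp [hr]; linarith, by simp [hr]; linarith⟩
      linarith
    · have : Real.cos (r + π) = -Real.cos r := Real.cos_add_pi r
      have hpos : 0 < Real.cos (r + π) := Real.cos_pos_of_mem_Ioo ⟨by simp [hr]; linarith, by simp [hr]; linarith⟩
      linarith
lemma mem_hull_of_halfspace (x : Pt) (C : Finset (EuclideanSpace ℝ (Fin 2)))
    (h : ∀ u : Pt, u ≠ 0 → ∃ p ∈ C, 0 ≤ ⟪u, p - x⟫) :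
    x ∈ convexHull ℝ (C : Set (EuclideanSpace ℝ (Fin 2))) := by
  by_contra hx
  obtain ⟨f, c, hfa, hcx⟩ := geometric_hahn_banach_closed_point
      (convex_convexHull ℝ _) ((C.finite_toSet).isClosed_convexHull ℝ) hx
  set v := (InnerProductSpace.toDual ℝ (EuclideanSpace ℝ (Fin 2))).symm f with hvdef
  have hv : ∀ y, ⟪v, y⟫ = f y := fun y => InnerProductSpace.toDual_symm_apply
  have hC : ∀ p ∈ C, f p < c := fun p hp => hfa p (subset_convexHull ℝ _ hp)
  have hvne : v ≠ 0 := by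
    obtain ⟨p, hp, -⟩ := h (EuclideanSpace.single 0 1) (by
      intro hz
      have := congrArg (fun v : Pt => v 0) hz
      simp [EuclideanSpace.single_apply] at this)
    intro hv0
    have : f p < f x := lt_trans (hC p hp) hcx
    rw [← hv, ← hv, hv0] at this
    simp at this
  obtain ⟨p, hp, hip⟩ := h v hvne
  have : ⟪v, p - x⟫ < 0 := by
    rw [inner_sub_right, hv, hv]
    have := hC p hp
    linarith
  linarith
lemma cover_count (S : Finset (EuclideanSpace ℝ (Fin 2))) (x : Pt) (m : ℕ)
    (T : Finset (EuclideanSpace ℝ (Fin 2)))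
    (hT : ∀ v ∈ T, (S.filter fun p => 0 ≤ ⟪v, p - x⟫).card ≤ m)
    (hcov : ∀ s ∈ S, ∃ v ∈ T, 0 ≤ ⟪v, s - x⟫) :
    S.card ≤ T.card * m := by
  classical
  have hsub : S ⊆ T.biUnion (fun v => S.filter fun p => 0 ≤ ⟪v, p - x⟫) := by
    intro s hs
    obtain ⟨v, hv, hvs⟩ := hcov s hs
    exact Finset.mem_biUnion.mpr ⟨v, hv, Finset.mem_filter.mpr ⟨hs, hvs⟩⟩
  calc S.card ≤ (T.biUnion (fun v => S.filter fun p => 0 ≤ ⟪v, p - x⟫)).card :=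
        Finset.card_le_card hsub
    _ ≤ ∑ v ∈ T, (S.filter fun p => 0 ≤ ⟪v, p - x⟫).card := Finset.card_biUnion_le
    _ ≤ ∑ _v ∈ T, m := Finset.sum_le_sum hT
    _ = T.card * m := by simp [Finset.sum_const, Nat.smul_one_eq_cast]
lemma sign_helper {A B a N : ℝ} (ha : 0 < a) (hN : 0 < N) (h : A * N = a * B) :
    0 ≤ A ↔ 0 ≤ B := by
  constructor
  · intro hA; nlinarith
  · intro hB; nlinarith
lemma delete_point (S : Finset (EuclideanSpace ℝ (Fin 2))) (x : Pt) (m : ℕ)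
    (hd : ∀ u : Pt, u ≠ 0 → m ≤ (S.filter fun s => 0 ≤ ⟪u, s - x⟫).card)
    (hcard : 3 * m + 1 ≤ S.card) :
    ∃ s ∈ S, ∀ u : Pt, u ≠ 0 → m ≤ ((S.erase s).filter fun p => 0 ≤ ⟪u, p - x⟫).card := by
  classical
  by_contra hc
  push_neg at hc
  choose u hu0 hult using hc
  have hkey : ∀ s (hs : s ∈ S), 0 ≤ ⟪u s hs, s - x⟫ ∧
      (S.filter fun p => 0 ≤ ⟪u s hs, p - x⟫).card ≤ m := by
    intro s hs
    have hm := hd (u s hs) (hu0 s hs)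
    have hlt := hult s hs
    by_cases hP : 0 ≤ ⟪u s hs, s - x⟫
    · refine ⟨hP, ?_⟩
      have hsub : S.filter (fun p => 0 ≤ ⟪u s hs, p - x⟫) ⊆
          insert s ((S.erase s).filter (fun p => 0 ≤ ⟪u s hs, p - x⟫)) := by
        intro p hp
        rcases Finset.mem_filter.mp hp with ⟨hpS, hPp⟩
        by_cases hps : p = s
        · simp [hps]
        · exact Finset.mem_insert_of_mem (Finset.mem_filter.mpr
            ⟨Finset.mem_erase.mpr ⟨hps, hpS⟩, hPp⟩)
      have h1 := Finset.card_le_card hsub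
      have h2 := Finset.card_insert_le s ((S.erase s).filter (fun p => 0 ≤ ⟪u s hs, p - x⟫))
      omega
    · exfalso
      have hsub : S.filter (fun p => 0 ≤ ⟪u s hs, p - x⟫) ⊆
          (S.erase s).filter (fun p => 0 ≤ ⟪u s hs, p - x⟫) := by
        intro p hp
        rcases Finset.mem_filter.mp hp with ⟨hpS, hPp⟩
        refine Finset.mem_filter.mpr ⟨Finset.mem_erase.mpr ⟨?_, hpS⟩, hPp⟩
        rintro rfl; exact hP hPp
      have := Finset.card_le_card hsub
      omega
  set U : Finset (EuclideanSpace ℝ (Fin 2)) := S.attach.image (fun s => u s.1 s.2) with hU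
  have hUmem : ∀ v ∈ U, v ≠ 0 ∧ (S.filter fun p => 0 ≤ ⟪v, p - x⟫).card ≤ m := by
    intro v hv
    rw [hU, Finset.mem_image] at hv
    obtain ⟨⟨s, hs⟩, -, rfl⟩ := hv
    exact ⟨hu0 s hs, (hkey s hs).2⟩
  have hcov : ∀ s ∈ S, ∃ v ∈ U, 0 ≤ ⟪v, s - x⟫ := by
    intro s hs
    exact ⟨u s hs, Finset.mem_image.mpr ⟨⟨s, hs⟩, Finset.mem_attach _ _, rfl⟩, (hkey s hs).1⟩
  by_cases h0 : (0 : Pt) ∈ convexHull ℝ (U : Set (EuclideanSpace ℝ (Fin 2)))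
  · rw [convexHull_eq_union] at h0
    simp only [Set.mem_iUnion] at h0
    obtain ⟨t, hts, hai, h0t⟩ := h0
    have htcard : t.card ≤ 3 := by
      have h1 := hai.card_le_finrank_succ
      rw [Fintype.card_coe] at h1
      have h2 : Module.finrank ℝ (vectorSpan ℝ (Set.range ((↑) : t → Pt))) ≤
          Module.finrank ℝ (EuclideanSpace ℝ (Fin 2)) := Submodule.finrank_le _
      have h3 : Module.finrank ℝ (EuclideanSpace ℝ (Fin 2)) = 2 := finrank_euclideanSpace_fin
      omega
    rw [Finset.convexHull_eq] at h0t
    obtain ⟨w, hw0, hw1, hwc⟩ := h0t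
    have hsum : ∑ y ∈ t, w y • y = (0 : Pt) := by
      have : t.centerMass w id = ∑ y ∈ t, w y • y := by
        rw [Finset.centerMass, hw1]
        simp
      rw [← this, hwc]
    have hcovt : ∀ s ∈ S, ∃ v ∈ t, 0 ≤ ⟪v, s - x⟫ := by
      intro s hs
      by_contra hno
      push_neg at hno
      have hsum2 : ∑ y ∈ t, w y * ⟪y, s - x⟫ = 0 := by
        have h : ⟪∑ y ∈ t, w y • y, s - x⟫ = (0:ℝ) := by rw [hsum]; exact inner_zero_left _
        rw [sum_inner] at h
        rw [Finset.sum_congr rfl (fun y _ => real_inner_smul_left y (s - x) (w y))] at h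
        exact h
      obtain ⟨y0, hy0t, hy0pos⟩ : ∃ y ∈ t, 0 < w y := by
        by_contra hall
        push_neg at hall
        have : ∑ y ∈ t, w y ≤ 0 := Finset.sum_nonpos hall
        rw [hw1] at this; linarith
      have hlt : ∑ y ∈ t, w y * ⟪y, s - x⟫ < ∑ _y ∈ t, (0:ℝ) := by
        apply Finset.sum_lt_sum
        · intro y hy
          exact mul_nonpos_of_nonneg_of_nonpos (hw0 y hy) (le_of_lt (hno y hy))
        · exact ⟨y0, hy0t, by nlinarith [hno y0 hy0t]⟩
      rw [Finset.sum_const, smul_zero] at hlt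
      linarith
    have hcc := cover_count S x m t (fun v hv => (hUmem v (hts hv)).2) hcovt
    have : t.card * m ≤ 3 * m := Nat.mul_le_mul_right m htcard
    omega
  · obtain ⟨f, c, hfa, hcx⟩ := geometric_hahn_banach_closed_point
      (convex_convexHull ℝ _) ((U.finite_toSet).isClosed_convexHull ℝ) h0
    set vd := (InnerProductSpace.toDual ℝ (EuclideanSpace ℝ (Fin 2))).symm f with hvddef
    have hvd : ∀ y, ⟪vd, y⟫ = f y := fun y => InnerProductSpace.toDual_symm_apply
    have hneg : ∀ v ∈ U, ⟪vd, v⟫ < 0 := by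
      intro v hv
      rw [hvd]
      have h1 := hfa v (subset_convexHull ℝ _ hv)
      have h2 : f 0 = 0 := by simp
      linarith
    have hSne : S.Nonempty := Finset.card_pos.mp (by omega)
    obtain ⟨s0, hs0⟩ := hSne
    have hUne' : U.Nonempty :=
      ⟨u s0 hs0, Finset.mem_image.mpr ⟨⟨s0, hs0⟩, Finset.mem_attach _ _, rfl⟩⟩
    have hvdne : vd ≠ 0 := by
      intro hz
      obtain ⟨v, hv⟩ := hUne'
      have := hneg v hv
      rw [hz] at this
      simp at this
    have hN : (0:ℝ) < ⟪vd, vd⟫ := lt_of_le_of_ne real_inner_self_nonneg (Ne.symm (inner_self_ne_zero.mpr hvdne))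
    set vp : EuclideanSpace ℝ (Fin 2) :=
      WithLp.toLp 2 (fun i => if i = 0 then -(vd 1) else vd 0 : Fin 2 → ℝ) with hvp
    have hvp0 : vp 0 = -(vd 1) := rfl
    have hvp1 : vp 1 = vd 0 := rfl
    have hid : ∀ v d : Pt, ⟪v, d⟫ * ⟪vd, vd⟫ = ⟪vd, v⟫ * ⟪vd, d⟫ + ⟪vp, v⟫ * ⟪vp, d⟫ := by
      intro v d
      simp only [PiLp.inner_apply, RCLike.inner_apply, conj_trivial, Fin.sum_univ_two,
        hvp0, hvp1]
      ring
    set tvf : (EuclideanSpace ℝ (Fin 2)) → ℝ := fun v => ⟪vp, v⟫ / (-⟪vd, v⟫) with htvf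
    obtain ⟨uL, huL, htL⟩ := U.exists_min_image tvf hUne'
    obtain ⟨uR, huR, htR⟩ := U.exists_max_image tvf hUne'
    have hsign : ∀ v ∈ U, ∀ d : Pt,
        (0 ≤ ⟪v, d⟫ ↔ 0 ≤ -⟪vd, d⟫ + tvf v * ⟪vp, d⟫) := by
      intro v hv d
      have hav : 0 < -⟪vd, v⟫ := by linarith [hneg v hv]
      have hvpv : tvf v * (-⟪vd, v⟫) = ⟪vp, v⟫ := by
        rw [htvf]
        exact div_mul_cancel₀ _ (ne_of_gt hav)
      apply sign_helper hav hN
      rw [hid v d, ← hvpv]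
      ring
    have hcov2 : ∀ s ∈ S, 0 ≤ ⟪uL, s - x⟫ ∨ 0 ≤ ⟪uR, s - x⟫ := by
      intro s hs
      obtain ⟨v, hv, hvs⟩ := hcov s hs
      by_contra hno
      push_neg at hno
      obtain ⟨hL, hR⟩ := hno
      have hBv : 0 ≤ -⟪vd, s - x⟫ + tvf v * ⟪vp, s - x⟫ := (hsign v hv _).mp hvs
      have hBL : -⟪vd, s - x⟫ + tvf uL * ⟪vp, s - x⟫ < 0 := by
        by_contra h; push_neg at h; exact absurd ((hsign uL huL _).mpr h) (not_le.mpr hL)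
      have hBR : -⟪vd, s - x⟫ + tvf uR * ⟪vp, s - x⟫ < 0 := by
        by_contra h; push_neg at h; exact absurd ((hsign uR huR _).mpr h) (not_le.mpr hR)
      have h1 := htL v hv
      have h2 := htR v hv
      rcases le_or_gt 0 (⟪vp, s - x⟫) with hcoef | hcoef
      · nlinarith
      · nlinarith
    have hcc := cover_count S x m (insert uL {uR})
      (by
        intro v hv
        rcases Finset.mem_insert.mp hv with rfl | hv'
        · exact (hUmem v huL).2
        · rw [Finset.mem_singleton] at hv'
          subst hv'
          exact (hUmem v huR).2)
      (by
        intro s hs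
        rcases hcov2 s hs with h | h
        · exact ⟨uL, Finset.mem_insert_self _ _, h⟩
        · exact ⟨uR, Finset.mem_insert.mpr (Or.inr (Finset.mem_singleton_self _)), h⟩)
    have hc2 : (insert uL ({uR} : Finset (EuclideanSpace ℝ (Fin 2)))).card ≤ 2 := by
      apply le_trans (Finset.card_insert_le _ _)
      simp
    have : (insert uL ({uR} : Finset (EuclideanSpace ℝ (Fin 2)))).card * m ≤ 2 * m :=
      Nat.mul_le_mul_right m hc2
    omega
lemma tight_case (S : Finset (EuclideanSpace ℝ (Fin 2))) (x : Pt) (m : ℕ) (hm : 1 ≤ m)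
    (hxS : x ∉ S)
    (hd : ∀ u : Pt, u ≠ 0 → m ≤ (S.filter fun s => 0 ≤ ⟪u, s - x⟫).card)
    (hcard : S.card = 3 * m) :
    ∃ parts : Fin m → Finset (EuclideanSpace ℝ (Fin 2)),
      (∀ j, parts j ⊆ S) ∧
      (Pairwise fun j j' => Disjoint (parts j) (parts j')) ∧
      (∀ j, x ∈ convexHull ℝ ((parts j : Set (EuclideanSpace ℝ (Fin 2))))) := by
  classical
  set θ : Pt → ℝ := fun p => (cplx (p - x)).arg with hθ
  set l : List (EuclideanSpace ℝ (Fin 2)) :=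
    S.toList.mergeSort (fun p q => decide (θ p ≤ θ q)) with hl
  have hperm : l.Perm S.toList := List.mergeSort_perm _ _
  have hlen : l.length = 3 * m := by
    rw [hperm.length_eq, Finset.length_toList, hcard]
  have hnodup : l.Nodup := hperm.nodup_iff.mpr S.nodup_toList
  have hsorted : l.Pairwise (fun p q => θ p ≤ θ q) := by
    have h := List.pairwise_mergeSort (le := fun p q => decide (θ p ≤ θ q))
      (fun a b c h₁ h₂ => by
        simp only [decide_eq_true_eq] at *
        linarith)
      (fun a b => by
        simp only [Bool.or_eq_true, decide_eq_true_eq]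
        exact le_total (θ a) (θ b))
      S.toList
    rw [← hl] at h
    exact h.imp (fun h => by simpa using h)
  set pt : Fin (3 * m) → Pt := fun i => l.get (Fin.cast hlen.symm i) with hpt
  have hmem : ∀ i, pt i ∈ S := by
    intro i
    have : pt i ∈ l := List.get_mem l (Fin.cast hlen.symm i)
    rw [List.Perm.mem_iff hperm] at this
    exact Finset.mem_toList.mp this
  have hmono : ∀ i i' : Fin (3 * m), i < i' → θ (pt i) ≤ θ (pt i') := by
    intro i i' hii
    exact List.pairwise_iff_get.mp hsorted _ _ (by simpa using hii)
  have hstrict : ∀ i i' : Fin (3 * m), θ (pt i) < θ (pt i') → i < i' := by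
    intro i i' h
    by_contra hle
    push_neg at hle
    rcases eq_or_lt_of_le hle with rfl | hlt
    · exact lt_irrefl _ h
    · exact absurd (hmono _ _ hlt) (not_le.mpr h)
  have hinj : Function.Injective pt := by
    intro i i' h
    have := List.nodup_iff_injective_get.mp hnodup h
    exact Fin.cast_injective _ this
  have hcount : ∀ u : Pt, u ≠ 0 →
      m ≤ (Finset.univ.filter (fun i : Fin (3 * m) => 0 ≤ ⟪u, pt i - x⟫)).card := by
    intro u hu
    refine le_trans (hd u hu) (le_of_eq (Finset.card_bij
      (fun (i : Fin (3 * m)) _ => pt i) ?_ ?_ ?_).symm)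
    · intro i hi
      exact Finset.mem_filter.mpr ⟨hmem i, (Finset.mem_filter.mp hi).2⟩
    · intro i _ i' _ h
      exact hinj h
    · intro s hs
      rcases Finset.mem_filter.mp hs with ⟨hsS, hsP⟩
      have hsl : s ∈ l := hperm.mem_iff.mpr (Finset.mem_toList.mpr hsS)
      obtain ⟨n, hn⟩ := List.mem_iff_get.mp hsl
      refine ⟨Fin.cast hlen n, ?_, ?_⟩
      · refine Finset.mem_filter.mpr ⟨Finset.mem_univ _, ?_⟩
        show (0:ℝ) ≤ ⟪u, l.get _ - x⟫
        have : (Fin.cast hlen.symm (Fin.cast hlen n)) = n := rfl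
        rw [this, hn]
        exact hsP
      · show l.get _ = s
        have : (Fin.cast hlen.symm (Fin.cast hlen n)) = n := rfl
        rw [this, hn]
  have hpi := Real.pi_pos
  -- index functions
  have hb0 : ∀ j : Fin m, (j : ℕ) < 3 * m := fun j => by have := j.2; omega
  have hb1 : ∀ j : Fin m, (j : ℕ) + m < 3 * m := fun j => by have := j.2; omega
  have hb2 : ∀ j : Fin m, (j : ℕ) + 2 * m < 3 * m := fun j => by have := j.2; omega
  set i0 : Fin m → Fin (3 * m) := fun j => ⟨(j : ℕ), hb0 j⟩ with hi0
  set i1 : Fin m → Fin (3 * m) := fun j => ⟨(j : ℕ) + m, hb1 j⟩ with hi1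
  set i2 : Fin m → Fin (3 * m) := fun j => ⟨(j : ℕ) + 2 * m, hb2 j⟩ with hi2
  refine ⟨fun j => {pt (i0 j), pt (i1 j), pt (i2 j)}, ?_, ?_, ?_⟩
  · intro j a ha
    simp only [Finset.mem_insert, Finset.mem_singleton] at ha
    rcases ha with rfl | rfl | rfl <;> exact hmem _
  · intro j j' hne
    have hjne : (j : ℕ) ≠ (j' : ℕ) := fun h => hne (Fin.ext h)
    have hj := j.2
    have hj' := j'.2
    rw [Finset.disjoint_left]
    intro a ha ha'
    simp only [Finset.mem_insert, Finset.mem_singleton] at ha ha'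
    rcases ha with rfl | rfl | rfl <;> rcases ha' with h | h | h <;>
      · have := congrArg Fin.val (hinj h)
        simp only [hi0, hi1, hi2] at this
        omega
  · intro j
    apply mem_hull_of_halfspace
    intro u hu
    by_contra hno
    push_neg at hno
    have hx_ne : ∀ i : Fin (3 * m), pt i - x ≠ 0 := fun i =>
      sub_ne_zero.mpr (fun h => hxS (h ▸ hmem i))
    set γ : ℝ := (cplx u).arg with hγ
    have hγ1 : -π < γ := Complex.neg_pi_lt_arg _
    have hγ2 : γ ≤ π := Complex.arg_le_pi _
    have hθ1 : ∀ i : Fin (3 * m), -π < θ (pt i) := fun i => Complex.neg_pi_lt_arg _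
    have hθ2 : ∀ i : Fin (3 * m), θ (pt i) ≤ π := fun i => Complex.arg_le_pi _
    have hchar : ∀ i : Fin (3 * m), pt i ∈ ({pt (i0 j), pt (i1 j), pt (i2 j)} :
        Finset (EuclideanSpace ℝ (Fin 2))) →
        (γ + π/2 < θ (pt i) ∧ θ (pt i) < γ + 3*π/2) ∨
        (γ - 3*π/2 < θ (pt i) ∧ θ (pt i) < γ - π/2) := by
      intro i hiel
      have hlt := hno (pt i) hiel
      have hcos := (inner_neg_iff_cos hu (hx_ne i)).mp hlt
      exact (cos_sub_neg_char (hθ1 i) (hθ2 i) hγ1 hγ2).mp hcos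
    have char0 := hchar (i0 j) (by simp)
    have char1 := hchar (i1 j) (by simp)
    have char2 := hchar (i2 j) (by simp)
    set A0 := θ (pt (i0 j)) with hA0
    set A1 := θ (pt (i1 j)) with hA1
    set A2 := θ (pt (i2 j)) with hA2
    have hA01 : A0 ≤ A1 := hmono _ _ (by simp only [hi0, hi1, Fin.mk_lt_mk]; omega)
    have hA12 : A1 ≤ A2 := hmono _ _ (by
      simp only [hi1, hi2, Fin.mk_lt_mk]
      have := j.2; omega)
    set B : Finset (Fin (3 * m)) :=
      Finset.univ.filter (fun i : Fin (3 * m) => 0 ≤ ⟪u, pt i - x⟫) with hBdef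
    have hB : m ≤ B.card := hcount u hu
    have hBfacts : ∀ i ∈ B,
        (γ + π/2 < θ (pt i) → γ + 3*π/2 ≤ θ (pt i)) ∧
        (γ - 3*π/2 < θ (pt i) → γ - π/2 ≤ θ (pt i)) := by
      intro i hi
      have hin : (0:ℝ) ≤ ⟪u, pt i - x⟫ := (Finset.mem_filter.mp hi).2
      have hncos : ¬ Real.cos (θ (pt i) - γ) < 0 := by
        intro h
        have := (inner_neg_iff_cos hu (hx_ne i)).mpr h
        linarith
      have hnch : ¬((γ + π/2 < θ (pt i) ∧ θ (pt i) < γ + 3*π/2) ∨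
          (γ - 3*π/2 < θ (pt i) ∧ θ (pt i) < γ - π/2)) :=
        fun h => hncos ((cos_sub_neg_char (hθ1 i) (hθ2 i) hγ1 hγ2).mpr h)
      push_neg at hnch
      exact hnch
    have hjval := j.2
    -- main case analysis
    rcases char0 with hU0 | hL0
    · -- pattern UUU
      have hU2 : γ + π/2 < A2 ∧ A2 < γ + 3*π/2 := by
        rcases char2 with h | h
        · exact h
        · exfalso; have := h.2; linarith
      have hsub : B ⊆ Finset.Iio (i0 j) ∪ Finset.Ioi (i2 j) := by
        intro i hi
        obtain ⟨h1, _⟩ := hBfacts i hi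
        rcases le_or_gt (θ (pt i)) (γ + π/2) with hc | hc
        · have : θ (pt i) < A0 := by linarith [hU0.1]
          exact Finset.mem_union_left _ (Finset.mem_Iio.mpr (hstrict _ _ this))
        · have h3 := h1 hc
          have : A2 < θ (pt i) := by linarith [hU2.2]
          exact Finset.mem_union_right _ (Finset.mem_Ioi.mpr (hstrict _ _ this))
      have hcard2 := Finset.card_le_card hsub
      have hcard3 := Finset.card_union_le (Finset.Iio (i0 j)) (Finset.Ioi (i2 j))
      rw [Fin.card_Iio, Fin.card_Ioi] at hcard3
      have e0 : ((i0 j : Fin (3*m)) : ℕ) = (j : ℕ) := rfl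
      have e2 : ((i2 j : Fin (3*m)) : ℕ) = (j : ℕ) + 2*m := rfl
      rw [e0, e2] at hcard3
      omega
    · rcases char2 with hU2 | hL2
      · -- A0 in L, A2 in U
        rcases char1 with hU1 | hL1
        · -- pattern LUU : B inside Ioo (i0 j) (i1 j)
          have hsub : B ⊆ Finset.Ioo (i0 j) (i1 j) := by
            intro i hi
            obtain ⟨h1, h2⟩ := hBfacts i hi
            have hγlt : γ < π/2 := by linarith [hU1.1, hθ2 (i1 j)]
            have hγgt : -π/2 < γ := by linarith [hL0.2, hθ1 (i0 j)]
            have hlow : γ - π/2 ≤ θ (pt i) := by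
              apply h2
              linarith [hθ1 i]
            have hhigh : θ (pt i) ≤ γ + π/2 := by
              by_contra hcon
              push_neg at hcon
              have := h1 hcon
              linarith [hθ2 i]
            have hgt : A0 < θ (pt i) := by linarith [hL0.2]
            have hlt2 : θ (pt i) < A1 := by linarith [hU1.1]
            exact Finset.mem_Ioo.mpr ⟨hstrict _ _ hgt, hstrict _ _ hlt2⟩
          have hcard2 := Finset.card_le_card hsub
          rw [Fin.card_Ioo] at hcard2
          simp only [hi0, hi1] at hcard2
          omega
        · -- pattern LLU : B inside Ioo (i1 j) (i2 j)
          have hsub : B ⊆ Finset.Ioo (i1 j) (i2 j) := by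
            intro i hi
            obtain ⟨h1, h2⟩ := hBfacts i hi
            have hγlt : γ < π/2 := by linarith [hU2.1, hθ2 (i2 j)]
            have hγgt : -π/2 < γ := by linarith [hL0.2, hθ1 (i0 j)]
            have hlow : γ - π/2 ≤ θ (pt i) := by
              apply h2
              linarith [hθ1 i]
            have hhigh : θ (pt i) ≤ γ + π/2 := by
              by_contra hcon
              push_neg at hcon
              have := h1 hcon
              linarith [hθ2 i]
            have hgt : A1 < θ (pt i) := by linarith [hL1.2]
            have hlt2 : θ (pt i) < A2 := by linarith [hU2.1]
            exact Finset.mem_Ioo.mpr ⟨hstrict _ _ hgt, hstrict _ _ hlt2⟩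
          have hcard2 := Finset.card_le_card hsub
          rw [Fin.card_Ioo] at hcard2
          simp only [hi1, hi2] at hcard2
          omega
      · -- pattern LLL
        have hsub : B ⊆ Finset.Iio (i0 j) ∪ Finset.Ioi (i2 j) := by
          intro i hi
          obtain ⟨_, h2⟩ := hBfacts i hi
          rcases le_or_gt (θ (pt i)) (γ - 3*π/2) with hc | hc
          · have : θ (pt i) < A0 := by linarith [hL0.1]
            exact Finset.mem_union_left _ (Finset.mem_Iio.mpr (hstrict _ _ this))
          · have h3 := h2 hc
            have : A2 < θ (pt i) := by linarith [hL2.2]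
            exact Finset.mem_union_right _ (Finset.mem_Ioi.mpr (hstrict _ _ this))
        have hcard2 := Finset.card_le_card hsub
        have hcard3 := Finset.card_union_le (Finset.Iio (i0 j)) (Finset.Ioi (i2 j))
        rw [Fin.card_Iio, Fin.card_Ioi] at hcard3
        have e0 : ((i0 j : Fin (3*m)) : ℕ) = (j : ℕ) := rfl
        have e2 : ((i2 j : Fin (3*m)) : ℕ) = (j : ℕ) + 2*m := rfl
        rw [e0, e2] at hcard3
        omega
lemma tverberg_main : ∀ N : ℕ, ∀ (S : Finset (EuclideanSpace ℝ (Fin 2))) (x : Pt) (m : ℕ),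
    S.card = N →
    (∀ u : Pt, u ≠ 0 → m ≤ (S.filter fun s => 0 ≤ ⟪u, s - x⟫).card) →
    3 * m ≤ N →
    ∃ parts : Fin m → Finset (EuclideanSpace ℝ (Fin 2)),
      (∀ j, parts j ⊆ S) ∧
      (Pairwise fun j j' => Disjoint (parts j) (parts j')) ∧
      (∀ j, x ∈ convexHull ℝ ((parts j : Set (EuclideanSpace ℝ (Fin 2))))) := by
  intro N
  induction N using Nat.strong_induction_on with
  | _ N ih =>
    intro S x m hcard hd h3m
    rcases Nat.eq_zero_or_pos m with rfl | hm
    · exact ⟨fun j => j.elim0, fun j => j.elim0, fun j _ _ => j.elim0, fun j => j.elim0⟩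
    by_cases hxS : x ∈ S
    · -- peel off the singleton {x}
      obtain ⟨m', rfl⟩ : ∃ m', m = m' + 1 := ⟨m - 1, by omega⟩
      have hNpos : 1 ≤ N := by
        have := Finset.card_pos.mpr ⟨x, hxS⟩; omega
      have hd' : ∀ u : Pt, u ≠ 0 →
          m' ≤ ((S.erase x).filter fun s => 0 ≤ ⟪u, s - x⟫).card := by
        intro u hu
        have h1 := hd u hu
        have hxf : x ∈ S.filter (fun s => 0 ≤ ⟪u, s - x⟫) :=
          Finset.mem_filter.mpr ⟨hxS, by simp⟩
        have heq : (S.erase x).filter (fun s => 0 ≤ ⟪u, s - x⟫) =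
            (S.filter (fun s => 0 ≤ ⟪u, s - x⟫)).erase x := Finset.filter_erase _ _ _
        rw [heq, Finset.card_erase_of_mem hxf]
        omega
      obtain ⟨parts', hsub', hdis', hhull'⟩ := ih (N - 1) (by omega) (S.erase x) x m'
        (by rw [Finset.card_erase_of_mem hxS, hcard]) hd' (by omega)
      refine ⟨Fin.cases {x} parts', ?_, ?_, ?_⟩
      · intro j
        rcases Fin.eq_zero_or_eq_succ j with rfl | ⟨i, rfl⟩
        · simp only [Fin.cases_zero]
          exact Finset.singleton_subset_iff.mpr hxS
        · simp only [Fin.cases_succ]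
          exact (hsub' i).trans (Finset.erase_subset _ _)
      · intro j j' hne
        have hxnot : ∀ i, x ∉ parts' i := fun i hmemx =>
          (Finset.mem_erase.mp (hsub' i hmemx)).1 rfl
        rcases Fin.eq_zero_or_eq_succ j with rfl | ⟨i, rfl⟩ <;>
          rcases Fin.eq_zero_or_eq_succ j' with rfl | ⟨i', rfl⟩
        · exact absurd rfl hne
        · simp only [Fin.cases_zero, Fin.cases_succ]
          exact Finset.disjoint_singleton_left.mpr (hxnot i')
        · simp only [Fin.cases_zero, Fin.cases_succ]
          exact (Finset.disjoint_singleton_left.mpr (hxnot i)).symm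
        · simp only [Fin.cases_succ]
          exact hdis' (fun h => hne (congrArg Fin.succ h))
      · intro j
        rcases Fin.eq_zero_or_eq_succ j with rfl | ⟨i, rfl⟩
        · simp only [Fin.cases_zero]
          simp only [Finset.coe_singleton]
          rw [convexHull_singleton]
          exact Set.mem_singleton _
        · simp only [Fin.cases_succ]
          exact hhull' i
    · by_cases h3m' : 3 * m = N
      · exact tight_case S x m hm hxS hd (by omega)
      · obtain ⟨s, hsS, hd'⟩ := delete_point S x m hd (by omega)
        obtain ⟨parts, hsub, hdis, hhull⟩ := ih (N - 1) (by
            have := Finset.card_pos.mpr ⟨s, hsS⟩; omega) (S.erase s) x m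
          (by rw [Finset.card_erase_of_mem hsS, hcard]) hd' (by omega)
        exact ⟨parts, fun j => (hsub j).trans (Finset.erase_subset _ _), hdis, hhull⟩

/-- If `x` has location depth at least `k` with respect to a set of `n`
points in the plane, then `x` has Tverberg depth at least `min k ⌊n/3⌋`:
there exist that many pairwise disjoint subsets of the points, each of whose
convex hulls contains `x`. -/
theorem planar_tverberg_depth_ge_min
    (n k : ℕ)
    (S : Finset (EuclideanSpace ℝ (Fin 2))) (hcard : S.card = n)
    (x : EuclideanSpace ℝ (Fin 2))
    (hdepth : ∀ (u : EuclideanSpace ℝ (Fin 2)), u ≠ 0 →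
      k ≤ {s : EuclideanSpace ℝ (Fin 2) | s ∈ S ∧ 0 ≤ ⟪u, s - x⟫}.ncard) :
    ∃ parts : Fin (min k (n / 3)) → Finset (EuclideanSpace ℝ (Fin 2)),
      (∀ j, parts j ⊆ S) ∧
      (Pairwise fun j j' => Disjoint (parts j) (parts j')) ∧
      (∀ j, x ∈ convexHull ℝ (parts j : Set (EuclideanSpace ℝ (Fin 2)))) := by
  have hset : ∀ u : Pt, {s : EuclideanSpace ℝ (Fin 2) | s ∈ S ∧ 0 ≤ ⟪u, s - x⟫}.ncard =
      (S.filter fun s => 0 ≤ ⟪u, s - x⟫).card := by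
    intro u
    rw [← Set.ncard_coe_finset]
    congr 1
    ext s
    simp
  apply tverberg_main n S x (min k (n / 3)) hcard
  · intro u hu
    have h1 := hdepth u hu
    rw [hset u] at h1
    exact le_trans (min_le_left _ _) h1
  · have : min k (n / 3) ≤ n / 3 := min_le_right _ _
    omega
end

section
/- Let S be a finite set of points in R^2 and let B ⊆ R^2 be a bounded set. Then there exists δ > 0 such that for every point c ∈ B there exists a point c′ ∈ R^2 with the following two properties: (i) c and c′ are combinatorially equivalent with respect to S, i.e., for every affine function ℓ : R^2 → R vanishing on two distinct points of S, ℓ(c)·ℓ(c′) ≥ 0; and (ii) every line determined by S that is δ-near c passes through c′. -/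
/-!
Take `c' := x` for every point `x` of the compact set `closure B`. If `x` lies on the line
through two sites `s₁, s₂`, both conditions hold trivially. Otherwise the cross product
`cross (q - p) (c - p)` keeps the sign of `cross (s₂ - s₁) (x - s₁)` for `p, q, c` close to
`s₁, s₂, x`; since every affine function vanishing at `s₁, s₂` is a multiple of
`cross (s₂ - s₁) (· - s₁)`, this keeps `c` on the side of `x` and keeps `c` off every line
through points `δ`-close to `s₁, s₂`. So one `δ` serves a whole neighbourhood of `x`, and
compactness of `closure B` makes it uniform.
-/

open scoped RealInnerProductSpace

open Filter Topology

local notation "ℝ²" => EuclideanSpace ℝ (Fin 2)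

namespace PlaneUnsharpening

def cross (u v : ℝ²) : ℝ := u 0 * v 1 - u 1 * v 0

lemma inner_eq_coord (u v : ℝ²) : ⟪u, v⟫ = u 0 * v 0 + u 1 * v 1 := by
  simp only [PiLp.inner_apply, RCLike.inner_apply, Real.ringHom_apply, Fin.sum_univ_two]
  ring

lemma cross_eq_zero_iff {u v : ℝ²} (hu : u ≠ 0) : cross u v = 0 ↔ ∃ r : ℝ, r • u = v := by
  refine ⟨fun h => ⟨⟪u, v⟫ / ⟪u, u⟫, ?_⟩, ?_⟩
  · have hn : ⟪u, u⟫ ≠ 0 := inner_self_ne_zero.2 hu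
    simp only [cross] at h
    ext i
    fin_cases i <;>
      simp only [Fin.zero_eta, Fin.mk_one, PiLp.smul_apply, smul_eq_mul, div_mul_eq_mul_div] <;>
      rw [div_eq_iff hn, inner_eq_coord, inner_eq_coord]
    · linear_combination u 1 * h
    · linear_combination -u 0 * h
  · rintro ⟨r, rfl⟩
    simp only [cross, PiLp.smul_apply, smul_eq_mul]
    ring

lemma mem_affineSpan_pair_iff_cross_eq_zero {p q x : ℝ²} (h : p ≠ q) :
    x ∈ line[ℝ, p, q] ↔ cross (q - p) (x - p) = 0 := by
  rw [cross_eq_zero_iff (sub_ne_zero.2 h.symm),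
    ← AffineSubspace.vsub_right_mem_direction_iff_mem (left_mem_affineSpan_pair ℝ p q),
    direction_affineSpan, mem_vectorSpan_pair_rev]
  rfl

/-- Binet–Cauchy in the plane: `⟪u, u⟫ ⟪a, v⟫ = ⟪a, u⟫ ⟪u, v⟫ + cross u a * cross u v`. -/
lemma exists_inner_eq_mul_cross {a u : ℝ²} (hu : u ≠ 0) (h : ⟪a, u⟫ = 0) :
    ∃ l : ℝ, ∀ v, ⟪a, v⟫ = l * cross u v := by
  refine ⟨cross u a / ⟪u, u⟫, fun v => ?_⟩
  rw [div_mul_eq_mul_div, eq_div_iff (inner_self_ne_zero.2 hu)]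
  simp only [cross, inner_eq_coord] at h ⊢
  linear_combination (u 0 * v 0 + u 1 * v 1) * h

lemma exists_inner_add_eq_mul_cross {a s₁ s₂ : ℝ²} {b : ℝ} (hs : s₁ ≠ s₂)
    (h₁ : ⟪a, s₁⟫ + b = 0) (h₂ : ⟪a, s₂⟫ + b = 0) :
    ∃ l : ℝ, ∀ x, ⟪a, x⟫ + b = l * cross (s₂ - s₁) (x - s₁) := by
  obtain ⟨l, hl⟩ := exists_inner_eq_mul_cross (sub_ne_zero.2 hs.symm)
    (by rw [inner_sub_right]; linarith)
  exact ⟨l, fun x => by rw [← hl, inner_sub_right]; linarith⟩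

lemma exists_cross_mul_pos {s₁ s₂ x : ℝ²} (h : cross (s₂ - s₁) (x - s₁) ≠ 0) :
    ∃ ε > 0, ∀ p q c : ℝ², dist p s₁ < ε → dist q s₂ < ε → dist c x < ε →
      0 < cross (q - p) (c - p) * cross (s₂ - s₁) (x - s₁) := by
  have hF : Continuous fun w : ℝ² × ℝ² × ℝ² => cross (w.2.1 - w.1) (w.2.2 - w.1) := by
    unfold cross
    fun_prop
  obtain ⟨ε, hε, hball⟩ := Metric.eventually_nhds_iff.1
    (((hF.tendsto (s₁, s₂, x)).mul tendsto_const_nhds).eventually (lt_mem_nhds (mul_self_pos.2 h)))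
  exact ⟨ε, hε, fun p q c hp hq hc => hball (y := (p, q, c)) (by simp [Prod.dist_eq, hp, hq, hc])⟩

def Unsharpens (δ : ℝ) (s₁ s₂ c c' : ℝ²) : Prop :=
  (∀ (a : ℝ²) (b : ℝ), ⟪a, s₁⟫ + b = 0 → ⟪a, s₂⟫ + b = 0 → 0 ≤ (⟪a, c⟫ + b) * (⟪a, c'⟫ + b)) ∧
  ∀ p q : ℝ², p ≠ q → ‖p - s₁‖ ≤ δ → ‖q - s₂‖ ≤ δ → c ∈ line[ℝ, p, q] → c' ∈ line[ℝ, s₁, s₂]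

lemma eventually_unsharpens_self {s₁ s₂ : ℝ²} (hs : s₁ ≠ s₂) (x : ℝ²) :
    ∀ᶠ z : ℝ × ℝ² in 𝓝 (0, x), Unsharpens z.1 s₁ s₂ z.2 x := by
  by_cases hx : x ∈ line[ℝ, s₁, s₂]
  · refine .of_forall fun z => ⟨fun a b h₁ h₂ => ?_, fun _ _ _ _ _ _ => hx⟩
    obtain ⟨l, hl⟩ := exists_inner_add_eq_mul_cross hs h₁ h₂
    rw [hl x, (mem_affineSpan_pair_iff_cross_eq_zero hs).1 hx]
    simp
  obtain ⟨ε, hε, hpos⟩ :=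
    exists_cross_mul_pos (mt (mem_affineSpan_pair_iff_cross_eq_zero hs).2 hx)
  filter_upwards [Metric.ball_mem_nhds ((0 : ℝ), x) hε] with z hz
  obtain ⟨hδ, hc⟩ : dist z.1 0 < ε ∧ dist z.2 x < ε := by simpa [Prod.dist_eq] using hz
  refine ⟨fun a b h₁ h₂ => ?_, fun p q hpq hp hq hpqc => ?_⟩
  · obtain ⟨l, hl⟩ := exists_inner_add_eq_mul_cross hs h₁ h₂
    have := hpos s₁ s₂ z.2 (by simpa using hε) (by simpa using hε) hc
    rw [hl, hl]
    nlinarith [sq_nonneg l]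
  · have hδ' : z.1 < ε := (le_abs_self _).trans_lt (by simpa using hδ)
    have := hpos p q z.2 (by rw [dist_eq_norm]; linarith) (by rw [dist_eq_norm]; linarith) hc
    rw [(mem_affineSpan_pair_iff_cross_eq_zero hpq).1 hpqc, zero_mul] at this
    exact (lt_irrefl 0 this).elim

lemma eventually_forall_unsharpens_self (S : Finset ℝ²) (x : ℝ²) :
    ∀ᶠ z : ℝ × ℝ² in 𝓝 (0, x), ∀ s₁ ∈ S, ∀ s₂ ∈ S, s₁ ≠ s₂ → Unsharpens z.1 s₁ s₂ z.2 x := by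
  simp only [eventually_all_finset, eventually_imp_distrib_left]
  exact fun _ _ _ _ hs => eventually_unsharpens_self hs x

end PlaneUnsharpening

open PlaneUnsharpening

/-- For a finite set `S` of sites in the plane and a bounded region `B`,
there is a `δ > 0` such that every point `c ∈ B` has a combinatorially
equivalent point `c'` lying on every line determined by two sites that is
`δ`-near `c`. -/
theorem point_unsharpening_in_plane
    (S : Finset (EuclideanSpace ℝ (Fin 2)))
    (B : Set (EuclideanSpace ℝ (Fin 2))) (hB : Bornology.IsBounded B) :
    ∃ δ : ℝ, 0 < δ ∧
      ∀ c ∈ B, ∃ c' : EuclideanSpace ℝ (Fin 2),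
        (∀ (a : EuclideanSpace ℝ (Fin 2)) (b : ℝ) (s₁ s₂ : EuclideanSpace ℝ (Fin 2)),
          s₁ ∈ S → s₂ ∈ S → s₁ ≠ s₂ →
          ⟪a, s₁⟫ + b = 0 → ⟪a, s₂⟫ + b = 0 →
          0 ≤ (⟪a, c⟫ + b) * (⟪a, c'⟫ + b)) ∧
        (∀ s₁ s₂ : EuclideanSpace ℝ (Fin 2), s₁ ∈ S → s₂ ∈ S → s₁ ≠ s₂ →
          ∀ p q : EuclideanSpace ℝ (Fin 2), p ≠ q →
            ‖p - s₁‖ ≤ δ → ‖q - s₂‖ ≤ δ →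
            c ∈ affineSpan ℝ ({p, q} : Set (EuclideanSpace ℝ (Fin 2))) →
            c' ∈ affineSpan ℝ ({s₁, s₂} : Set (EuclideanSpace ℝ (Fin 2)))) := by
  have hδ := hB.isCompact_closure.eventually_forall_of_forall_eventually
    (P := fun δ c => ∃ c', ∀ s₁ ∈ S, ∀ s₂ ∈ S, s₁ ≠ s₂ → Unsharpens δ s₁ s₂ c c')
    fun x _ => (eventually_forall_unsharpens_self S x).mono fun _ h => ⟨x, h⟩
  obtain ⟨δ, hδB, hδpos⟩ := ((hδ.filter_mono nhdsWithin_le_nhds).and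
    (self_mem_nhdsWithin (s := Set.Ioi 0))).exists
  refine ⟨δ, hδpos, fun c hc => ?_⟩
  obtain ⟨c', hc'⟩ := hδB c (subset_closure hc)
  exact ⟨c', fun a b s₁ s₂ h₁ h₂ hs => (hc' s₁ h₁ s₂ h₂ hs).1 a b,
    fun s₁ s₂ h₁ h₂ hs => (hc' s₁ h₁ s₂ h₂ hs).2⟩
end
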